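/- arXiv:1906.06370 — 14 statements merged into one kernel-verified Lean document; each statement's English description precedes it below -/
import Mathlib

section
/- For all natural numbers n and k, the coefficient of x^k in P_n(x) equals the coefficient of t^n in the formal power series (1/(1+ct))·(t(1−bt)/(1+ct))^k over ℝ. (That is, the coefficient array of the family of constant-coefficient Laurent biorthogonal polynomials is the Riordan array (1/(1+ct), t(1−bt)/(1+ct)).) -/
open PowerSeries

private lemma lbp_unit (c : ℝ) :
    (1 + PowerSeries.C c * PowerSeries.X) * (1 + PowerSeries.C c * PowerSeries.X)⁻¹ = 1 :=
  PowerSeries.mul_inv_cancel _ (by simp)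

private lemma lbp_key (b c : ℝ) (k : ℕ) :
    (1 + PowerSeries.C c * PowerSeries.X) *
      ((1 + PowerSeries.C c * PowerSeries.X)⁻¹ *
        (PowerSeries.X * (1 - PowerSeries.C b * PowerSeries.X) *
          (1 + PowerSeries.C c * PowerSeries.X)⁻¹) ^ (k + 1)) =
    PowerSeries.X * (1 - PowerSeries.C b * PowerSeries.X) *
      ((1 + PowerSeries.C c * PowerSeries.X)⁻¹ *
        (PowerSeries.X * (1 - PowerSeries.C b * PowerSeries.X) *
          (1 + PowerSeries.C c * PowerSeries.X)⁻¹) ^ k) := by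
  set A := (1 + PowerSeries.C c * PowerSeries.X)⁻¹ with hA
  set G := PowerSeries.X * (1 - PowerSeries.C b * PowerSeries.X) * A with hG
  have h : (1 + PowerSeries.C c * PowerSeries.X) * A = 1 := lbp_unit c
  calc (1 + PowerSeries.C c * PowerSeries.X) * (A * G ^ (k + 1))
      = ((1 + PowerSeries.C c * PowerSeries.X) * A) * G ^ (k + 1) := by ring
    _ = G ^ (k + 1) := by rw [h, one_mul]
    _ = PowerSeries.X * (1 - PowerSeries.C b * PowerSeries.X) * (A * G ^ k) := by
        rw [pow_succ']; rw [hG]; ring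

-- restated key in additive form
private lemma lbp_key2 (b c : ℝ) (k : ℕ) :
    ((1 + PowerSeries.C c * PowerSeries.X)⁻¹ *
        (PowerSeries.X * (1 - PowerSeries.C b * PowerSeries.X) *
          (1 + PowerSeries.C c * PowerSeries.X)⁻¹) ^ (k + 1))
      + PowerSeries.C c * (PowerSeries.X *
        ((1 + PowerSeries.C c * PowerSeries.X)⁻¹ *
          (PowerSeries.X * (1 - PowerSeries.C b * PowerSeries.X) *
            (1 + PowerSeries.C c * PowerSeries.X)⁻¹) ^ (k + 1)))
    = PowerSeries.X * ((1 + PowerSeries.C c * PowerSeries.X)⁻¹ *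
          (PowerSeries.X * (1 - PowerSeries.C b * PowerSeries.X) *
            (1 + PowerSeries.C c * PowerSeries.X)⁻¹) ^ k)
      - PowerSeries.C b * (PowerSeries.X * (PowerSeries.X *
        ((1 + PowerSeries.C c * PowerSeries.X)⁻¹ *
          (PowerSeries.X * (1 - PowerSeries.C b * PowerSeries.X) *
            (1 + PowerSeries.C c * PowerSeries.X)⁻¹) ^ k))) := by
  linear_combination lbp_key b c k

private lemma lbp_A_rec (c : ℝ) (n : ℕ) :
    PowerSeries.coeff (n + 1) (1 + PowerSeries.C c * PowerSeries.X)⁻¹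
      = -c * PowerSeries.coeff n (1 + PowerSeries.C c * PowerSeries.X)⁻¹ := by
  have h : (1 + PowerSeries.C c * PowerSeries.X)⁻¹
      + PowerSeries.C c * (PowerSeries.X * (1 + PowerSeries.C c * PowerSeries.X)⁻¹) = 1 := by
    linear_combination lbp_unit c
  have := congrArg (PowerSeries.coeff (n + 1)) h
  simp only [map_add, PowerSeries.coeff_C_mul, PowerSeries.coeff_succ_X_mul,
    PowerSeries.coeff_one, Nat.succ_ne_zero, if_false] at this
  linarith

private lemma lbp_coe0 (b c : ℝ) (k : ℕ) :
    PowerSeries.coeff 0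
      ((1 + PowerSeries.C c * PowerSeries.X)⁻¹ *
        (PowerSeries.X * (1 - PowerSeries.C b * PowerSeries.X) *
          (1 + PowerSeries.C c * PowerSeries.X)⁻¹) ^ k)
    = if k = 0 then 1 else 0 := by
  rw [PowerSeries.coeff_zero_eq_constantCoeff]
  simp only [map_mul, map_pow]
  have h1 : PowerSeries.constantCoeff (1 + PowerSeries.C c * PowerSeries.X)⁻¹ = 1 := by
    rw [PowerSeries.constantCoeff_inv]; simp
  rw [h1]
  simp only [map_sub, map_mul, PowerSeries.constantCoeff_X, mul_zero, zero_mul, one_mul]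
  rcases k with _ | k
  · simp
  · simp [zero_pow]

private lemma lbp_rec (b c : ℝ) (n k : ℕ) :
    PowerSeries.coeff (n + 2)
      ((1 + PowerSeries.C c * PowerSeries.X)⁻¹ *
        (PowerSeries.X * (1 - PowerSeries.C b * PowerSeries.X) *
          (1 + PowerSeries.C c * PowerSeries.X)⁻¹) ^ (k + 1))
    = PowerSeries.coeff (n + 1)
        ((1 + PowerSeries.C c * PowerSeries.X)⁻¹ *
          (PowerSeries.X * (1 - PowerSeries.C b * PowerSeries.X) *
            (1 + PowerSeries.C c * PowerSeries.X)⁻¹) ^ k)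
      - c * PowerSeries.coeff (n + 1)
        ((1 + PowerSeries.C c * PowerSeries.X)⁻¹ *
          (PowerSeries.X * (1 - PowerSeries.C b * PowerSeries.X) *
            (1 + PowerSeries.C c * PowerSeries.X)⁻¹) ^ (k + 1))
      - b * PowerSeries.coeff n
        ((1 + PowerSeries.C c * PowerSeries.X)⁻¹ *
          (PowerSeries.X * (1 - PowerSeries.C b * PowerSeries.X) *
            (1 + PowerSeries.C c * PowerSeries.X)⁻¹) ^ k) := by
  have := congrArg (PowerSeries.coeff (n + 2)) (lbp_key2 b c k)
  simp only [map_add, map_sub, PowerSeries.coeff_C_mul,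
    PowerSeries.coeff_succ_X_mul] at this
  linarith

private lemma lbp_coeff_one_X_mul (φ : PowerSeries ℝ) :
    PowerSeries.coeff 1 (PowerSeries.X * φ) = PowerSeries.coeff 0 φ :=
  PowerSeries.coeff_succ_X_mul 0 φ

private lemma lbp_coe1 (b c : ℝ) (k : ℕ) :
    PowerSeries.coeff 1
      ((1 + PowerSeries.C c * PowerSeries.X)⁻¹ *
        (PowerSeries.X * (1 - PowerSeries.C b * PowerSeries.X) *
          (1 + PowerSeries.C c * PowerSeries.X)⁻¹) ^ (k + 1))
    = if k = 0 then 1 else 0 := by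
  have h := congrArg (PowerSeries.coeff 1) (lbp_key2 b c k)
  simp only [map_add, map_sub, PowerSeries.coeff_C_mul, lbp_coeff_one_X_mul,
    PowerSeries.coeff_zero_X_mul, mul_zero, sub_zero, lbp_coe0,
    Nat.succ_ne_zero, if_false, add_zero] at h
  rw [h]

/-- The coefficient array of the constant-coefficient Laurent biorthogonal
polynomials is the Riordan array `(1/(1+ct), t(1-bt)/(1+ct))`. -/
theorem lbp_coeff_array_riordan
    (b c : ℝ) (hb : b ≠ 0) (hc : c ≠ 0)
    (P : ℕ → Polynomial ℝ)
    (hP0 : P 0 = 1)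
    (hP1 : P 1 = Polynomial.X - Polynomial.C c)
    (hP : ∀ n, 2 ≤ n →
      P n = (Polynomial.X - Polynomial.C c) * P (n - 1)
            - Polynomial.C b * Polynomial.X * P (n - 2))
    (n k : ℕ) :
    (P n).coeff k =
      PowerSeries.coeff n
        ((1 + PowerSeries.C c * PowerSeries.X)⁻¹ *
          (PowerSeries.X * (1 - PowerSeries.C b * PowerSeries.X) *
            (1 + PowerSeries.C c * PowerSeries.X)⁻¹) ^ k) := by
  induction n using Nat.strong_induction_on generalizing k with
  | _ n ih =>
    match n with
    | 0 =>
      rw [hP0, lbp_coe0]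
      rcases k with _ | k <;> simp [Polynomial.coeff_one]
    | 1 =>
      rw [hP1]
      rcases k with _ | k
      · simp only [pow_zero, mul_one]
        have hA1 : PowerSeries.coeff 1 (1 + PowerSeries.C c * PowerSeries.X)⁻¹
            = -c * PowerSeries.coeff 0 (1 + PowerSeries.C c * PowerSeries.X)⁻¹ :=
          lbp_A_rec c 0
        rw [hA1, PowerSeries.coeff_zero_eq_constantCoeff, PowerSeries.constantCoeff_inv]
        simp
      · rcases k with _ | k
        · rw [lbp_coe1]
          simp
        · rw [lbp_coe1]
          simp [Polynomial.coeff_X, Polynomial.coeff_C]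
    | (m + 2) =>
      rw [hP (m + 2) (by omega)]
      simp only [show m + 2 - 1 = m + 1 from rfl, show m + 2 - 2 = m from rfl]
      rcases k with _ | k
      · -- k = 0
        rw [Polynomial.coeff_sub, Polynomial.mul_coeff_zero, Polynomial.mul_coeff_zero]
        simp only [Polynomial.coeff_sub, Polynomial.coeff_X_zero, Polynomial.coeff_C_zero,
          Polynomial.mul_coeff_zero, Polynomial.coeff_X_zero, mul_zero, sub_zero, zero_sub]
        rw [ih (m + 1) (by omega) 0]
        simp only [pow_zero, mul_one]
        rw [lbp_A_rec c (m + 1)]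
        ring
      · -- k = k' + 1
        rw [Polynomial.coeff_sub]
        have h1 : ((Polynomial.X - Polynomial.C c) * P (m + 1)).coeff (k + 1)
            = (P (m + 1)).coeff k - c * (P (m + 1)).coeff (k + 1) := by
          rw [sub_mul, Polynomial.coeff_sub, Polynomial.coeff_X_mul, Polynomial.coeff_C_mul]
        have h2 : (Polynomial.C b * Polynomial.X * P m).coeff (k + 1)
            = b * (P m).coeff k := by
          rw [mul_assoc, Polynomial.coeff_C_mul, Polynomial.coeff_X_mul]
        rw [h1, h2, ih (m + 1) (by omega) k, ih (m + 1) (by omega) (k + 1),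
          ih m (by omega) k, lbp_rec b c m k]
end

section
/- In the ring of formal power series over ℝ[x], one has the generating function identity (1 + c·t + x·t·(b·t − 1)) · ∑_{n≥0} P_n(x)·t^n = 1; equivalently, ∑_{n≥0} P_n(x) t^n = 1/(1 + ct + xt(bt − 1)). -/
/-- Generating function identity for the constant-coefficient Laurent
biorthogonal polynomials: `(1 + ct + xt(bt-1)) · ∑ P_n(x) tⁿ = 1`
in `(ℝ[x])⟦t⟧`. -/
theorem lbp_generating_function
    (b c : ℝ) (hb : b ≠ 0) (hc : c ≠ 0)
    (P : ℕ → Polynomial ℝ)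
    (hP0 : P 0 = 1)
    (hP1 : P 1 = Polynomial.X - Polynomial.C c)
    (hP : ∀ n, 2 ≤ n →
      P n = (Polynomial.X - Polynomial.C c) * P (n - 1)
            - Polynomial.C b * Polynomial.X * P (n - 2)) :
    (1 + PowerSeries.C (R := Polynomial ℝ) (Polynomial.C c) * PowerSeries.X
       + PowerSeries.C (R := Polynomial ℝ) Polynomial.X * PowerSeries.X *
         (PowerSeries.C (R := Polynomial ℝ) (Polynomial.C b) * PowerSeries.X - 1)) *
      PowerSeries.mk (fun n => P n) = 1 := by
  have key :
      (1 + PowerSeries.C (R := Polynomial ℝ) (Polynomial.C c) * PowerSeries.X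
       + PowerSeries.C (R := Polynomial ℝ) Polynomial.X * PowerSeries.X *
         (PowerSeries.C (R := Polynomial ℝ) (Polynomial.C b) * PowerSeries.X - 1)) *
      PowerSeries.mk (fun n => P n)
      = PowerSeries.mk (fun n => P n)
        + PowerSeries.C (R := Polynomial ℝ) (Polynomial.C c) *
            (PowerSeries.X * PowerSeries.mk (fun n => P n))
        - PowerSeries.C (R := Polynomial ℝ) Polynomial.X *
            (PowerSeries.X * PowerSeries.mk (fun n => P n))
        + (PowerSeries.C (R := Polynomial ℝ) Polynomial.X *
           PowerSeries.C (R := Polynomial ℝ) (Polynomial.C b)) *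
            (PowerSeries.X * (PowerSeries.X * PowerSeries.mk (fun n => P n))) := by
    ring
  rw [key]
  ext n
  match n with
  | 0 =>
    simp only [map_add, map_sub, PowerSeries.coeff_mk, ← map_mul,
      PowerSeries.coeff_C_mul, PowerSeries.coeff_zero_X_mul, PowerSeries.coeff_one,
      hP0, mul_zero, add_zero, sub_zero, if_pos rfl]
    simp
  | 1 =>
    simp only [map_add, map_sub, PowerSeries.coeff_mk, ← map_mul,
      PowerSeries.coeff_C_mul, PowerSeries.coeff_succ_X_mul, PowerSeries.coeff_zero_X_mul,
      PowerSeries.coeff_one, hP0, hP1, mul_zero]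
    norm_num
  | (n+2) =>
    simp only [map_add, map_sub, PowerSeries.coeff_mk, ← map_mul,
      PowerSeries.coeff_C_mul, PowerSeries.coeff_succ_X_mul, PowerSeries.coeff_one]
    rw [hP (n+2) (by omega)]
    simp only [PowerSeries.coeff_mk, Nat.add_sub_cancel, show n+2-1 = n+1 from rfl,
      show n+2-2 = n from rfl]
    rw [if_neg (by omega)]
    simp only [Polynomial.coeff_sub, Polynomial.coeff_C_mul, Polynomial.coeff_zero]
    ring_nf
    simp
end

section
/- For every natural number n, P_n(x) = ∑_{k=0}^{n} ( ∑_{j} binom(k,j)·binom(n−j, n−k−j)·(−b)^j·(−c)^{n−k−j} ) x^k, where the inner sum runs over all j with 0 ≤ j ≤ k and j ≤ n−k (terms with j > n−k vanish). -/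
open Finset Polynomial

private def Acoef (b c : ℝ) (n k : ℕ) : ℝ :=
  ∑ j ∈ Finset.range (k + 1),
    (k.choose j : ℝ) * ((n - j).choose k : ℝ) * (-b) ^ j * (-c) ^ (n - k - j)

private lemma Acoef_eq_zero (b c : ℝ) {n k : ℕ} (h : n < k) : Acoef b c n k = 0 := by
  refine Finset.sum_eq_zero fun j hj => ?_
  have h0 : (n - j).choose k = 0 :=
    Nat.choose_eq_zero_of_lt (lt_of_le_of_lt (Nat.sub_le n j) h)
  simp [h0]

private lemma Acoef_rec (b c : ℝ) (n k : ℕ) :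
    Acoef b c (n + 2) (k + 1)
      = Acoef b c (n + 1) k - c * Acoef b c (n + 1) (k + 1) - b * Acoef b c n k := by
  have h1 : Acoef b c (n + 1) k
      = ∑ j ∈ Finset.range (k + 2),
          (k.choose j : ℝ) * ((n + 1 - j).choose k : ℝ) * (-b) ^ j * (-c) ^ (n + 1 - k - j) := by
    symm
    rw [Finset.sum_range_succ]
    simp only [Nat.choose_succ_self, Nat.cast_zero, zero_mul, add_zero]
    rfl
  have h2 : c * Acoef b c (n + 1) (k + 1)
      = ∑ j ∈ Finset.range (k + 2),
          c * (((k + 1).choose j : ℝ) * ((n + 1 - j).choose (k + 1) : ℝ) * (-b) ^ j *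
            (-c) ^ (n + 1 - (k + 1) - j)) := by
    rw [Acoef, Finset.mul_sum]
  have h3 : b * Acoef b c n k
      = - ∑ j ∈ Finset.range (k + 2),
          (if j = 0 then (0:ℝ) else
            (k.choose (j - 1) : ℝ) * ((n + 1 - j).choose k : ℝ) * (-b) ^ j *
              (-c) ^ (n + 1 - k - j)) := by
    rw [Finset.sum_range_succ']
    have e0 : (if (0:ℕ) = 0 then (0:ℝ) else
        (k.choose (0 - 1) : ℝ) * ((n + 1 - 0).choose k : ℝ) * (-b) ^ 0 *
          (-c) ^ (n + 1 - k - 0)) = 0 := by norm_num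
    rw [e0, add_zero, Acoef, Finset.mul_sum, ← Finset.sum_neg_distrib]
    refine Finset.sum_congr rfl fun j hj => ?_
    have hne : ¬ (j + 1 = 0) := Nat.succ_ne_zero j
    rw [if_neg hne]
    have e1 : n + 1 - k - (j + 1) = n - k - j := by omega
    have e2 : n + 1 - (j + 1) = n - j := by omega
    have e3 : j + 1 - 1 = j := rfl
    rw [e1, e2, e3]
    ring
  rw [h1, h2, h3, sub_neg_eq_add, ← Finset.sum_sub_distrib, ← Finset.sum_add_distrib, Acoef]
  refine Finset.sum_congr rfl fun j hj => ?_
  have hjk : j ≤ k + 1 := by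
    have := Finset.mem_range.mp hj; omega
  have eL : n + 2 - (k + 1) - j = n + 1 - k - j := by omega
  have eM : n + 1 - (k + 1) - j = n - k - j := by omega
  rw [eL, eM]
  rcases Nat.eq_zero_or_pos j with hj0 | hjpos
  · subst hj0
    rw [if_pos rfl]
    simp only [Nat.choose_zero_right, Nat.cast_one, pow_zero, Nat.sub_zero, add_zero]
    rw [show (n + 2).choose (k + 1) = (n + 1).choose k + (n + 1).choose (k + 1) from
      Nat.choose_succ_succ (n + 1) k]
    rcases le_or_gt k n with hkn | hkn
    · have e : n + 1 - k = (n - k) + 1 := by omega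
      rw [e]
      push_cast
      ring
    · have hz : (n + 1).choose (k + 1) = 0 := Nat.choose_eq_zero_of_lt (by omega)
      rw [hz]
      push_cast
      ring
  · obtain ⟨i, rfl⟩ : ∃ i, j = i + 1 := ⟨j - 1, by omega⟩
    rw [if_neg (Nat.succ_ne_zero i)]
    have e3 : i + 1 - 1 = i := rfl
    rw [e3]
    rcases le_or_gt (k + (i + 1)) n with hA | hB
    · have e1 : n + 2 - (i + 1) = (n + 1 - (i + 1)) + 1 := by omega
      have e2 : n + 1 - k - (i + 1) = (n - k - (i + 1)) + 1 := by omega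
      rw [e1, Nat.choose_succ_succ (n + 1 - (i + 1)) k,
        Nat.choose_succ_succ k i, e2]
      push_cast
      ring
    · have hz : (n + 1 - (i + 1)).choose (k + 1) = 0 :=
        Nat.choose_eq_zero_of_lt (by omega)
      rw [hz]
      rcases le_or_gt (i + 1) (n + 1) with hB1 | hB2
      · have e1 : n + 2 - (i + 1) = (n + 1 - (i + 1)) + 1 := by omega
        rw [e1, Nat.choose_succ_succ (n + 1 - (i + 1)) k, hz,
          Nat.choose_succ_succ k i]
        push_cast
        ring
      · have hk1 : 1 ≤ k := by omega
        have z1 : (n + 2 - (i + 1)).choose (k + 1) = 0 :=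
          Nat.choose_eq_zero_of_lt (by omega)
        have z2 : (n + 1 - (i + 1)).choose k = 0 :=
          Nat.choose_eq_zero_of_lt (by omega)
        rw [z1, z2]
        push_cast
        ring

private lemma coeff_Qsum (b c : ℝ) (n i : ℕ) :
    (∑ k ∈ Finset.range (n + 1), Polynomial.C (Acoef b c n k) * Polynomial.X ^ k).coeff i
      = Acoef b c n i := by
  rw [Polynomial.finset_sum_coeff]
  simp only [Polynomial.coeff_C_mul, Polynomial.coeff_X_pow, mul_ite, mul_one, mul_zero]
  rw [Finset.sum_ite_eq (Finset.range (n + 1)) i (fun k => Acoef b c n k)]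
  by_cases h : i ∈ Finset.range (n + 1)
  · rw [if_pos h]
  · rw [if_neg h]
    exact (Acoef_eq_zero b c (by simpa using h)).symm

private lemma Qsum_rec (b c : ℝ) (n : ℕ) :
    (∑ k ∈ Finset.range (n + 3), Polynomial.C (Acoef b c (n + 2) k) * Polynomial.X ^ k)
      = (Polynomial.X - Polynomial.C c)
          * (∑ k ∈ Finset.range (n + 2), Polynomial.C (Acoef b c (n + 1) k) * Polynomial.X ^ k)
        - Polynomial.C b * Polynomial.X
          * (∑ k ∈ Finset.range (n + 1), Polynomial.C (Acoef b c n k) * Polynomial.X ^ k) := by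
  have hA0 : ∀ m : ℕ, Acoef b c m 0 = (-c) ^ m := by
    intro m
    simp [Acoef]
  ext i
  rw [Polynomial.coeff_sub, sub_mul, Polynomial.coeff_sub, mul_assoc,
    Polynomial.coeff_C_mul, Polynomial.coeff_C_mul]
  rw [show (n + 3) = (n + 2) + 1 from rfl, coeff_Qsum]
  cases i with
  | zero =>
      rw [Polynomial.mul_coeff_zero, Polynomial.mul_coeff_zero, Polynomial.coeff_X_zero,
        zero_mul, zero_mul, coeff_Qsum, hA0, hA0, pow_succ]
      ring
  | succ m =>
      rw [Polynomial.coeff_X_mul, Polynomial.coeff_X_mul, coeff_Qsum, coeff_Qsum, coeff_Qsum]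
      exact Acoef_rec b c n m

/-- Closed form for the constant-coefficient Laurent biorthogonal polynomials:
`P_n(x) = ∑_{k=0}^n (∑_j C(k,j) C(n-j, n-k-j) (-b)^j (-c)^{n-k-j}) x^k`,
where the inner sum runs over `0 ≤ j ≤ k` with `j ≤ n - k`. -/
theorem lbp_closed_form
    (b c : ℝ) (hb : b ≠ 0) (hc : c ≠ 0)
    (P : ℕ → Polynomial ℝ)
    (hP0 : P 0 = 1)
    (hP1 : P 1 = Polynomial.X - Polynomial.C c)
    (hP : ∀ n, 2 ≤ n →
      P n = (Polynomial.X - Polynomial.C c) * P (n - 1)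
            - Polynomial.C b * Polynomial.X * P (n - 2))
    (n : ℕ) :
    P n = ∑ k ∈ Finset.range (n + 1),
      Polynomial.C (∑ j ∈ Finset.range (min k (n - k) + 1),
        (k.choose j : ℝ) * ((n - j).choose (n - k - j) : ℝ) *
          (-b) ^ j * (-c) ^ (n - k - j)) * Polynomial.X ^ k := by
  have key : ∀ m : ℕ,
      P m = ∑ k ∈ Finset.range (m + 1), Polynomial.C (Acoef b c m k) * Polynomial.X ^ k ∧
      P (m + 1) = ∑ k ∈ Finset.range (m + 2), Polynomial.C (Acoef b c (m + 1) k) * Polynomial.X ^ k := by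
    intro m
    induction m with
    | zero =>
        constructor
        · rw [hP0]
          simp [Acoef]
        · rw [hP1]
          rw [Finset.sum_range_succ, Finset.sum_range_one]
          have a0 : Acoef b c 1 0 = -c := by
            simp [Acoef]
          have a1 : Acoef b c 1 1 = 1 := by
            simp [Acoef, Finset.sum_range_succ]
          rw [a0, a1]
          simp [Polynomial.C_neg]
          ring
    | succ m ih =>
        refine ⟨ih.2, ?_⟩
        rw [hP (m + 2) (by omega)]
        have e1 : m + 2 - 1 = m + 1 := rfl
        have e2 : m + 2 - 2 = m := rfl
        rw [e1, e2, ih.1, ih.2]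
        exact (Qsum_rec b c m).symm
  rw [(key n).1]
  refine Finset.sum_congr rfl fun k hk => ?_
  have hkn : k ≤ n := by
    have := Finset.mem_range.mp hk; omega
  have inner : Acoef b c n k
      = ∑ j ∈ Finset.range (min k (n - k) + 1),
          (k.choose j : ℝ) * ((n - j).choose (n - k - j) : ℝ) *
            (-b) ^ j * (-c) ^ (n - k - j) := by
    have hsub : Finset.range (min k (n - k) + 1) ⊆ Finset.range (k + 1) :=
      Finset.range_subset_range.mpr (by omega)
    have hzero : ∀ x ∈ Finset.range (k + 1), x ∉ Finset.range (min k (n - k) + 1) →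
        (k.choose x : ℝ) * ((n - x).choose k : ℝ) * (-b) ^ x * (-c) ^ (n - k - x) = 0 := by
      intro x hx hx'
      have hxk : x ≤ k := by have := Finset.mem_range.mp hx; omega
      have hxbig : min k (n - k) < x := by
        by_contra h
        exact hx' (Finset.mem_range.mpr (by omega))
      have hz : (n - x).choose k = 0 := Nat.choose_eq_zero_of_lt (by omega)
      simp [hz]
    rw [Acoef, ← Finset.sum_subset hsub hzero]
    refine Finset.sum_congr rfl fun j hj => ?_
    have hjm : j ≤ min k (n - k) := by
      have := Finset.mem_range.mp hj; omega
    have hjnk : j ≤ n - k := le_trans hjm (min_le_right _ _)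
    have hkle : k ≤ n - j := by omega
    have e : n - k - j = (n - j) - k := by omega
    rw [e, Nat.choose_symm hkle]
  rw [inner]
end

section
/- Let μ(t) = ∑_{n≥0} μ_n t^n ∈ ℝ⟦t⟧ be the generating function of the moments of the constant-coefficient Laurent biorthogonal polynomials, and let C(t) = ∑_{m≥0} C_m t^m be the generating function of the Catalan numbers. Then μ(t) = 1 + (c·t·(1−ct)^{−1}) · ( C ∘ (b·t·(1−ct)^{−2}) ), where ∘ denotes composition of formal power series (the inner series b·t·(1−ct)^{−2} has zero constant term, so the composition is defined). -/
/-- Composition `f ∘ g` of formal power series over `ℝ`, valid when `g` has zero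
constant term (then `coeff n (g^m) = 0` for `m > n`, so the sum below is the full
substitution). -/
noncomputable def psComp (f g : PowerSeries ℝ) : PowerSeries ℝ :=
  PowerSeries.mk fun n =>
    ∑ m ∈ Finset.range (n + 1), (PowerSeries.coeff m f) * PowerSeries.coeff n (g ^ m)

open PowerSeries Finset

lemma coeff_pow_zero_of_lt {g : PowerSeries ℝ} (hg : constantCoeff g = 0)
    {n m : ℕ} (h : n < m) : coeff n (g ^ m) = 0 := by
  obtain ⟨h', rfl⟩ := X_dvd_iff.mpr hg
  rw [mul_pow, coeff_X_pow_mul', if_neg (by omega)]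

lemma coeff_psComp {f g : PowerSeries ℝ} (n : ℕ) :
    coeff n (psComp f g) =
      ∑ m ∈ Finset.range (n + 1), (coeff m f) * coeff n (g ^ m) := by
  simp [psComp]

lemma coeff_aeval {g : PowerSeries ℝ} (hg : constantCoeff g = 0)
    (p : Polynomial ℝ) (n : ℕ) :
    coeff n (Polynomial.aeval g p) =
      ∑ m ∈ Finset.range (n + 1), p.coeff m * coeff n (g ^ m) := by
  induction p using Polynomial.induction_on' with
  | add p q hp hq =>
      simp only [map_add, Polynomial.coeff_add, add_mul, Finset.sum_add_distrib, hp, hq]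
  | monomial m a =>
      rw [Polynomial.aeval_monomial]
      have : ∀ m' ∈ Finset.range (n+1), (Polynomial.monomial m a).coeff m' * coeff n (g ^ m')
          = if m' = m then a * coeff n (g ^ m) else 0 := by
        intro m' _
        rw [Polynomial.coeff_monomial]
        by_cases h1 : m = m'
        · subst h1; simp
        · rw [if_neg h1, if_neg (fun h => h1 h.symm), zero_mul]
      rw [Finset.sum_congr rfl this, Finset.sum_ite_eq' (Finset.range (n+1)) m]
      have halg : (algebraMap ℝ (PowerSeries ℝ)) a = C a := rfl
      rw [halg, coeff_C_mul]
      split_ifs with h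
      · rfl
      · rw [coeff_pow_zero_of_lt hg (by simp at h; omega), mul_zero]

lemma coeff_psComp_eq_aeval {f g : PowerSeries ℝ} (hg : constantCoeff g = 0) (n : ℕ) :
    coeff n (psComp f g) = coeff n (Polynomial.aeval g (trunc (n+1) f)) := by
  rw [coeff_psComp, coeff_aeval hg]
  refine Finset.sum_congr rfl fun m hm => ?_
  rw [coeff_trunc, if_pos (Finset.mem_range.mp hm)]

lemma psComp_add (f₁ f₂ g : PowerSeries ℝ) :
    psComp (f₁ + f₂) g = psComp f₁ g + psComp f₂ g := by
  ext n
  simp [coeff_psComp, add_mul, Finset.sum_add_distrib]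

lemma psComp_sub (f₁ f₂ g : PowerSeries ℝ) :
    psComp (f₁ - f₂) g = psComp f₁ g - psComp f₂ g := by
  ext n
  simp [coeff_psComp, sub_mul, Finset.sum_sub_distrib]

lemma psComp_one (g : PowerSeries ℝ) : psComp 1 g = 1 := by
  ext n
  rw [coeff_psComp]
  have : ∀ m ∈ Finset.range (n+1), (coeff m 1) * coeff n (g ^ m)
      = if m = 0 then coeff n (1 : PowerSeries ℝ) else 0 := by
    intro m _
    rcases eq_or_ne m 0 with rfl | h <;> simp [coeff_one, *]
  rw [Finset.sum_congr rfl this, Finset.sum_ite_eq' (Finset.range (n+1)) 0]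
  simp

lemma psComp_C (r : ℝ) (g : PowerSeries ℝ) : psComp (C r) g = C r := by
  ext n
  rw [coeff_psComp]
  have : ∀ m ∈ Finset.range (n+1), (coeff m (C r)) * coeff n (g ^ m)
      = if m = 0 then coeff n (C r) else 0 := by
    intro m _
    rcases eq_or_ne m 0 with rfl | h <;> simp [coeff_C, *]
  rw [Finset.sum_congr rfl this, Finset.sum_ite_eq' (Finset.range (n+1)) 0]
  simp

lemma psComp_X {g : PowerSeries ℝ} (hg : constantCoeff g = 0) :
    psComp X g = g := by
  ext n
  rw [coeff_psComp]
  have : ∀ m ∈ Finset.range (n+1), (coeff m (X : PowerSeries ℝ)) * coeff n (g ^ m)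
      = if m = 1 then coeff n (g ^ 1) else 0 := by
    intro m _
    rcases eq_or_ne m 1 with rfl | h <;> simp [coeff_X, *]
  rw [Finset.sum_congr rfl this, Finset.sum_ite_eq' (Finset.range (n+1)) 1]
  rcases Nat.eq_zero_or_pos n with rfl | hn
  · simp [coeff_zero_eq_constantCoeff, hg]
  · rw [if_pos (by simp; omega), pow_one]

lemma psComp_mul {g : PowerSeries ℝ} (hg : constantCoeff g = 0) (f₁ f₂ : PowerSeries ℝ) :
    psComp (f₁ * f₂) g = psComp f₁ g * psComp f₂ g := by
  ext n
  rw [coeff_psComp_eq_aeval hg]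
  have step1 : coeff n (Polynomial.aeval g (trunc (n+1) (f₁ * f₂)))
      = coeff n (Polynomial.aeval g (trunc (n+1) f₁ * trunc (n+1) f₂)) := by
    rw [coeff_aeval hg, coeff_aeval hg]
    refine Finset.sum_congr rfl fun m hm => ?_
    have hm' := Finset.mem_range.mp hm
    congr 1
    rw [coeff_trunc, if_pos hm', coeff_mul, Polynomial.coeff_mul]
    refine Finset.sum_congr rfl fun p hp => ?_
    have := Finset.HasAntidiagonal.mem_antidiagonal.mp hp
    rw [coeff_trunc, coeff_trunc, if_pos (by omega), if_pos (by omega)]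
  rw [step1, map_mul, coeff_mul, coeff_mul]
  refine Finset.sum_congr rfl fun p hp => ?_
  have := Finset.HasAntidiagonal.mem_antidiagonal.mp hp
  rw [coeff_aeval hg, coeff_aeval hg, coeff_psComp, coeff_psComp]
  congr 1
  · refine Finset.sum_congr rfl fun m hm => by
      congr 2
      rw [coeff_trunc, if_pos (by simp at hm; omega)]
  · refine Finset.sum_congr rfl fun m hm => by
      congr 2
      rw [coeff_trunc, if_pos (by simp at hm; omega)]


/-- The generating function of the moments of the constant-coefficient Laurent
biorthogonal polynomials is `μ(t) = 1 + (ct/(1-ct)) · C(bt/(1-ct)²)`, where `C`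
is the generating function of the Catalan numbers. -/
theorem lbp_moment_gf
    (b c : ℝ) (hb : b ≠ 0) (hc : c ≠ 0)
    (P : ℕ → Polynomial ℝ)
    (hP0 : P 0 = 1)
    (hP1 : P 1 = Polynomial.X - Polynomial.C c)
    (hP : ∀ n, 2 ≤ n →
      P n = (Polynomial.X - Polynomial.C c) * P (n - 1)
            - Polynomial.C b * Polynomial.X * P (n - 2))
    (μ : ℕ → ℝ)
    (hμ : ∀ n, (∑ k ∈ Finset.range (n + 1), (P n).coeff k * μ k) =
      if n = 0 then 1 else 0) :
    PowerSeries.mk μ =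
      1 + (PowerSeries.C c * PowerSeries.X *
            (1 - PowerSeries.C c * PowerSeries.X)⁻¹) *
        psComp (PowerSeries.mk fun m => (catalan m : ℝ))
          (PowerSeries.C b * PowerSeries.X *
            ((1 - PowerSeries.C c * PowerSeries.X)⁻¹) ^ 2) := by
  -- notation
  set E : PowerSeries ℝ := (1 - C c * X)⁻¹ with hEdef
  set E' : PowerSeries ℝ := (1 + C c * X)⁻¹ with hE'def
  have hE : (1 - C c * X) * E = 1 :=
    PowerSeries.mul_inv_cancel _ (by simp)
  have hE' : (1 + C c * X) * E' = 1 :=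
    PowerSeries.mul_inv_cancel _ (by simp)
  have hone : (1 + C c * X : PowerSeries ℝ) ≠ 0 := by
    intro h
    have := congrArg (constantCoeff) h
    simp at this
  set u : PowerSeries ℝ := X * (1 - C b * X) * E' with hudef
  have hu : constantCoeff u = 0 := by simp [hudef]
  set g : PowerSeries ℝ := C b * X * E ^ 2 with hgdef
  have hg : constantCoeff g = 0 := by simp [hgdef]
  set Cat : PowerSeries ℝ := PowerSeries.mk fun m => (catalan m : ℝ) with hCatdef
  have hCat : Cat = 1 + X * (Cat * Cat) := by
    ext n
    cases n with
    | zero => simp [hCatdef]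
    | succ n =>
      rw [map_add, coeff_succ_X_mul, coeff_one, if_neg (Nat.succ_ne_zero n),
        zero_add, coeff_mul]
      simp only [hCatdef, coeff_mk, catalan_succ' n]
      push_cast
      rfl
  set K : PowerSeries ℝ := psComp Cat g with hKdef
  have hK : K = 1 + g * (K * K) := by
    conv_lhs => rw [hKdef, hCat]
    rw [psComp_add, psComp_one, psComp_mul hg, psComp_mul hg, psComp_X hg, hKdef]
  -- composed inverse
  set Eu : PowerSeries ℝ := psComp E u with hEudef
  have hEu : (1 - C c * u) * Eu = 1 := by
    have h1 : psComp ((1 - C c * X) * E) u = 1 := by rw [hE, psComp_one]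
    rw [psComp_mul hu, psComp_sub, psComp_one, psComp_mul hu, psComp_C,
      psComp_X hu] at h1
    exact h1
  set M : PowerSeries ℝ := psComp K u with hMdef
  have hgu : psComp g u = C b * u * (Eu * Eu) := by
    rw [hgdef, sq, psComp_mul hu, psComp_mul hu, psComp_mul hu, psComp_C, psComp_X hu]
  have hM : M = 1 + (C b * u * (Eu * Eu)) * (M * M) := by
    conv_lhs => rw [hMdef, hK]
    rw [psComp_add, psComp_one, psComp_mul hu, hgu, psComp_mul hu, hMdef]
  set W : PowerSeries ℝ := C c * u * Eu * M with hWdef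
  have key1 : C b * (W * W) - C c * (1 - C c * u) * W + (C c * C c) * u = 0 := by
    rw [hWdef]
    linear_combination (-(C c * C c * u)) * hM +
      (-(C c * C c * u * M)) * hEu
  have hXu : (1 + C c * X) * u = X * (1 - C b * X) := by
    rw [hudef]
    linear_combination (X * (1 - C b * X)) * hE'
  have key2 : C b * ((C c * X) * (C c * X)) - C c * (1 - C c * u) * (C c * X)
      + (C c * C c) * u = 0 := by
    have key2' : (1 + C c * X) *
        (C b * ((C c * X) * (C c * X)) - C c * (1 - C c * u) * (C c * X)
          + (C c * C c) * u) = 0 := by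
      linear_combination (C c * C c * C c * X + C c * C c) * hXu
    rcases mul_eq_zero.mp key2' with h | h
    · exact absurd h hone
    · exact h
  have key3 : (W - C c * X) * (C b * (W + C c * X) - C c * (1 - C c * u)) = 0 := by
    linear_combination key1 - key2
  have hWX : W = C c * X := by
    rcases mul_eq_zero.mp key3 with h | h
    · exact sub_eq_zero.mp h
    · exfalso
      have := congrArg (constantCoeff) h
      simp [hWdef, hu] at this
      exact hc this
  -- the composed series
  set F : PowerSeries ℝ := 1 + C c * X * E * K with hFdef
  have hcomp : psComp F u = 1 + C c * X := by
    rw [hFdef, psComp_add, psComp_one, psComp_mul hu, psComp_mul hu, psComp_mul hu,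
      psComp_C, psComp_X hu, ← hEudef, ← hMdef, ← hWX]
  -- degree facts for P
  have hdeg : ∀ n, ∀ k, n < k → (P n).coeff k = 0 := by
    intro n
    induction n using Nat.strong_induction_on with
    | _ n ih =>
      intro k hk
      rcases n with _ | _ | n
      · rw [hP0, Polynomial.coeff_one, if_neg (by omega)]
      · rw [hP1, Polynomial.coeff_sub, Polynomial.coeff_X, Polynomial.coeff_C,
          if_neg (by omega), if_neg (by omega)]
        ring
      · obtain ⟨k, rfl⟩ : ∃ k', k = k' + 1 := ⟨k - 1, by omega⟩
        rw [hP (n + 2) (by omega)]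
        simp only [Nat.add_sub_cancel, show n + 2 - 1 = n + 1 from rfl]
        rw [Polynomial.coeff_sub, sub_mul, Polynomial.coeff_sub,
          Polynomial.coeff_X_mul, mul_assoc, Polynomial.coeff_C_mul,
          Polynomial.coeff_C_mul, Polynomial.coeff_X_mul,
          ih (n + 1) (by omega) k (by omega), ih (n + 1) (by omega) (k + 1) (by omega),
          ih n (by omega) k (by omega)]
        ring
  have hlead : ∀ n, (P n).coeff n = 1 := by
    intro n
    induction n using Nat.strong_induction_on with
    | _ n ih =>
      rcases n with _ | _ | n
      · rw [hP0, Polynomial.coeff_one, if_pos rfl]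
      · rw [hP1, Polynomial.coeff_sub, Polynomial.coeff_X, Polynomial.coeff_C,
          if_pos rfl, if_neg (by omega)]
        ring
      · rw [hP (n + 2) (by omega)]
        simp only [Nat.add_sub_cancel, show n + 2 - 1 = n + 1 from rfl]
        rw [Polynomial.coeff_sub, sub_mul, Polynomial.coeff_sub,
          show n + 2 = (n + 1) + 1 from rfl, Polynomial.coeff_X_mul, mul_assoc,
          Polynomial.coeff_C_mul, Polynomial.coeff_C_mul, Polynomial.coeff_X_mul,
          ih (n + 1) (by omega), hdeg (n + 1) (n + 2) (by omega),
          hdeg n (n + 1) (by omega)]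
        ring
  -- column generating functions
  have hmul1 : ∀ f : PowerSeries ℝ, (1 + C c * X) * f = f + C c * (X * f) := by
    intro f; ring
  have hmul2 : ∀ f : PowerSeries ℝ,
      X * (1 - C b * X) * f = X * f - C b * (X * (X * f)) := by
    intro f; ring
  have hcz : ∀ f : PowerSeries ℝ, coeff 0 (X * f) = 0 := by
    intro f
    rw [coeff_zero_eq_constantCoeff, map_mul, constantCoeff_X, zero_mul]
  have hG0 : (1 + C c * X) * (PowerSeries.mk fun n => (P n).coeff 0) = 1 := by
    rw [hmul1]
    ext n
    rw [map_add, coeff_C_mul, coeff_mk, coeff_one]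
    rcases n with _ | _ | n
    · rw [hcz, hP0, if_pos rfl]
      simp
    · rw [coeff_succ_X_mul, coeff_mk, hP0, hP1, if_neg (by omega),
        Polynomial.coeff_sub, Polynomial.coeff_X, Polynomial.coeff_C,
        Polynomial.coeff_one, if_neg (by omega), if_pos rfl, if_pos rfl]
      ring
    · rw [coeff_succ_X_mul, coeff_mk, if_neg (by omega), hP (n + 2) (by omega)]
      simp only [Nat.add_sub_cancel, show n + 2 - 1 = n + 1 from rfl]
      simp only [Polynomial.coeff_sub, sub_mul, mul_assoc,
        Polynomial.mul_coeff_zero, Polynomial.coeff_X_zero, Polynomial.coeff_C_mul,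
        Polynomial.coeff_C_zero]
      ring
  have hGstep : ∀ k, (1 + C c * X) * (PowerSeries.mk fun n => (P n).coeff (k + 1))
      = X * (1 - C b * X) * (PowerSeries.mk fun n => (P n).coeff k) := by
    intro k
    rw [hmul1, hmul2]
    ext n
    rw [map_add, map_sub, coeff_C_mul, coeff_C_mul, coeff_mk]
    rcases n with _ | _ | n
    · rw [hcz, hcz, hcz, hP0, Polynomial.coeff_one, if_neg (by omega)]
      ring
    · simp only [coeff_succ_X_mul, coeff_mk, hcz,
        hP0, hP1, Polynomial.coeff_sub, Polynomial.coeff_X, Polynomial.coeff_C,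
        Polynomial.coeff_one]
      rcases eq_or_ne k 0 with rfl | hk
      · norm_num
      · rw [if_neg (by omega), if_neg (by omega), if_neg (by omega), if_neg hk]
        ring
    · rw [coeff_succ_X_mul, coeff_succ_X_mul, coeff_succ_X_mul, coeff_succ_X_mul,
        coeff_mk, coeff_mk, coeff_mk, hP (n + 2) (by omega)]
      simp only [Nat.add_sub_cancel, show n + 2 - 1 = n + 1 from rfl]
      rw [Polynomial.coeff_sub, sub_mul, Polynomial.coeff_sub,
        Polynomial.coeff_X_mul, mul_assoc, Polynomial.coeff_C_mul,
        Polynomial.coeff_C_mul, Polynomial.coeff_X_mul]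
      ring
  have hGform : ∀ k, (PowerSeries.mk fun n => (P n).coeff k) = u ^ k * E' := by
    intro k
    induction k with
    | zero =>
      refine mul_left_cancel₀ hone ?_
      rw [hG0, pow_zero, one_mul, hE']
    | succ k ihk =>
      refine mul_left_cancel₀ hone ?_
      rw [hGstep k, ihk, pow_succ, show u ^ k * u * E' = u * (u ^ k * E') from by ring,
        show (1 + C c * X) * (u * (u ^ k * E')) =
          ((1 + C c * X) * u) * (u ^ k * E') from by ring, hXu]
  -- the key orthogonality relations for the claimed series
  have hΦ : psComp F u * E' = 1 := by rw [hcomp, hE']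
  have hSν : ∀ n, (∑ k ∈ Finset.range (n + 1), (P n).coeff k * coeff k F) =
      if n = 0 then 1 else 0 := by
    intro n
    have c1 : (∑ k ∈ Finset.range (n + 1), (P n).coeff k * coeff k F)
        = ∑ k ∈ Finset.range (n + 1), coeff k F * coeff n (u ^ k * E') := by
      refine Finset.sum_congr rfl fun k _ => ?_
      rw [← hGform k, coeff_mk]
      ring
    have c2' : ∀ pq ∈ antidiagonal n, coeff pq.1 (psComp F u) * coeff pq.2 E'
        = ∑ k ∈ Finset.range (n + 1),
            coeff k F * (coeff pq.1 (u ^ k) * coeff pq.2 E') := by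
      intro pq hpq
      have hle : pq.1 + 1 ≤ n + 1 := by
        have := Finset.HasAntidiagonal.mem_antidiagonal.mp hpq; omega
      calc coeff pq.1 (psComp F u) * coeff pq.2 E'
          = ∑ k ∈ Finset.range (pq.1 + 1),
              coeff k F * coeff pq.1 (u ^ k) * coeff pq.2 E' := by
            rw [coeff_psComp, Finset.sum_mul]
        _ = ∑ k ∈ Finset.range (n + 1),
              coeff k F * coeff pq.1 (u ^ k) * coeff pq.2 E' := by
            refine Finset.sum_subset (Finset.range_subset_range.mpr hle) fun k _ hk2 => ?_
            rw [coeff_pow_zero_of_lt hu (by simp only [Finset.mem_range] at hk2; omega)]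
            ring
        _ = ∑ k ∈ Finset.range (n + 1),
              coeff k F * (coeff pq.1 (u ^ k) * coeff pq.2 E') := by
            exact Finset.sum_congr rfl fun k _ => by ring
    have c2 : (∑ k ∈ Finset.range (n + 1), coeff k F * coeff n (u ^ k * E'))
        = ∑ pq ∈ antidiagonal n, coeff pq.1 (psComp F u) * coeff pq.2 E' := by
      have lhs_eq : ∀ k ∈ Finset.range (n + 1), coeff k F * coeff n (u ^ k * E')
          = ∑ pq ∈ antidiagonal n,
              coeff k F * (coeff pq.1 (u ^ k) * coeff pq.2 E') := by
        intro k _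
        rw [coeff_mul, Finset.mul_sum]
      rw [Finset.sum_congr rfl lhs_eq, Finset.sum_comm]
      exact Finset.sum_congr rfl fun pq hpq => (c2' pq hpq).symm
    rw [c1, c2, ← coeff_mul, hΦ, coeff_one]
  -- uniqueness of moments
  have huniq : ∀ n, μ n = coeff n F := by
    intro n
    induction n using Nat.strong_induction_on with
    | _ n ih =>
      have h1 := hμ n
      have h2 := hSν n
      rw [Finset.sum_range_succ, hlead n] at h1 h2
      have h3 : ∑ k ∈ Finset.range n, (P n).coeff k * μ k
          = ∑ k ∈ Finset.range n, (P n).coeff k * coeff k F :=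
        Finset.sum_congr rfl fun k hk => by rw [ih k (Finset.mem_range.mp hk)]
      rw [h3] at h1
      linarith
  ext n
  rw [coeff_mk]
  exact huniq n
end

section
/- For every natural number n ≥ 1, the n-th moment satisfies μ_n = ∑_{k=0}^{n} binom(2n−k−1, 2n−2k) · C_{n−k} · b^{n−k} · c^k, and μ_0 = 1. -/
noncomputable def Bal (n d : ℕ) : ℝ :=
  ((n + 2 * d).choose d : ℝ) - ((n + 2 * d).choose (n + d + 1) : ℝ)

lemma Bal_zero (n : ℕ) : Bal n 0 = 1 := by
  simp [Bal, Nat.choose_eq_zero_of_lt (Nat.lt_succ_self n)]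

lemma Bal_rec (n d : ℕ) : Bal (n + 1) (d + 1) = Bal (n + 2) d + Bal n (d + 1) := by
  unfold Bal
  rw [show n + 1 + 2 * (d + 1) = (n + 2 * d + 2) + 1 from by ring,
      show n + 2 + 2 * d = n + 2 * d + 2 from by ring,
      show n + 2 * (d + 1) = n + 2 * d + 2 from by ring,
      show n + 1 + (d + 1) + 1 = (n + d + 2) + 1 from by ring,
      show n + 2 + d + 1 = (n + d + 2) + 1 from by ring,
      Nat.choose_succ_succ (n + 2 * d + 2) d,
      Nat.choose_succ_succ (n + 2 * d + 2) (n + d + 2)]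
  simp only [Nat.succ_eq_add_one]
  push_cast
  ring_nf

lemma Bal_01 (d : ℕ) : Bal 0 (d + 1) = Bal 1 d := by
  unfold Bal
  rw [show 0 + 2 * (d + 1) = (2 * d + 1) + 1 from by ring,
      show 1 + 2 * d = 2 * d + 1 from by ring,
      show 0 + (d + 1) + 1 = (d + 1) + 1 from by ring,
      show 1 + d + 1 = (d + 1) + 1 from by ring,
      Nat.choose_succ_succ (2 * d + 1) d,
      Nat.choose_succ_succ (2 * d + 1) (d + 1)]
  simp only [Nat.succ_eq_add_one]
  push_cast
  ring_nf

lemma Bal_catalan (d : ℕ) : Bal 0 d = (catalan d : ℝ) := by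
  have h1 : ((d + 1) * catalan d : ℕ) = (2 * d).choose d := by
    rw [succ_mul_catalan_eq_centralBinom]; rfl
  have h2 : ((2 * d).choose (d + 1) * (d + 1) : ℕ) = (2 * d).choose d * d := by
    rw [Nat.choose_succ_right_eq]; congr 1; omega
  have h1' : ((d : ℝ) + 1) * (catalan d : ℝ) = ((2 * d).choose d : ℝ) := by
    exact_mod_cast congrArg (Nat.cast : ℕ → ℝ) h1
  have h2' : ((2 * d).choose (d + 1) : ℝ) * ((d : ℝ) + 1) = ((2 * d).choose d : ℝ) * d := by
    exact_mod_cast congrArg (Nat.cast : ℕ → ℝ) h2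
  have hd : ((d : ℝ) + 1) ≠ 0 := by positivity
  apply mul_left_cancel₀ hd
  unfold Bal
  rw [show 0 + 2 * d = 2 * d from by ring, show 0 + d + 1 = d + 1 from by ring]
  nlinarith [h1', h2']

noncomputable def Wt (b c : ℝ) (n d k : ℕ) : ℝ :=
  ((n + 2 * d + k).choose k : ℝ) * Bal n d * b ^ (n + d) * c ^ (k + 1)

-- K1' : interior term identity
lemma Wt_K1 (b c : ℝ) (n d k : ℕ) :
    Wt b c (n + 1) (d + 1) (k + 1) =
      Wt b c (n + 2) d (k + 1) + b * Wt b c n (d + 1) (k + 1)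
        + c * Wt b c (n + 1) (d + 1) k := by
  unfold Wt
  rw [show n + 1 + 2 * (d + 1) + (k + 1) = (n + 2 * d + k + 3) + 1 from by ring,
      show n + 2 + 2 * d + (k + 1) = n + 2 * d + k + 3 from by ring,
      show n + 2 * (d + 1) + (k + 1) = n + 2 * d + k + 3 from by ring,
      show n + 1 + 2 * (d + 1) + k = n + 2 * d + k + 3 from by ring,
      Nat.choose_succ_succ (n + 2 * d + k + 3) k,
      Bal_rec n d,
      show n + 1 + (d + 1) = n + d + 2 from by ring,
      show n + 2 + d = n + d + 2 from by ring,
      show n + (d + 1) = n + d + 1 from by ring]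
  simp only [Nat.succ_eq_add_one]
  push_cast
  ring_nf

-- K2' : k = 0 boundary
lemma Wt_K2 (b c : ℝ) (n d : ℕ) :
    Wt b c (n + 1) (d + 1) 0 = Wt b c (n + 2) d 0 + b * Wt b c n (d + 1) 0 := by
  unfold Wt
  rw [Bal_rec n d]
  simp only [Nat.choose_zero_right]
  rw [show n + 1 + (d + 1) = n + d + 2 from by ring,
      show n + 2 + d = n + d + 2 from by ring,
      show n + (d + 1) = n + d + 1 from by ring]
  push_cast
  ring

-- K3 : d = 0 boundary
lemma Wt_K3 (b c : ℝ) (n k : ℕ) :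
    Wt b c (n + 1) 0 (k + 1) = b * Wt b c n 0 (k + 1) + c * Wt b c (n + 1) 0 k := by
  unfold Wt
  rw [show n + 1 + 2 * 0 + (k + 1) = (n + k + 1) + 1 from by ring,
      show n + 2 * 0 + (k + 1) = n + k + 1 from by ring,
      show n + 1 + 2 * 0 + k = n + k + 1 from by ring,
      Nat.choose_succ_succ (n + k + 1) k]
  simp only [Nat.succ_eq_add_one, Bal_zero]
  push_cast
  ring_nf

-- K4 : d = 0, k = 0
lemma Wt_K4 (b c : ℝ) (n : ℕ) : Wt b c (n + 1) 0 0 = b * Wt b c n 0 0 := by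
  unfold Wt
  simp [Bal_zero]
  ring

-- n = 0 versions
lemma Wt_K1z (b c : ℝ) (d k : ℕ) :
    Wt b c 0 (d + 1) (k + 1) = Wt b c 1 d (k + 1) + c * Wt b c 0 (d + 1) k := by
  unfold Wt
  rw [show 0 + 2 * (d + 1) + (k + 1) = (2 * d + k + 2) + 1 from by ring,
      show 1 + 2 * d + (k + 1) = 2 * d + k + 2 from by ring,
      show 0 + 2 * (d + 1) + k = 2 * d + k + 2 from by ring,
      Nat.choose_succ_succ (2 * d + k + 2) k, Bal_01 d,
      show (0 : ℕ) + (d + 1) = d + 1 from by ring,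
      show (1 : ℕ) + d = d + 1 from by ring]
  simp only [Nat.succ_eq_add_one]
  push_cast
  ring_nf

lemma Wt_K2z (b c : ℝ) (d : ℕ) : Wt b c 0 (d + 1) 0 = Wt b c 1 d 0 := by
  unfold Wt
  rw [Bal_01 d]
  simp only [Nat.choose_zero_right]
  rw [show (0 : ℕ) + (d + 1) = d + 1 from by ring, show (1 : ℕ) + d = d + 1 from by ring]

lemma Wt_K3z (b c : ℝ) (k : ℕ) : Wt b c 0 0 (k + 1) = c * Wt b c 0 0 k := by
  unfold Wt
  simp [Bal_zero]
  ring

noncomputable def Wf (b c : ℝ) : ℕ → ℕ → ℝ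
  | 0, n => if n = 0 then 1 else 0
  | (j + 1), n => ∑ k ∈ Finset.range (j + 1), Wt b c n (j - k) k

lemma Wf_succ (b c : ℝ) (j n : ℕ) :
    Wf b c (j + 1) n = ∑ k ∈ Finset.range (j + 1), Wt b c n (j - k) k := rfl

lemma Wf_zero (b c : ℝ) (n : ℕ) : Wf b c 0 n = if n = 0 then 1 else 0 := rfl

lemma Wf_rec (b c : ℝ) (j n : ℕ) :
    Wf b c (j + 1) (n + 1) =
      Wf b c j (n + 2) + c * Wf b c j (n + 1) + b * Wf b c (j + 1) n := by
  cases j with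
  | zero =>
      simp only [Wf_succ, Wf_zero, Finset.sum_range_one, Nat.sub_zero]
      simp [Wt_K4 b c n]
  | succ i =>
      rw [Wf_succ b c (i + 1) (n + 1), Finset.sum_range_succ]
      have h1 : ∀ k ∈ Finset.range (i + 1),
          Wt b c (n + 1) (i + 1 - k) k =
            Wt b c (n + 2) (i - k) k + b * Wt b c n (i + 1 - k) k +
              (if k = 0 then 0 else c * Wt b c (n + 1) (i + 1 - k) (k - 1)) := by
        intro k hk
        rw [Finset.mem_range] at hk
        cases k with
        | zero =>
            simpa using Wt_K2 b c n i
        | succ k' =>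
            have hk' : k' + 1 ≤ i := by omega
            have e1 : i + 1 - (k' + 1) = (i - k' - 1) + 1 := by omega
            have e2 : i - (k' + 1) = i - k' - 1 := by omega
            rw [e1, e2, Wt_K1 b c n (i - k' - 1) k']
            have e3 : i - k' - 1 + 1 = i - k' := by omega
            simp only [Nat.add_sub_cancel, e3, if_neg (Nat.succ_ne_zero k')]
      rw [Finset.sum_congr rfl h1]
      rw [Finset.sum_add_distrib, Finset.sum_add_distrib]
      have hA : ∑ k ∈ Finset.range (i + 1), Wt b c (n + 2) (i - k) k
          = Wf b c (i + 1) (n + 2) := (Wf_succ b c i (n + 2)).symm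
      have hB : b * Wf b c (i + 2) n
          = (∑ k ∈ Finset.range (i + 1), b * Wt b c n (i + 1 - k) k)
            + b * Wt b c n 0 (i + 1) := by
        rw [Wf_succ b c (i + 1) n, Finset.sum_range_succ, Nat.sub_self, mul_add,
          Finset.mul_sum]
      have hC : c * Wf b c (i + 1) (n + 1)
          = (∑ k ∈ Finset.range (i + 1),
              (if k = 0 then 0 else c * Wt b c (n + 1) (i + 1 - k) (k - 1)))
            + c * Wt b c (n + 1) 0 i := by
        rw [Finset.sum_range_succ']
        simp only [Nat.succ_ne_zero, if_neg, Nat.add_sub_cancel, if_pos rfl,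
          Nat.succ_sub_succ]
        rw [Wf_succ b c i (n + 1), Finset.sum_range_succ, Nat.sub_self, mul_add,
          Finset.mul_sum]
        simp
      rw [hA, Nat.sub_self]
      linear_combination (-1 : ℝ) * hB - hC + Wt_K3 b c n i

lemma Wt000 (b c : ℝ) : Wt b c 0 0 0 = c := by
  simp [Wt, Bal]

lemma Wf_rec0 (b c : ℝ) (j : ℕ) :
    Wf b c (j + 1) 0 = Wf b c j 1 + c * Wf b c j 0 := by
  cases j with
  | zero =>
      simp only [Wf_succ, Wf_zero, Finset.sum_range_one, Nat.sub_zero]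
      simp [Wt000]
  | succ i =>
      rw [Wf_succ b c (i + 1) 0, Finset.sum_range_succ]
      have h1 : ∀ k ∈ Finset.range (i + 1),
          Wt b c 0 (i + 1 - k) k =
            Wt b c 1 (i - k) k +
              (if k = 0 then 0 else c * Wt b c 0 (i + 1 - k) (k - 1)) := by
        intro k hk
        rw [Finset.mem_range] at hk
        cases k with
        | zero =>
            simpa using Wt_K2z b c i
        | succ k' =>
            have e1 : i + 1 - (k' + 1) = (i - k' - 1) + 1 := by omega
            have e2 : i - (k' + 1) = i - k' - 1 := by omega
            rw [e1, e2, Wt_K1z b c (i - k' - 1) k']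
            have e3 : i - k' - 1 + 1 = i - k' := by omega
            simp only [Nat.add_sub_cancel, e3, if_neg (Nat.succ_ne_zero k')]
      rw [Finset.sum_congr rfl h1]
      rw [Finset.sum_add_distrib]
      have hA : ∑ k ∈ Finset.range (i + 1), Wt b c 1 (i - k) k
          = Wf b c (i + 1) 1 := (Wf_succ b c i 1).symm
      have hC : c * Wf b c (i + 1) 0
          = (∑ k ∈ Finset.range (i + 1),
              (if k = 0 then 0 else c * Wt b c 0 (i + 1 - k) (k - 1)))
            + c * Wt b c 0 0 i := by
        rw [Finset.sum_range_succ']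
        simp only [Nat.succ_ne_zero, if_neg, Nat.add_sub_cancel, if_pos rfl,
          Nat.succ_sub_succ]
        rw [Wf_succ b c i 0, Finset.sum_range_succ, Nat.sub_self, mul_add,
          Finset.mul_sum]
        simp
      rw [hA, Nat.sub_self]
      linear_combination (-1 : ℝ) * hC + Wt_K3z b c i


/-- Closed form for the moments of the constant-coefficient Laurent biorthogonal
polynomials: `μ_0 = 1` and, for `n ≥ 1`,
`μ_n = ∑_{k=0}^n C(2n-k-1, 2n-2k) · Catalan(n-k) · b^{n-k} · c^k`. -/
theorem lbp_moment_closed_form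
    (b c : ℝ) (hb : b ≠ 0) (hc : c ≠ 0)
    (P : ℕ → Polynomial ℝ)
    (hP0 : P 0 = 1)
    (hP1 : P 1 = Polynomial.X - Polynomial.C c)
    (hP : ∀ n, 2 ≤ n →
      P n = (Polynomial.X - Polynomial.C c) * P (n - 1)
            - Polynomial.C b * Polynomial.X * P (n - 2))
    (μ : ℕ → ℝ)
    (hμ : ∀ n, (∑ k ∈ Finset.range (n + 1), (P n).coeff k * μ k) =
      if n = 0 then 1 else 0) :
    μ 0 = 1 ∧
    ∀ n, 1 ≤ n →
      μ n = ∑ k ∈ Finset.range (n + 1),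
        ((2 * n - k - 1).choose (2 * n - 2 * k) : ℝ) * (catalan (n - k) : ℝ) *
          b ^ (n - k) * c ^ k := by
  set L : ℕ → ℕ → ℝ :=
    fun j n => ∑ k ∈ Finset.range (n + 1), (P n).coeff k * μ (k + j) with hLdef
  have hdeg : ∀ n, (P n).natDegree ≤ n := by
    intro n
    induction n using Nat.strong_induction_on with
    | _ n ih =>
      match n with
      | 0 => rw [hP0]; simp
      | 1 => rw [hP1]; exact (Polynomial.natDegree_X_sub_C c).le
      | (m + 2) =>
        rw [hP (m + 2) (by omega), show m + 2 - 1 = m + 1 from by omega,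
          show m + 2 - 2 = m from by omega]
        refine le_trans (Polynomial.natDegree_sub_le _ _) (max_le ?_ ?_)
        · refine le_trans (Polynomial.natDegree_mul_le) ?_
          have := ih (m + 1) (by omega)
          rw [Polynomial.natDegree_X_sub_C]
          omega
        · refine le_trans (Polynomial.natDegree_mul_le) ?_
          have h1 : (Polynomial.C b * Polynomial.X : Polynomial ℝ).natDegree ≤ 1 :=
            le_trans Polynomial.natDegree_mul_le
              (by simp [Polynomial.natDegree_C, Polynomial.natDegree_X])
          have := ih m (by omega)
          omega
  have hLext : ∀ j n m, n + 1 ≤ m →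
      (∑ k ∈ Finset.range m, (P n).coeff k * μ (k + j)) = L j n := by
    intro j n m hm
    refine (Finset.sum_subset (Finset.range_subset_range.mpr hm) ?_).symm
    intro k hk hknot
    rw [Finset.mem_range] at hknot
    push_neg at hknot
    rw [Polynomial.coeff_eq_zero_of_natDegree_lt
      (lt_of_le_of_lt (hdeg n) (by omega)), zero_mul]
  have hstar0 : ∀ j, L (j + 1) 0 = L j 1 + c * L j 0 := by
    intro j
    simp only [hLdef, hP0, hP1]
    rw [Finset.sum_range_one, Finset.sum_range_one, Finset.sum_range_succ,
      Finset.sum_range_one]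
    simp only [Polynomial.coeff_one, Polynomial.coeff_sub, Polynomial.coeff_X,
      Polynomial.coeff_C]
    norm_num
    congr 1
    omega
  have hstar : ∀ j n, L (j + 1) (n + 1) =
      L j (n + 2) + c * L j (n + 1) + b * L (j + 1) n := by
    intro j n
    have hrec := hP (n + 2) (by omega)
    rw [show n + 2 - 1 = n + 1 from by omega, show n + 2 - 2 = n from by omega,
      sub_mul, mul_assoc] at hrec
    have hS : L j (n + 2) = L (j + 1) (n + 1) - c * L j (n + 1) - b * L (j + 1) n := by
      have e1 : L j (n + 2) = ∑ k ∈ Finset.range (n + 3),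
          (P (n + 2)).coeff k * μ (k + j) := rfl
      rw [e1, hrec]
      simp only [Polynomial.coeff_sub, Polynomial.coeff_C_mul, sub_mul,
        Finset.sum_sub_distrib]
      have hS1 : (∑ k ∈ Finset.range (n + 3),
          (Polynomial.X * P (n + 1)).coeff k * μ (k + j)) = L (j + 1) (n + 1) := by
        rw [Finset.sum_range_succ']
        simp only [Polynomial.coeff_X_mul]
        rw [Polynomial.mul_coeff_zero, Polynomial.coeff_X_zero, zero_mul, zero_mul,
          add_zero]
        refine Finset.sum_congr rfl fun k _ => ?_
        rw [show k + 1 + j = k + (j + 1) from by omega]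
      have hS2 : (∑ k ∈ Finset.range (n + 3), c * (P (n + 1)).coeff k * μ (k + j))
          = c * L j (n + 1) := by
        rw [← hLext j (n + 1) (n + 3) (by omega), Finset.mul_sum]
        refine Finset.sum_congr rfl fun k _ => by ring
      have hS3 : (∑ k ∈ Finset.range (n + 3),
          b * (Polynomial.X * P n).coeff k * μ (k + j)) = b * L (j + 1) n := by
        rw [Finset.sum_range_succ']
        simp only [Polynomial.coeff_X_mul, Polynomial.mul_coeff_zero,
          Polynomial.coeff_X_zero, zero_mul, mul_zero, add_zero]
        rw [← hLext (j + 1) n (n + 2) (by omega), Finset.mul_sum]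
        refine Finset.sum_congr rfl fun k _ => ?_
        rw [show k + 1 + j = k + (j + 1) from by omega]
        ring
      rw [hS1, hS2, hS3]
    rw [hS]; ring
  have hL0 : ∀ n, L 0 n = if n = 0 then 1 else 0 := by
    intro n
    rw [← hμ n]
    exact Finset.sum_congr rfl fun k _ => by rw [Nat.add_zero]
  have hLW : ∀ j n, L j n = Wf b c j n := by
    intro j
    induction j with
    | zero => intro n; rw [hL0 n, Wf_zero]
    | succ j ih =>
      intro n
      induction n with
      | zero => rw [hstar0 j, ih 1, ih 0, Wf_rec0]
      | succ n ihn => rw [hstar j n, ih (n + 2), ih (n + 1), ihn, Wf_rec]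
  have hμL : ∀ m, μ m = L m 0 := by
    intro m
    simp only [hLdef, hP0]
    rw [Finset.sum_range_one]
    simp
  constructor
  · rw [hμL 0, hLW 0 0, Wf_zero]; simp
  · intro n hn
    obtain ⟨i, rfl⟩ : ∃ i, n = i + 1 := ⟨n - 1, by omega⟩
    rw [hμL (i + 1), hLW (i + 1) 0, Wf_succ]
    conv_rhs => rw [Finset.sum_range_succ']
    have hzero : ((2 * (i + 1) - 0 - 1).choose (2 * (i + 1) - 2 * 0) : ℝ) *
        (catalan (i + 1 - 0) : ℝ) * b ^ (i + 1 - 0) * c ^ 0 = 0 := by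
      rw [show 2 * (i + 1) - 0 - 1 = 2 * i + 1 from by omega,
        show 2 * (i + 1) - 2 * 0 = 2 * i + 2 from by omega,
        Nat.choose_eq_zero_of_lt (by omega)]
      simp
    rw [hzero, add_zero]
    refine Finset.sum_congr rfl fun k hk => ?_
    rw [Finset.mem_range] at hk
    have hki : k ≤ i := by omega
    rw [show 2 * (i + 1) - (k + 1) - 1 = 2 * i - k from by omega,
      show 2 * (i + 1) - 2 * (k + 1) = 2 * i - 2 * k from by omega,
      show i + 1 - (k + 1) = i - k from by omega]
    unfold Wt
    rw [Bal_catalan]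
    have : (((2 * i - k).choose (2 * i - 2 * k)) : ℝ) = ((0 + 2 * (i - k) + k).choose k : ℝ) := by
      rw [show 0 + 2 * (i - k) + k = 2 * i - k from by omega,
        show 2 * i - 2 * k = (2 * i - k) - k from by omega,
        Nat.choose_symm (by omega)]
    rw [this, show (0 : ℕ) + (i - k) = i - k from by omega]
end

section
/- For every natural number n, the Hankel determinant of the moment sequence satisfies det( (μ_{i+j})_{0 ≤ i,j ≤ n} ) = (b·c)^n · (b·(b+c))^{binom(n,2)}, where binom(n,2) = n(n−1)/2. -/
/-!
Let `L` be the linear functional `X^k ↦ μ_k`. For families `p_i`, `q_j` with `deg = index` and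
leading coefficient `1`, the matrix `(L(p_i q_j))` is `T H Sᵀ` with `H` the Hankel matrix and
`T`, `S` unitriangular, so it has the same determinant. Take `p = P`, for which `L(P_i) = δ_{i0}`
and `X P_{i+1} = P_{i+2} + c P_{i+1} + b X P_i`, and for `q` the monic orthogonal polynomials
`Q_j` of `L`, whose Jacobi recurrence has coefficients `α_j = 2b + c` (`α_0 = c`), `β_1 = bc`,
`β_j = b(b + c)`. The pairings `L(P_i Q_j)` and `L(X P_i Q_j)` have binomial closed forms
(`pairing`, `xPairing`), verified column by column through the two recurrences and Pascal's rule.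
The first vanishes above the diagonal, and its diagonal entries `c b^i (b + c)^(i-1)` multiply to
`(bc)^n (b(b+c))^C(n,2)`.
-/

open Polynomial Finset
open scoped Matrix

namespace LBPHankel

variable {R : Type*} [CommRing R]

noncomputable def momentFunctional (μ : ℕ → R) : R[X] →ₗ[R] R :=
  Polynomial.lsum fun k => LinearMap.id.smulRight (μ k)

lemma momentFunctional_monomial (μ : ℕ → R) (m : ℕ) (a : R) :
    momentFunctional μ (monomial m a) = a * μ m := by
  simp [momentFunctional]

lemma momentFunctional_eq_sum_range (μ : ℕ → R) {f : R[X]} {N : ℕ} (hf : f.natDegree < N) :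
    momentFunctional μ f = ∑ k ∈ range N, f.coeff k * μ k := by
  conv_lhs => rw [f.as_sum_range' N hf]
  simp only [map_sum, momentFunctional_monomial]

lemma momentFunctional_C_mul (μ : ℕ → R) (a : R) (f : R[X]) :
    momentFunctional μ (C a * f) = a * momentFunctional μ f := by
  rw [← smul_eq_C_mul, map_smul, smul_eq_mul]

lemma momentFunctional_mul (μ : ℕ → R) {f g : R[X]} {N : ℕ}
    (hf : f.natDegree < N) (hg : g.natDegree < N) :
    momentFunctional μ (f * g) =
      ∑ l : Fin N, (∑ k : Fin N, f.coeff k * μ (k + l)) * g.coeff l := by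
  conv_lhs => rw [f.as_sum_range' N hf, g.as_sum_range' N hg]
  rw [sum_mul_sum, sum_comm, map_sum,
    Fin.sum_univ_eq_sum_range (fun l => (∑ k : Fin N, f.coeff k * μ (k + l)) * g.coeff l)]
  refine sum_congr rfl fun l _ => ?_
  rw [Fin.sum_univ_eq_sum_range (fun k => f.coeff k * μ (k + l)), sum_mul, map_sum]
  refine sum_congr rfl fun k _ => ?_
  rw [monomial_mul_monomial, momentFunctional_monomial]
  ring

lemma det_of_coeff_self_eq_one {p : ℕ → R[X]} (hdeg : ∀ i, (p i).natDegree ≤ i)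
    (hlead : ∀ i, (p i).coeff i = 1) (n : ℕ) :
    (Matrix.of fun i k : Fin n => (p i).coeff k).det = 1 := by
  rw [Matrix.det_of_isLowerTriangular (Matrix.of fun i k : Fin n => (p i).coeff k)
    fun i k hik => coeff_eq_zero_of_natDegree_lt ((hdeg i).trans_lt hik)]
  exact prod_eq_one fun i _ => hlead i

theorem det_hankel_eq_det_momentFunctional_mul (μ : ℕ → R) {p q : ℕ → R[X]}
    (hp : ∀ i, (p i).natDegree ≤ i) (hp' : ∀ i, (p i).coeff i = 1)
    (hq : ∀ j, (q j).natDegree ≤ j) (hq' : ∀ j, (q j).coeff j = 1) (n : ℕ) :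
    (Matrix.of fun i j : Fin n => μ (i + j)).det =
      (Matrix.of fun i j : Fin n => momentFunctional μ (p i * q j)).det := by
  set T : Matrix (Fin n) (Fin n) R := Matrix.of fun i k => (p i).coeff k
  set S : Matrix (Fin n) (Fin n) R := Matrix.of fun j l => (q j).coeff l
  have hfactor : (Matrix.of fun i j : Fin n => momentFunctional μ (p i * q j)) =
      T * Matrix.of (fun i j : Fin n => μ (i + j)) * Sᵀ := by
    ext i j
    rw [Matrix.of_apply, momentFunctional_mul μ ((hp i).trans_lt i.2) ((hq j).trans_lt j.2)]
    simp [T, S, Matrix.mul_apply]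
  rw [hfactor, Matrix.det_mul, Matrix.det_mul, Matrix.det_transpose,
    det_of_coeff_self_eq_one hp hp', det_of_coeff_self_eq_one hq hq', one_mul, mul_one]

lemma natDegree_X_sub_C_mul_sub_le {p r : R[X]} {m : ℕ} (a : R) (hp : p.natDegree ≤ m)
    (hr : r.natDegree ≤ m + 1) : ((X - C a) * p - r).natDegree ≤ m + 1 := by
  refine (natDegree_sub_le _ _).trans (max_le (natDegree_mul_le.trans ?_) hr)
  have := natDegree_X_sub_C_le a
  omega

lemma natDegree_C_mul_X_mul_le {p : R[X]} {m : ℕ} (b : R) (hp : p.natDegree ≤ m) :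
    (C b * X * p).natDegree ≤ m + 1 := by
  refine natDegree_mul_le.trans ?_
  have := (natDegree_C_mul_le b X).trans natDegree_X_le
  omega

lemma coeff_X_sub_C_mul_sub_succ {p r : R[X]} {m : ℕ} (a : R) (hp : p.natDegree ≤ m)
    (hr : r.natDegree ≤ m) : ((X - C a) * p - r).coeff (m + 1) = p.coeff m := by
  rw [coeff_sub, sub_mul, coeff_sub, coeff_X_mul, coeff_C_mul,
    coeff_eq_zero_of_natDegree_lt (hp.trans_lt m.lt_succ_self),
    coeff_eq_zero_of_natDegree_lt (hr.trans_lt m.lt_succ_self)]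
  ring

structure IsLBPFamily (b c : R) (P : ℕ → R[X]) : Prop where
  zero : P 0 = 1
  one : P 1 = X - C c
  add_two : ∀ n, P (n + 2) = (X - C c) * P (n + 1) - C b * X * P n

namespace IsLBPFamily

variable {b c : R} {P : ℕ → R[X]}

lemma natDegree_le (hP : IsLBPFamily b c P) (n : ℕ) : (P n).natDegree ≤ n := by
  induction n using Nat.twoStepInduction with
  | zero => simp [hP.zero]
  | one => rw [hP.one]; exact natDegree_X_sub_C_le c
  | more n ih₀ ih₁ =>
    rw [hP.add_two]
    exact natDegree_X_sub_C_mul_sub_le c ih₁ (natDegree_C_mul_X_mul_le b (ih₀.trans n.le_succ))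

lemma coeff_self (hP : IsLBPFamily b c P) (n : ℕ) : (P n).coeff n = 1 := by
  induction n using Nat.twoStepInduction with
  | zero => simp [hP.zero]
  | one => simp [hP.one]
  | more n _ ih₁ =>
    rw [hP.add_two, coeff_X_sub_C_mul_sub_succ c (hP.natDegree_le (n + 1))
      (natDegree_C_mul_X_mul_le b (hP.natDegree_le n)), ih₁]

lemma X_mul_zero (hP : IsLBPFamily b c P) : X * P 0 = P 1 + C c * P 0 := by
  rw [hP.zero, hP.one]
  ring

lemma X_mul_add_one (hP : IsLBPFamily b c P) (n : ℕ) :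
    X * P (n + 1) = P (n + 2) + C c * P (n + 1) + C b * (X * P n) := by
  rw [hP.add_two]
  ring

end IsLBPFamily

noncomputable def orthogonalFamily (b c : R) : ℕ → R[X]
  | 0 => 1
  | 1 => X - C c
  | n + 2 => (X - C (2 * b + c)) * orthogonalFamily b c (n + 1)
      - C (if n = 0 then b * c else b * (b + c)) * orthogonalFamily b c n

lemma natDegree_orthogonalFamily_le (b c : R) (n : ℕ) :
    (orthogonalFamily b c n).natDegree ≤ n := by
  induction n using Nat.twoStepInduction with
  | zero => simp [orthogonalFamily]
  | one => exact natDegree_X_sub_C_le c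
  | more n ih₀ ih₁ =>
    exact natDegree_X_sub_C_mul_sub_le _ ih₁ ((natDegree_C_mul_le _ _).trans (by omega))

lemma coeff_orthogonalFamily_self (b c : R) (n : ℕ) :
    (orthogonalFamily b c n).coeff n = 1 := by
  induction n using Nat.twoStepInduction with
  | zero => simp [orthogonalFamily]
  | one => simp [orthogonalFamily]
  | more n _ ih₁ =>
    rw [orthogonalFamily, coeff_X_sub_C_mul_sub_succ _ (natDegree_orthogonalFamily_le b c (n + 1))
      ((natDegree_C_mul_le _ _).trans ((natDegree_orthogonalFamily_le b c n).trans n.le_succ)),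
      ih₁]

def pairing (b c : R) : ℕ → ℕ → R
  | 0, 0 => 1
  | 0, _ + 1 => 0
  | _ + 1, 0 => 0
  | i + 1, j + 1 => c * b ^ (i + 1) * (b + c) ^ j * i.choose j

def xPairing (b c : R) : ℕ → ℕ → R
  | i, 0 => c * b ^ i
  | i, j + 1 => c * b ^ i * (b + c) ^ j * (b * (i + 1).choose (j + 1) + c * i.choose (j + 1))

section ClosedForms

variable (b c : R)

lemma cast_choose_succ_succ (n k : ℕ) :
    ((n + 1).choose (k + 1) : R) = n.choose k + n.choose (k + 1) := by
  rw [Nat.choose_succ_succ', Nat.cast_add]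

lemma xPairing_zero_left (j : ℕ) :
    xPairing b c 0 j = pairing b c 1 j + c * pairing b c 0 j := by
  rcases j with _ | _ | j <;> simp [xPairing, pairing, Nat.choose_eq_zero_of_lt]

lemma xPairing_succ_left (i j : ℕ) :
    xPairing b c (i + 1) j =
      b * xPairing b c i j + pairing b c (i + 2) j + c * pairing b c (i + 1) j := by
  rcases j with _ | j
  · simp only [xPairing, pairing]
    ring
  · simp only [xPairing, pairing]
    linear_combination c * b ^ (i + 1) * (b + c) ^ j *
      (b * cast_choose_succ_succ (R := R) (i + 1) j + c * cast_choose_succ_succ (R := R) i j)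

lemma pairing_one_right (i : ℕ) :
    pairing b c i 1 = xPairing b c i 0 - c * pairing b c i 0 := by
  rcases i with _ | i <;> simp [xPairing, pairing]

lemma pairing_add_two_right (i j : ℕ) :
    pairing b c i (j + 2) = xPairing b c i (j + 1) - (2 * b + c) * pairing b c i (j + 1)
      - (if j = 0 then b * c else b * (b + c)) * pairing b c i j := by
  rcases i with _ | i <;> rcases j with _ | j
  · simp only [pairing, xPairing, pow_zero, mul_one, zero_add, Nat.choose_self, Nat.cast_one,
      Nat.choose_succ_self, Nat.cast_zero, mul_zero, add_zero, sub_zero, ↓reduceIte]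
    ring
  · simp [xPairing, pairing, Nat.choose_eq_zero_of_lt]
  · simp only [xPairing, pairing, if_pos]
    push_cast [Nat.choose_one_right, Nat.choose_zero_right]
    ring
  · simp only [xPairing, pairing, if_neg j.succ_ne_zero]
    linear_combination -c * b ^ (i + 1) * (b + c) ^ (j + 1) *
      (b * cast_choose_succ_succ (R := R) (i + 1) (j + 1)
        + (b + c) * cast_choose_succ_succ (R := R) i (j + 1)
        + b * cast_choose_succ_succ (R := R) i j)

lemma pairing_eq_zero_of_lt {i j : ℕ} (h : i < j) : pairing b c i j = 0 := by
  rcases i with _ | i <;> rcases j with _ | j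
  · omega
  · rfl
  · omega
  · simp [pairing, Nat.choose_eq_zero_of_lt (Nat.lt_of_add_lt_add_right h)]

lemma prod_pairing_self (n : ℕ) :
    ∏ i ∈ range (n + 1), pairing b c i i = (b * c) ^ n * (b * (b + c)) ^ n.choose 2 := by
  induction n with
  | zero => simp [pairing]
  | succ n ih =>
    rw [prod_range_succ, ih,
      (Nat.choose_succ_succ' n 1 : (n + 1).choose 2 = n.choose 1 + n.choose 2),
      Nat.choose_one_right, pairing, Nat.choose_self, Nat.cast_one, pow_add (b * (b + c)),
      mul_pow b (b + c) n]
    ring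

lemma det_pairing (n : ℕ) :
    (Matrix.of fun i j : Fin (n + 1) => pairing b c i j).det =
      (b * c) ^ n * (b * (b + c)) ^ n.choose 2 := by
  rw [Matrix.det_of_isLowerTriangular (Matrix.of fun i j : Fin (n + 1) => pairing b c i j)
    fun i j hij => pairing_eq_zero_of_lt b c hij, ← prod_pairing_self b c n,
    ← Fin.prod_univ_eq_prod_range (fun i => pairing b c i i)]
  rfl

end ClosedForms

namespace IsLBPFamily

variable {b c : R} {P : ℕ → R[X]} {μ : ℕ → R}

lemma momentFunctional_X_mul_mul (hP : IsLBPFamily b c P) {q : R[X]} {j : ℕ}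
    (hq : ∀ i, momentFunctional μ (P i * q) = pairing b c i j) (i : ℕ) :
    momentFunctional μ (X * P i * q) = xPairing b c i j := by
  induction i with
  | zero =>
    rw [hP.X_mul_zero, add_mul, mul_assoc, map_add, momentFunctional_C_mul, hq, hq,
      xPairing_zero_left]
  | succ i ih =>
    rw [hP.X_mul_add_one, add_mul, add_mul, mul_assoc (C c), mul_assoc (C b), map_add, map_add,
      momentFunctional_C_mul, momentFunctional_C_mul, hq, hq, ih, xPairing_succ_left]
    ring

lemma momentFunctional_mul_orthogonalFamily (hP : IsLBPFamily b c P)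
    (hμ : ∀ i, momentFunctional μ (P i) = if i = 0 then 1 else 0) (i j : ℕ) :
    momentFunctional μ (P i * orthogonalFamily b c j) = pairing b c i j := by
  have col₀ : ∀ i, momentFunctional μ (P i * orthogonalFamily b c 0) = pairing b c i 0 := by
    intro i
    rw [orthogonalFamily, mul_one, hμ]
    cases i <;> rfl
  induction j using Nat.twoStepInduction generalizing i with
  | zero => exact col₀ i
  | one =>
    have hsplit : P i * orthogonalFamily b c 1 =
        X * P i * orthogonalFamily b c 0 - C c * (P i * orthogonalFamily b c 0) := by
      simp only [orthogonalFamily]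
      ring
    rw [hsplit, map_sub, momentFunctional_C_mul, hP.momentFunctional_X_mul_mul col₀, col₀,
      pairing_one_right]
  | more j ih₀ ih₁ =>
    have hsplit : P i * orthogonalFamily b c (j + 2) =
        X * P i * orthogonalFamily b c (j + 1)
          - C (2 * b + c) * (P i * orthogonalFamily b c (j + 1))
          - C (if j = 0 then b * c else b * (b + c)) * (P i * orthogonalFamily b c j) := by
      rw [orthogonalFamily]
      ring
    rw [hsplit, map_sub, map_sub, momentFunctional_C_mul, momentFunctional_C_mul,
      hP.momentFunctional_X_mul_mul ih₁, ih₁, ih₀, pairing_add_two_right]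

end IsLBPFamily

end LBPHankel

open LBPHankel in
theorem lbp_moment_hankel_general
    (b c : ℝ)
    (P : ℕ → Polynomial ℝ)
    (hP0 : P 0 = 1)
    (hP1 : P 1 = Polynomial.X - Polynomial.C c)
    (hP : ∀ n, 2 ≤ n →
      P n = (Polynomial.X - Polynomial.C c) * P (n - 1)
            - Polynomial.C b * Polynomial.X * P (n - 2))
    (μ : ℕ → ℝ)
    (hμ : ∀ n, (∑ k ∈ Finset.range (n + 1), (P n).coeff k * μ k) =
      if n = 0 then 1 else 0)
    (n : ℕ) :
    Matrix.det (Matrix.of fun i j : Fin (n + 1) => μ ((i : ℕ) + (j : ℕ))) =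
      (b * c) ^ n * (b * (b + c)) ^ (n.choose 2) := by
  have hLBP : IsLBPFamily b c P := ⟨hP0, hP1, fun m => by simpa using hP (m + 2) (by omega)⟩
  have hL : ∀ i, momentFunctional μ (P i) = if i = 0 then 1 else 0 := fun i => by
    rw [momentFunctional_eq_sum_range μ (Nat.lt_succ_of_le (hLBP.natDegree_le i)), hμ]
  rw [det_hankel_eq_det_momentFunctional_mul μ hLBP.natDegree_le hLBP.coeff_self
    (natDegree_orthogonalFamily_le b c) (coeff_orthogonalFamily_self b c)]
  simp_rw [hLBP.momentFunctional_mul_orthogonalFamily hL]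
  exact det_pairing b c n

/-- The Hankel transform of the moments of the constant-coefficient Laurent
biorthogonal polynomials: `det(μ_{i+j})_{0≤i,j≤n} = (bc)^n · (b(b+c))^{C(n,2)}`. -/
theorem lbp_moment_hankel
    (b c : ℝ) (hb : b ≠ 0) (hc : c ≠ 0)
    (P : ℕ → Polynomial ℝ)
    (hP0 : P 0 = 1)
    (hP1 : P 1 = Polynomial.X - Polynomial.C c)
    (hP : ∀ n, 2 ≤ n →
      P n = (Polynomial.X - Polynomial.C c) * P (n - 1)
            - Polynomial.C b * Polynomial.X * P (n - 2))
    (μ : ℕ → ℝ)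
    (hμ : ∀ n, (∑ k ∈ Finset.range (n + 1), (P n).coeff k * μ k) =
      if n = 0 then 1 else 0)
    (n : ℕ) :
    Matrix.det (Matrix.of fun i j : Fin (n + 1) => μ ((i : ℕ) + (j : ℕ))) =
      (b * c) ^ n * (b * (b + c)) ^ (n.choose 2) :=
  lbp_moment_hankel_general b c P hP0 hP1 hP μ hμ n
end

section
/- For all natural numbers n and k, the coefficient of x^k in Q_n(x) equals the coefficient of t^n in the formal power series ((1+bt)^2 / (1+(2b+c)t+b(b+c)t^2)) · (t/(1+(2b+c)t+b(b+c)t^2))^k over ℝ. (That is, the coefficient array of the orthogonal polynomials Q_n is the Riordan array ((1+bt)^2/(1+(2b+c)t+b(b+c)t^2), t/(1+(2b+c)t+b(b+c)t^2)).) -/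
/-!
Write `D(t) = 1 + (2b+c)t + b(b+c)t²`. Including the initial conditions, the recurrence says
that `G(x, t) = ∑ₙ Qₙ(x) tⁿ` satisfies `D(t) G = x t G + (1 + bt)²`. Comparing coefficients of
`xᵏ`, the `k`-th column `Gₖ(t) = ∑ₙ [xᵏ]Qₙ tⁿ` satisfies `D G₀ = (1 + bt)²` and
`D Gₖ₊₁ = t Gₖ`, so `Gₖ = (1 + bt)² D⁻¹ (t D⁻¹)ᵏ`.
-/

open PowerSeries

section CommRing

variable {R : Type*} [CommRing R]

def coeffColumn (P : ℕ → Polynomial R) (k : ℕ) : PowerSeries R :=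
  mk fun n => (P n).coeff k

@[simp]
lemma coeff_coeffColumn (P : ℕ → Polynomial R) (k n : ℕ) :
    coeff n (coeffColumn P k) = (P n).coeff k :=
  coeff_mk _ _

lemma coeff_zero_mul_quadratic (f : PowerSeries R) (α β : R) :
    coeff 0 (f * (1 + C α * X + C β * X ^ 2)) = coeff 0 f := by
  simp

lemma coeff_one_mul_quadratic (f : PowerSeries R) (α β : R) :
    coeff 1 (f * (1 + C α * X + C β * X ^ 2)) = coeff 1 f + α * coeff 0 f := by
  simp [mul_add, coeff_mul_X_pow', ← mul_assoc, mul_comm]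

lemma coeff_add_two_mul_quadratic (f : PowerSeries R) (α β : R) (n : ℕ) :
    coeff (n + 2) (f * (1 + C α * X + C β * X ^ 2)) =
      coeff (n + 2) f + α * coeff (n + 1) f + β * coeff n f := by
  simp [mul_add, coeff_mul_X_pow', ← mul_assoc, mul_comm]

/-- Coefficientwise form of `(1 + αt + βt²) ∑ₙ Pₙ(x) tⁿ = x t ∑ₙ Pₙ(x) tⁿ + N(t)`. -/
structure ThreeTermRecurrence (α β : R) (N : PowerSeries R) (P : ℕ → Polynomial R) : Prop where
  zero : P 0 = Polynomial.C (coeff 0 N)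
  one : P 1 + Polynomial.C α * P 0 = Polynomial.X * P 0 + Polynomial.C (coeff 1 N)
  add_two : ∀ m, P (m + 2) + Polynomial.C α * P (m + 1) + Polynomial.C β * P m =
    Polynomial.X * P (m + 1) + Polynomial.C (coeff (m + 2) N)

namespace ThreeTermRecurrence

variable {α β : R} {N : PowerSeries R} {P : ℕ → Polynomial R}

lemma coeffColumn_zero_mul (hP : ThreeTermRecurrence α β N P) :
    coeffColumn P 0 * (1 + C α * X + C β * X ^ 2) = N := by
  refine ext fun n => ?_
  rcases n with _ | _ | m
  · simpa [coeff_zero_mul_quadratic] using congrArg (Polynomial.coeff · 0) hP.zero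
  · simpa [coeff_one_mul_quadratic] using congrArg (Polynomial.coeff · 0) hP.one
  · simpa [coeff_add_two_mul_quadratic] using congrArg (Polynomial.coeff · 0) (hP.add_two m)

lemma coeffColumn_succ_mul (hP : ThreeTermRecurrence α β N P) (k : ℕ) :
    coeffColumn P (k + 1) * (1 + C α * X + C β * X ^ 2) = X * coeffColumn P k := by
  refine ext fun n => ?_
  rcases n with _ | _ | m
  · simpa [coeff_zero_mul_quadratic] using congrArg (Polynomial.coeff · (k + 1)) hP.zero
  · simpa [coeff_one_mul_quadratic] using congrArg (Polynomial.coeff · (k + 1)) hP.one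
  · simpa [coeff_add_two_mul_quadratic] using congrArg (Polynomial.coeff · (k + 1)) (hP.add_two m)

end ThreeTermRecurrence

-- The factor `1 *` lets the `coeff_*_mul_quadratic` lemmas read off the coefficients.
lemma one_add_C_mul_X_sq (b : R) :
    (1 + C b * X) ^ 2 = (1 : PowerSeries R) * (1 + C (2 * b) * X + C (b ^ 2) * X ^ 2) := by
  simp only [map_mul, map_pow, map_ofNat]
  ring

lemma ThreeTermRecurrence.of_recurrence (b c : R) (Q : ℕ → Polynomial R)
    (hQ0 : Q 0 = 1)
    (hQ1 : Q 1 = Polynomial.X - Polynomial.C c)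
    (hQ2 : Q 2 = Polynomial.X ^ 2 - Polynomial.C (2 * (b + c)) * Polynomial.X
      + Polynomial.C (c * (b + c)))
    (hQ : ∀ n, 3 ≤ n → Q n = (Polynomial.X - Polynomial.C (2 * b + c)) * Q (n - 1)
      - Polynomial.C (b * (b + c)) * Q (n - 2)) :
    ThreeTermRecurrence (2 * b + c) (b * (b + c)) ((1 + C b * X) ^ 2) Q where
  zero := by simp [hQ0]
  one := by
    rw [one_add_C_mul_X_sq, coeff_one_mul_quadratic, hQ0, hQ1]
    simp
  add_two m := by
    rw [one_add_C_mul_X_sq, coeff_add_two_mul_quadratic]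
    rcases m with _ | m
    · simp only [hQ0, hQ1, hQ2, coeff_one, OfNat.ofNat_ne_zero, one_ne_zero, ↓reduceIte,
        map_add, map_mul, map_pow, map_ofNat, mul_one, mul_zero, zero_add, add_zero]
      ring
    · simp only [hQ (m + 3) (by omega), coeff_one, Nat.add_eq_zero_iff, one_ne_zero,
        OfNat.ofNat_ne_zero, and_false, ↓reduceIte, Nat.add_one_sub_one, Nat.reduceSubDiff,
        mul_zero, add_zero, map_zero]
      ring

end CommRing

theorem ThreeTermRecurrence.coeffColumn_eq {K : Type*} [Field K] {α β : K} {N : PowerSeries K}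
    {P : ℕ → Polynomial K} (hP : ThreeTermRecurrence α β N P) (k : ℕ) :
    coeffColumn P k =
      N * (1 + C α * X + C β * X ^ 2)⁻¹ * (X * (1 + C α * X + C β * X ^ 2)⁻¹) ^ k := by
  set D : PowerSeries K := 1 + C α * X + C β * X ^ 2
  have hD : constantCoeff D ≠ 0 := by simp [D]
  induction k with
  | zero => rw [pow_zero, mul_one, eq_mul_inv_iff_mul_eq hD]; exact hP.coeffColumn_zero_mul
  | succ k ih =>
    rw [show N * D⁻¹ * (X * D⁻¹) ^ (k + 1) = X * (N * D⁻¹ * (X * D⁻¹) ^ k) * D⁻¹ by ring, ← ih,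
      eq_mul_inv_iff_mul_eq hD]
    exact hP.coeffColumn_succ_mul k

theorem orth_coeff_array_riordan_general
    (b c : ℝ)
    (Q : ℕ → Polynomial ℝ)
    (hQ0 : Q 0 = 1)
    (hQ1 : Q 1 = Polynomial.X - Polynomial.C c)
    (hQ2 : Q 2 = Polynomial.X ^ 2 - Polynomial.C (2 * (b + c)) * Polynomial.X
                   + Polynomial.C (c * (b + c)))
    (hQ : ∀ n, 3 ≤ n →
      Q n = (Polynomial.X - Polynomial.C (2 * b + c)) * Q (n - 1)
            - Polynomial.C (b * (b + c)) * Q (n - 2))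
    (n k : ℕ) :
    (Q n).coeff k =
      PowerSeries.coeff (R := ℝ) n
        ((1 + PowerSeries.C (R := ℝ) b * PowerSeries.X) ^ 2 *
          (1 + PowerSeries.C (R := ℝ) (2 * b + c) * PowerSeries.X
             + PowerSeries.C (R := ℝ) (b * (b + c)) * PowerSeries.X ^ 2)⁻¹ *
          (PowerSeries.X *
            (1 + PowerSeries.C (R := ℝ) (2 * b + c) * PowerSeries.X
               + PowerSeries.C (R := ℝ) (b * (b + c)) * PowerSeries.X ^ 2)⁻¹) ^ k) := by
  rw [← (ThreeTermRecurrence.of_recurrence b c Q hQ0 hQ1 hQ2 hQ).coeffColumn_eq k,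
    coeff_coeffColumn]

/-- The coefficient array of the orthogonal polynomials `Q_n` is the Riordan
array `((1+bt)²/(1+(2b+c)t+b(b+c)t²), t/(1+(2b+c)t+b(b+c)t²))`. -/
theorem orth_coeff_array_riordan
    (b c : ℝ) (hb : b ≠ 0) (hc : c ≠ 0)
    (Q : ℕ → Polynomial ℝ)
    (hQ0 : Q 0 = 1)
    (hQ1 : Q 1 = Polynomial.X - Polynomial.C c)
    (hQ2 : Q 2 = Polynomial.X ^ 2 - Polynomial.C (2 * (b + c)) * Polynomial.X
                   + Polynomial.C (c * (b + c)))
    (hQ : ∀ n, 3 ≤ n →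
      Q n = (Polynomial.X - Polynomial.C (2 * b + c)) * Q (n - 1)
            - Polynomial.C (b * (b + c)) * Q (n - 2))
    (n k : ℕ) :
    (Q n).coeff k =
      PowerSeries.coeff (R := ℝ) n
        ((1 + PowerSeries.C (R := ℝ) b * PowerSeries.X) ^ 2 *
          (1 + PowerSeries.C (R := ℝ) (2 * b + c) * PowerSeries.X
             + PowerSeries.C (R := ℝ) (b * (b + c)) * PowerSeries.X ^ 2)⁻¹ *
          (PowerSeries.X *
            (1 + PowerSeries.C (R := ℝ) (2 * b + c) * PowerSeries.X
               + PowerSeries.C (R := ℝ) (b * (b + c)) * PowerSeries.X ^ 2)⁻¹) ^ k) :=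
  orth_coeff_array_riordan_general b c Q hQ0 hQ1 hQ2 hQ n k
end

section
/- The moments μ_n of the constant-coefficient Laurent biorthogonal polynomials P_n are also the moments of the orthogonal polynomials Q_n; precisely, for every natural number n, ∑_{k=0}^{n} ([x^k]Q_n)·μ_k equals 1 if n = 0 and equals 0 if n ≥ 1. -/
open Polynomial Finset

/-- `SS b P n = ∑_{j<n} C(n-1,j) (-b)^j P_{n-j}`. -/
private noncomputable def SS (b : ℝ) (P : ℕ → Polynomial ℝ) (n : ℕ) : Polynomial ℝ :=
  ∑ j ∈ Finset.range n, Polynomial.C (((n - 1).choose j : ℝ) * (-b) ^ j) * P (n - j)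

/-- `UU b P n = ∑_{j<n} C(n-1,j) (-b)^j P_{n-1-j}`. -/
private noncomputable def UU (b : ℝ) (P : ℕ → Polynomial ℝ) (n : ℕ) : Polynomial ℝ :=
  ∑ j ∈ Finset.range n, Polynomial.C (((n - 1).choose j : ℝ) * (-b) ^ j) * P (n - 1 - j)

private lemma SS_eq (b : ℝ) (P : ℕ → Polynomial ℝ) (m : ℕ) :
    SS b P (m + 1) = ∑ j ∈ Finset.range (m + 1),
      Polynomial.C ((m.choose j : ℝ) * (-b) ^ j) * P (m + 1 - j) := rfl

private lemma UU_eq (b : ℝ) (P : ℕ → Polynomial ℝ) (m : ℕ) :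
    UU b P (m + 1) = ∑ j ∈ Finset.range (m + 1),
      Polynomial.C ((m.choose j : ℝ) * (-b) ^ j) * P (m - j) := rfl

private lemma UU_peel (b : ℝ) (P : ℕ → Polynomial ℝ) (m : ℕ) :
    UU b P (m + 2) = (∑ i ∈ Finset.range (m + 1),
      Polynomial.C (((m + 1).choose (i + 1) : ℝ) * (-b) ^ (i + 1)) * P (m - i)) + P (m + 1) := by
  rw [UU_eq, Finset.sum_range_succ']
  congr 1
  · refine Finset.sum_congr rfl fun i _ => ?_
    rw [show m + 1 - (i + 1) = m - i by omega]
  · simp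

private lemma SS_peel (b : ℝ) (P : ℕ → Polynomial ℝ) (m : ℕ) :
    SS b P (m + 2) = (∑ i ∈ Finset.range (m + 1),
      Polynomial.C (((m + 1).choose (i + 1) : ℝ) * (-b) ^ (i + 1)) * P (m + 1 - i)) + P (m + 2) := by
  rw [SS_eq, Finset.sum_range_succ']
  congr 1
  · refine Finset.sum_congr rfl fun i _ => ?_
    rw [show m + 1 + 1 - (i + 1) = m + 1 - i by omega]
  · simp

private lemma SS_peel' (b : ℝ) (P : ℕ → Polynomial ℝ) (m : ℕ) :
    SS b P (m + 1) = (∑ i ∈ Finset.range (m + 1),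
      Polynomial.C ((m.choose (i + 1) : ℝ) * (-b) ^ (i + 1)) * P (m - i)) + P (m + 1) := by
  rw [SS_eq, Finset.sum_range_succ' _ m, Finset.sum_range_succ _ m]
  have hz : (m.choose (m + 1) : ℝ) = 0 := by exact_mod_cast Nat.choose_succ_self m
  rw [hz]
  simp only [zero_mul, map_zero, add_zero]
  congr 1
  · refine Finset.sum_congr rfl fun i _ => ?_
    rw [show m + 1 - (i + 1) = m - i by omega]
  · simp

private lemma UU_rec (b : ℝ) (P : ℕ → Polynomial ℝ) (m : ℕ) :
    UU b P (m + 2) = SS b P (m + 1) - Polynomial.C b * UU b P (m + 1) := by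
  rw [UU_peel, SS_peel', UU_eq, Finset.mul_sum, add_sub_right_comm, ← Finset.sum_sub_distrib]
  congr 1
  refine Finset.sum_congr rfl fun i _ => ?_
  rw [← mul_assoc, ← Polynomial.C_mul, ← sub_mul, ← Polynomial.C_sub]
  congr 1
  have hch : (((m + 1).choose (i + 1) : ℕ) : ℝ) = (m.choose i : ℝ) + (m.choose (i + 1) : ℝ) := by
    exact_mod_cast Nat.choose_succ_succ' m i
  rw [hch]
  ring

private lemma SS_rec (b c : ℝ) (P : ℕ → Polynomial ℝ)
    (hP : ∀ n, 2 ≤ n →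
      P n = (Polynomial.X - Polynomial.C c) * P (n - 1)
            - Polynomial.C b * Polynomial.X * P (n - 2)) (m : ℕ) :
    SS b P (m + 2) = (Polynomial.X - Polynomial.C (b + c)) * SS b P (m + 1)
      - Polynomial.C b * Polynomial.X * UU b P (m + 1) := by
  have key : ∀ j ∈ Finset.range (m + 1),
      (Polynomial.X - Polynomial.C (b + c)) *
          (Polynomial.C ((m.choose j : ℝ) * (-b) ^ j) * P (m + 1 - j))
        - Polynomial.C b * Polynomial.X *
          (Polynomial.C ((m.choose j : ℝ) * (-b) ^ j) * P (m - j))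
      = Polynomial.C ((m.choose j : ℝ) * (-b) ^ j) * P (m + 2 - j)
        - Polynomial.C b * Polynomial.C ((m.choose j : ℝ) * (-b) ^ j) * P (m + 1 - j) := by
    intro j hj
    have hj' : j ≤ m := Nat.lt_succ_iff.mp (Finset.mem_range.mp hj)
    have h2 : 2 ≤ m + 2 - j := by omega
    have e1 : m + 2 - j - 1 = m + 1 - j := by omega
    have e2 : m + 2 - j - 2 = m - j := by omega
    rw [hP (m + 2 - j) h2, e1, e2, Polynomial.C_add]
    ring
  have hRHS : (Polynomial.X - Polynomial.C (b + c)) * SS b P (m + 1)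
      - Polynomial.C b * Polynomial.X * UU b P (m + 1)
      = (∑ j ∈ Finset.range (m + 1),
          Polynomial.C ((m.choose j : ℝ) * (-b) ^ j) * P (m + 2 - j))
        - ∑ j ∈ Finset.range (m + 1),
          Polynomial.C b * Polynomial.C ((m.choose j : ℝ) * (-b) ^ j) * P (m + 1 - j) := by
    rw [SS_eq, UU_eq, Finset.mul_sum, Finset.mul_sum, ← Finset.sum_sub_distrib,
      ← Finset.sum_sub_distrib]
    exact Finset.sum_congr rfl key
  have hfirst : (∑ j ∈ Finset.range (m + 1),
      Polynomial.C ((m.choose j : ℝ) * (-b) ^ j) * P (m + 2 - j))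
      = (∑ i ∈ Finset.range (m + 1),
          Polynomial.C ((m.choose (i + 1) : ℝ) * (-b) ^ (i + 1)) * P (m + 1 - i)) + P (m + 2) := by
    rw [Finset.sum_range_succ' _ m, Finset.sum_range_succ _ m]
    have hz : (m.choose (m + 1) : ℝ) = 0 := by exact_mod_cast Nat.choose_succ_self m
    rw [hz]
    simp only [zero_mul, map_zero, add_zero]
    congr 1
    · refine Finset.sum_congr rfl fun i _ => ?_
      rw [show m + 2 - (i + 1) = m + 1 - i by omega]
    · simp
  rw [hRHS, hfirst, SS_peel, add_sub_right_comm, ← Finset.sum_sub_distrib]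
  congr 1
  refine Finset.sum_congr rfl fun i _ => ?_
  rw [← Polynomial.C_mul, ← sub_mul, ← Polynomial.C_sub]
  congr 1
  have hch : (((m + 1).choose (i + 1) : ℕ) : ℝ) = (m.choose i : ℝ) + (m.choose (i + 1) : ℝ) := by
    exact_mod_cast Nat.choose_succ_succ' m i
  rw [hch]
  ring

private lemma SQ (b c : ℝ) (P Q : ℕ → Polynomial ℝ)
    (hP0 : P 0 = 1)
    (hP1 : P 1 = Polynomial.X - Polynomial.C c)
    (hP : ∀ n, 2 ≤ n →
      P n = (Polynomial.X - Polynomial.C c) * P (n - 1)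
            - Polynomial.C b * Polynomial.X * P (n - 2))
    (hQ1 : Q 1 = Polynomial.X - Polynomial.C c)
    (hQ2 : Q 2 = Polynomial.X ^ 2 - Polynomial.C (2 * (b + c)) * Polynomial.X
                   + Polynomial.C (c * (b + c)))
    (hQ : ∀ n, 3 ≤ n →
      Q n = (Polynomial.X - Polynomial.C (2 * b + c)) * Q (n - 1)
            - Polynomial.C (b * (b + c)) * Q (n - 2)) :
    ∀ n, Q (n + 1) = SS b P (n + 1) := by
  intro n
  induction n using Nat.strong_induction_on with
  | _ n ih =>
    rcases n with _ | _ | k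
    · rw [SS_eq]
      simp [hQ1, hP1]
    · have hS1 : SS b P 1 = P 1 := by rw [SS_eq]; simp
      have hU1 : UU b P 1 = P 0 := by rw [UU_eq]; simp
      show Q 2 = SS b P (0 + 2)
      rw [SS_rec b c P hP 0, hS1, hU1, hP1, hP0, hQ2,
        show (2 * (b + c) : ℝ) = (b + c) + (b + c) by ring]
      simp only [Polynomial.C_add, Polynomial.C_mul]
      ring
    · show Q (k + 3) = SS b P (k + 3)
      have ih2 : Q (k + 3 - 1) = SS b P (k + 2) := ih (k + 1) (by omega)
      have ih1 : Q (k + 3 - 2) = SS b P (k + 1) := ih k (by omega)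
      rw [hQ (k + 3) (by omega), ih2, ih1]
      have A1 : SS b P (k + 3) = (Polynomial.X - Polynomial.C (b + c)) * SS b P (k + 2)
          - Polynomial.C b * Polynomial.X * UU b P (k + 2) := SS_rec b c P hP (k + 1)
      have A0 : SS b P (k + 2) = (Polynomial.X - Polynomial.C (b + c)) * SS b P (k + 1)
          - Polynomial.C b * Polynomial.X * UU b P (k + 1) := SS_rec b c P hP k
      have B0 : UU b P (k + 2) = SS b P (k + 1) - Polynomial.C b * UU b P (k + 1) :=
        UU_rec b P k
      have c1 : Polynomial.C (2 * b + c) = Polynomial.C b + Polynomial.C (b + c) := by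
        rw [show (2 * b + c : ℝ) = b + (b + c) by ring, Polynomial.C_add]
      have c2 : Polynomial.C (b * (b + c)) = Polynomial.C b * Polynomial.C (b + c) :=
        Polynomial.C_mul
      rw [c1, c2]
      linear_combination (-1 : Polynomial ℝ) * A1
        + Polynomial.C b * Polynomial.X * B0 - Polynomial.C b * A0

private lemma degP (b c : ℝ) (P : ℕ → Polynomial ℝ)
    (hP0 : P 0 = 1)
    (hP1 : P 1 = Polynomial.X - Polynomial.C c)
    (hP : ∀ n, 2 ≤ n →
      P n = (Polynomial.X - Polynomial.C c) * P (n - 1)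
            - Polynomial.C b * Polynomial.X * P (n - 2)) :
    ∀ m, (P m).natDegree ≤ m := by
  intro m
  induction m using Nat.strong_induction_on with
  | _ m ih =>
    rcases m with _ | _ | k
    · simp [hP0]
    · simp [hP1]
    · rw [hP (k + 2) (by omega)]
      refine le_trans (Polynomial.natDegree_sub_le _ _) ?_
      rw [max_le_iff]
      constructor
      · refine le_trans (Polynomial.natDegree_mul_le) ?_
        have h1 : (Polynomial.X - Polynomial.C c : Polynomial ℝ).natDegree ≤ 1 := by
          simp [Polynomial.natDegree_X_sub_C]
        have h2 := ih (k + 2 - 1) (by omega)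
        omega
      · refine le_trans (Polynomial.natDegree_mul_le) ?_
        have h1 : (Polynomial.C b * Polynomial.X : Polynomial ℝ).natDegree ≤ 1 := by
          refine le_trans (Polynomial.natDegree_mul_le) ?_
          simp
        have h2 := ih (k + 2 - 2) (by omega)
        omega

/-- The moments `μ_n` of the constant-coefficient Laurent biorthogonal
polynomials `P_n` are also the moments of the orthogonal polynomials `Q_n`. -/
theorem lbp_moments_are_orth_moments
    (b c : ℝ) (hb : b ≠ 0) (hc : c ≠ 0)
    (P : ℕ → Polynomial ℝ)
    (hP0 : P 0 = 1)
    (hP1 : P 1 = Polynomial.X - Polynomial.C c)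
    (hP : ∀ n, 2 ≤ n →
      P n = (Polynomial.X - Polynomial.C c) * P (n - 1)
            - Polynomial.C b * Polynomial.X * P (n - 2))
    (μ : ℕ → ℝ)
    (hμ : ∀ n, (∑ k ∈ Finset.range (n + 1), (P n).coeff k * μ k) =
      if n = 0 then 1 else 0)
    (Q : ℕ → Polynomial ℝ)
    (hQ0 : Q 0 = 1)
    (hQ1 : Q 1 = Polynomial.X - Polynomial.C c)
    (hQ2 : Q 2 = Polynomial.X ^ 2 - Polynomial.C (2 * (b + c)) * Polynomial.X
                   + Polynomial.C (c * (b + c)))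
    (hQ : ∀ n, 3 ≤ n →
      Q n = (Polynomial.X - Polynomial.C (2 * b + c)) * Q (n - 1)
            - Polynomial.C (b * (b + c)) * Q (n - 2))
    (n : ℕ) :
    (∑ k ∈ Finset.range (n + 1), (Q n).coeff k * μ k) =
      if n = 0 then 1 else 0 := by
  have hdeg := degP b c P hP0 hP1 hP
  have key : ∀ m n : ℕ, m ≤ n →
      (∑ k ∈ Finset.range (n + 1), (P m).coeff k * μ k) = if m = 0 then 1 else 0 := by
    intro m n hmn
    rw [← hμ m]
    symm
    apply Finset.sum_subset
    · exact Finset.range_subset_range.mpr (by omega)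
    · intro k hk hk2
      have hkm : m < k := by
        simp only [Finset.mem_range] at hk hk2; omega
      rw [Polynomial.coeff_eq_zero_of_natDegree_lt (lt_of_le_of_lt (hdeg m) hkm), zero_mul]
  rcases n with _ | n
  · rw [hQ0, ← hP0]
    exact hμ 0
  · have hQS : Q (n + 1) = SS b P (n + 1) := SQ b c P Q hP0 hP1 hP hQ1 hQ2 hQ n
    rw [hQS, if_neg (Nat.succ_ne_zero n), SS_eq]
    have step1 : ∀ k, (∑ j ∈ Finset.range (n + 1),
        Polynomial.C ((n.choose j : ℝ) * (-b) ^ j) * P (n + 1 - j)).coeff k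
        = ∑ j ∈ Finset.range (n + 1),
            ((n.choose j : ℝ) * (-b) ^ j) * (P (n + 1 - j)).coeff k := by
      intro k
      rw [Polynomial.finset_sum_coeff]
      exact Finset.sum_congr rfl fun j _ => Polynomial.coeff_C_mul _
    calc (∑ k ∈ Finset.range (n + 1 + 1), (∑ j ∈ Finset.range (n + 1),
            Polynomial.C ((n.choose j : ℝ) * (-b) ^ j) * P (n + 1 - j)).coeff k * μ k)
        = ∑ k ∈ Finset.range (n + 1 + 1), ∑ j ∈ Finset.range (n + 1),
            ((n.choose j : ℝ) * (-b) ^ j) * ((P (n + 1 - j)).coeff k * μ k) := by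
          refine Finset.sum_congr rfl fun k _ => ?_
          rw [step1 k, Finset.sum_mul]
          exact Finset.sum_congr rfl fun j _ => by ring
      _ = ∑ j ∈ Finset.range (n + 1), ((n.choose j : ℝ) * (-b) ^ j) *
            ∑ k ∈ Finset.range (n + 1 + 1), (P (n + 1 - j)).coeff k * μ k := by
          rw [Finset.sum_comm]
          exact Finset.sum_congr rfl fun j _ => (Finset.mul_sum _ _ _).symm
      _ = 0 := by
          refine Finset.sum_eq_zero fun j hj => ?_
          have hj' := Finset.mem_range.mp hj
          rw [key (n + 1 - j) (n + 1) (by omega), if_neg (by omega), mul_zero]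
end

section
/- Let (ν_{n,k})_{0 ≤ k ≤ n} be the entries of the inverse of the coefficient matrix of the P_n, i.e., the unique lower-triangular family of reals with ∑_{m=k}^{n} ([x^m]P_n)·ν_{m,k} = 1 if n = k and = 0 otherwise. Then for all n ≥ 1 and 0 ≤ k ≤ n, ν_{n,k} = (k/n)·∑_{j=0}^{n−k} binom(n,j)·binom(2n−k−j−1, n−k−j)·c^j·b^{n−k−j} + (c(k+1)/n)·∑_{j=0}^{n−k−1} binom(n,j)·binom(2n−k−j−2, n−k−j−1)·c^j·b^{n−k−j−1}. -/
open PowerSeries Finset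
namespace LBPaux
noncomputable section
variable (b c : ℝ)

def U : ℝ⟦X⟧ := rescale b (mk 1)
def A : ℝ⟦X⟧ := 1 + PowerSeries.C (R := ℝ) c * X

lemma hU : (1 - PowerSeries.C (R := ℝ) b * X) * U b = 1 := by
  have h := mk_one_mul_one_sub_eq_one (S := ℝ)
  have h2 := congrArg (rescale b) h
  rw [map_mul, map_sub, map_one, rescale_X] at h2
  rw [U, mul_comm]
  exact h2

lemma coeff_U (i : ℕ) : coeff (R := ℝ) i (U b) = b ^ i := by
  simp [U, coeff_rescale]

lemma coeff_U_pow (n i : ℕ) : coeff (R := ℝ) i (U b ^ (n+1)) = (Nat.choose (n + i) n : ℝ) * b ^ i := by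
  have : U b ^ (n+1) = rescale b ((mk 1 : ℝ⟦X⟧) ^ (n+1)) := by rw [map_pow]; rfl
  rw [this, mk_one_pow_eq_mk_choose_add, coeff_rescale, coeff_mk]
  ring

lemma coeff_A_pow (n j : ℕ) : coeff (R := ℝ) j (A c ^ n) = (Nat.choose n j : ℝ) * c ^ j := by
  induction n generalizing j with
  | zero =>
    cases j with
    | zero => simp
    | succ j => simp [Nat.choose_eq_zero_of_lt (Nat.succ_pos j)]
  | succ n ih =>
    have : A c ^ (n+1) = A c ^ n + PowerSeries.C (R := ℝ) c * (X * A c ^ n) := by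
      rw [pow_succ, A]; ring
    rw [this, map_add, coeff_C_mul]
    cases j with
    | zero => simp [ih, coeff_zero_X_mul]
    | succ j =>
      rw [coeff_succ_X_mul, ih, ih, Nat.choose_succ_succ n j]
      push_cast
      ring

lemma dCX : d⁄dX ℝ (PowerSeries.C (R := ℝ) b * X) = PowerSeries.C (R := ℝ) b := by
  rw [Derivation.leibniz]
  simp [smul_eq_mul]

lemma hDU : d⁄dX ℝ (U b) = PowerSeries.C (R := ℝ) b * (U b)^2 := by
  have h := congrArg (d⁄dX ℝ) (hU b)
  rw [Derivation.leibniz] at h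
  simp only [map_sub, map_mul, derivative_X, derivative_C, map_one, smul_eq_mul,
    Derivation.map_one_eq_zero, mul_zero, zero_mul, sub_zero, mul_one, zero_sub, dCX] at h
  linear_combination (U b) * h - (d⁄dX ℝ (U b)) * hU b

lemma dA : d⁄dX ℝ (A c) = PowerSeries.C (R := ℝ) c := by
  rw [A, map_add, dCX, Derivation.map_one_eq_zero, zero_add]

def G (n : ℕ) : ℝ⟦X⟧ := A c ^ n * U b ^ n

lemma derivative_G (s : ℕ) :
    d⁄dX ℝ (G b c (s+1)) =
      PowerSeries.C (R := ℝ) (((s:ℝ)+1) * (b+c)) * (A c ^ s * U b ^ (s+2)) := by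
  have hC : PowerSeries.C (R := ℝ) (((s:ℝ)+1) * (b+c)) =
      ((s+1 : ℕ) : ℝ⟦X⟧) * (PowerSeries.C (R := ℝ) b + PowerSeries.C (R := ℝ) c) := by
    rw [map_mul, map_add]
    congr 1
    rw [← map_natCast (PowerSeries.C (R := ℝ)) (s+1)]
    push_cast
    rw [← map_add]
    norm_num
  rw [G, Derivation.leibniz, Derivation.leibniz_pow, Derivation.leibniz_pow, hDU, dA, hC]
  simp only [smul_eq_mul, nsmul_eq_mul, Nat.add_sub_cancel, A]
  linear_combination (-((s+1:ℕ) : ℝ⟦X⟧) * PowerSeries.C (R := ℝ) c * (1 + PowerSeries.C (R := ℝ) c * X) ^ s * U b ^ (s+1)) * hU b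

lemma weighted (s m : ℕ) :
    (m:ℝ) * coeff (R := ℝ) m (G b c (s+1)) =
      ((s:ℝ)+1) * (b+c) * coeff (R := ℝ) m (X * (A c ^ s * U b ^ (s+2))) := by
  cases m with
  | zero => simp
  | succ m =>
    rw [coeff_succ_X_mul]
    have h := coeff_derivative (G b c (s+1)) m
    rw [derivative_G, coeff_C_mul] at h
    push_cast
    linarith [h]

def Q : ℝ⟦X⟧ := A c * (1 - PowerSeries.C (R := ℝ) b * X) - (PowerSeries.C (R := ℝ) b + PowerSeries.C (R := ℝ) c) * X

/-- `Hs b c s` is `H (s+1)` where `H n = G n - (b+c) X A^(n-1) U^(n+1)`. -/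
def Hs (s : ℕ) : ℝ⟦X⟧ := A c ^ s * U b ^ (s+2) * Q b c

lemma hHs (s : ℕ) : G b c (s+1) =
    Hs b c s + (PowerSeries.C (R := ℝ) b + PowerSeries.C (R := ℝ) c) * (X * (A c ^ s * U b ^ (s+2))) := by
  rw [G, Hs, Q]
  linear_combination (-(A c ^ (s+1) * U b ^ (s+1))) * hU b

lemma coeff_Hs (s m : ℕ) : coeff (R := ℝ) m (Hs b c s) =
    coeff (R := ℝ) m (G b c (s+1)) - (b + c) * coeff (R := ℝ) m (X * (A c ^ s * U b ^ (s+2))) := by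
  rw [hHs b c s, map_add, ← map_add (PowerSeries.C (R := ℝ)), coeff_C_mul]
  ring

lemma coeff_Hs_top (s : ℕ) : coeff (R := ℝ) (s+1) (Hs b c s) = 0 := by
  have h := weighted b c s (s+1)
  have hs : ((s:ℝ)+1) ≠ 0 := by positivity
  rw [coeff_Hs]
  push_cast at h
  rw [mul_assoc] at h
  rw [mul_left_cancel₀ hs h]
  ring

lemma L7 (s : ℕ) : (1 - PowerSeries.C (R := ℝ) b * X) * Hs b c (s+1) = A c * Hs b c s := by
  rw [Hs, Hs]
  linear_combination (A c ^ (s+1) * U b ^ (s+2) * Q b c) * hU b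

lemma UAH (s : ℕ) : U b * (A c * Hs b c s) = Hs b c (s+1) := by
  rw [Hs, Hs]; ring

/-- the closed-form inverse-matrix entries -/
def F (n k : ℕ) : ℝ :=
  if n = 0 then (if k = 0 then 1 else 0)
  else if k ≤ n then
    ((k:ℝ)/(n:ℝ)) * coeff (R := ℝ) (n-k) (G b c n)
      + (c*((k:ℝ)+1)/(n:ℝ)) * coeff (R := ℝ) (n-k) (X * G b c n)
  else 0

lemma F_eq_coeff (s k : ℕ) (hk : k ≤ s+1) :
    F b c (s+1) k = coeff (R := ℝ) (s+1-k) (A c * Hs b c s) := by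
  have hn : ((s:ℝ)+1) ≠ 0 := by positivity
  have hAH : A c * Hs b c s = Hs b c s + PowerSeries.C (R := ℝ) c * (X * Hs b c s) := by
    rw [A]; ring
  have hXG : X * G b c (s+1) = X * Hs b c s
      + (PowerSeries.C (R := ℝ) b + PowerSeries.C (R := ℝ) c) * (X * (X * (A c ^ s * U b ^ (s+2)))) := by
    rw [hHs b c s]; ring
  have h1 : (k:ℝ) * coeff (R := ℝ) (s+1-k) (G b c (s+1)) = ((s:ℝ)+1) * coeff (R := ℝ) (s+1-k) (Hs b c s) := by
    have hw := weighted b c s (s+1-k)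
    have hcast : ((s+1-k : ℕ) : ℝ) = (s:ℝ) + 1 - (k:ℝ) := by
      push_cast [Nat.cast_sub hk]; ring
    rw [coeff_Hs]
    rw [hcast] at hw
    linear_combination -hw
  have h2 : ((k:ℝ)+1) * coeff (R := ℝ) (s+1-k) (X * G b c (s+1))
      = ((s:ℝ)+1) * coeff (R := ℝ) (s+1-k) (X * Hs b c s) := by
    rcases Nat.eq_zero_or_eq_succ_pred (s+1-k) with h0 | hsucc
    · rw [h0]
      simp
    · set m := s + 1 - k with hm
      have hks : k ≤ s := by omega
      have hmm : m = (s - k) + 1 := by omega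
      rw [hmm, coeff_succ_X_mul, coeff_succ_X_mul]
      have hw := weighted b c s (s-k)
      have hcast : ((s-k : ℕ) : ℝ) = (s:ℝ) - (k:ℝ) := by
        push_cast [Nat.cast_sub hks]; ring
      rw [hcast] at hw
      rw [coeff_Hs]
      linear_combination -hw
  have hFd : F b c (s+1) k = ((k:ℝ)/((s:ℝ)+1)) * coeff (R := ℝ) (s+1-k) (G b c (s+1))
      + (c*((k:ℝ)+1)/((s:ℝ)+1)) * coeff (R := ℝ) (s+1-k) (X * G b c (s+1)) := by
    rw [F]
    simp only [Nat.succ_ne_zero, if_false, hk, if_true]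
    push_cast
    ring
  rw [hFd, hAH, map_add, coeff_C_mul]
  field_simp
  linear_combination h1 + c * h2

lemma coeff_zero_G (n : ℕ) : coeff (R := ℝ) 0 (G b c n) = 1 := by
  rw [G, coeff_zero_eq_constantCoeff, map_mul, map_pow, map_pow]
  have hA : constantCoeff (R := ℝ) (A c) = 1 := by simp [A]
  have hUc : constantCoeff (R := ℝ) (U b) = 1 := by
    rw [← coeff_zero_eq_constantCoeff, coeff_U]
    norm_num
  rw [hA, hUc]
  norm_num

lemma F_diag (n : ℕ) : F b c n n = 1 := by
  cases n with
  | zero => simp [F]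
  | succ s =>
    rw [F]
    simp only [Nat.succ_ne_zero, if_false, le_refl, if_true, Nat.sub_self]
    rw [coeff_zero_G, coeff_zero_X_mul]
    have : ((s:ℝ)+1) ≠ 0 := by positivity
    push_cast
    field_simp
    ring

lemma F_zero_of_lt (n k : ℕ) (h : n < k) : F b c n k = 0 := by
  rw [F]
  split_ifs with h0 h2 h3
  · exfalso; omega
  · rfl
  · exfalso; omega
  · rfl

lemma F10 : F b c 1 0 = c := by
  have h1 : coeff (R := ℝ) (1-0) (X * G b c 1) = 1 := by
    rw [show (1-0:ℕ) = 0 + 1 from rfl, coeff_succ_X_mul, coeff_zero_G]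
  rw [F, if_neg (by omega : ¬(1:ℕ) = 0), if_pos (by omega : (0:ℕ) ≤ 1), h1]
  norm_num

/-- the local recurrence (I) -/
lemma Frec (n : ℕ) (hn : 1 ≤ n) (j : ℕ) (hj : 1 ≤ j) :
    F b c n j = b * F b c n (j+1) + F b c (n-1) (j-1) + c * F b c (n-1) j := by
  rcases lt_trichotomy j n with hlt | heq | hgt
  · -- main case : 1 ≤ j < n, so n = s+2
    obtain ⟨s, rfl⟩ : ∃ s, n = s + 2 := ⟨n - 2, by omega⟩
    have hφψ : (1 - PowerSeries.C (R := ℝ) b * X) * (A c * Hs b c (s+1))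
        = (A c * Hs b c s) + PowerSeries.C (R := ℝ) c * (X * (A c * Hs b c s)) := by
      have h7 := L7 b c s
      calc (1 - PowerSeries.C (R := ℝ) b * X) * (A c * Hs b c (s+1))
          = A c * ((1 - PowerSeries.C (R := ℝ) b * X) * Hs b c (s+1)) := by ring
        _ = A c * (A c * Hs b c s) := by rw [h7]
        _ = (A c * Hs b c s) + PowerSeries.C (R := ℝ) c * (X * (A c * Hs b c s)) := by rw [A]; ring
    -- m = n - j = s + 2 - j ≥ 1
    obtain ⟨m, hm⟩ : ∃ m, s + 2 - j = m + 1 := ⟨s + 1 - j, by omega⟩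
    have e1 : F b c (s+2) j = coeff (R := ℝ) (m+1) (A c * Hs b c (s+1)) := by
      rw [F_eq_coeff b c (s+1) j (by omega), show s+1+1-j = m+1 from by omega]
    have e2 : F b c (s+2) (j+1) = coeff (R := ℝ) m (A c * Hs b c (s+1)) := by
      rw [F_eq_coeff b c (s+1) (j+1) (by omega), show s+1+1-(j+1) = m from by omega]
    have e3 : F b c (s+1) (j-1) = coeff (R := ℝ) (m+1) (A c * Hs b c s) := by
      rw [F_eq_coeff b c s (j-1) (by omega), show s+1-(j-1) = m+1 from by omega]
    have e4 : F b c (s+1) j = coeff (R := ℝ) m (A c * Hs b c s) := by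
      rw [F_eq_coeff b c s j (by omega), show s+1-j = m from by omega]
    have hc := congrArg (coeff (R := ℝ) (m+1)) hφψ
    have hexp : (1 - PowerSeries.C (R := ℝ) b * X) * (A c * Hs b c (s+1))
        = (A c * Hs b c (s+1)) - PowerSeries.C (R := ℝ) b * (X * (A c * Hs b c (s+1))) := by ring
    rw [hexp, map_sub, map_add, coeff_C_mul, coeff_C_mul, coeff_succ_X_mul,
      coeff_succ_X_mul] at hc
    show F b c (s+2) j = b * F b c (s+2) (j+1) + F b c (s+2-1) (j-1) + c * F b c (s+2-1) j
    norm_num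
    rw [e1, e2, e3, e4]
    linarith [hc]
  · -- j = n
    subst heq
    rw [F_diag, F_zero_of_lt b c j (j+1) (by omega), F_zero_of_lt b c (j-1) j (by omega)]
    have : F b c (j-1) (j-1) = 1 := F_diag b c (j-1)
    rw [this]
    ring
  · -- j > n
    rw [F_zero_of_lt b c n j hgt, F_zero_of_lt b c n (j+1) (by omega),
      F_zero_of_lt b c (n-1) (j-1) (by omega), F_zero_of_lt b c (n-1) j (by omega)]
    ring

/-- boundary identity (II) -/
lemma Fzerocol (s : ℕ) : F b c (s+1) 0 = c * ∑ i ∈ range (s+1), b^i * F b c s i := by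
  cases s with
  | zero =>
    rw [F10]
    simp [F_diag]
  | succ t =>
    have hL : F b c (t+2) 0 = coeff (R := ℝ) (t+2) (A c * Hs b c (t+1)) := by
      rw [F_eq_coeff b c (t+1) 0 (by omega)]
      norm_num
    have hsplit : A c * Hs b c (t+1) = Hs b c (t+1) + PowerSeries.C (R := ℝ) c * (X * Hs b c (t+1)) := by
      rw [A]; ring
    have hL2 : F b c (t+2) 0 = c * coeff (R := ℝ) (t+1) (Hs b c (t+1)) := by
      rw [hL, hsplit, map_add, coeff_C_mul, coeff_Hs_top, coeff_succ_X_mul]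
      ring
    have hR : ∑ i ∈ range (t+2), b^i * F b c (t+1) i = coeff (R := ℝ) (t+1) (Hs b c (t+1)) := by
      rw [← UAH b c t, coeff_mul, Finset.Nat.sum_antidiagonal_eq_sum_range_succ_mk]
      refine Finset.sum_congr rfl fun i hi => ?_
      rw [coeff_U, F_eq_coeff b c t i (by simp at hi; omega)]
    rw [hL2, hR]

/-- expansion identity (★) -/
lemma Fstar (n : ℕ) (hn : 1 ≤ n) : ∀ j, 1 ≤ j →
    F b c n j = (∑ i ∈ Icc (j-1) (n-1), b^(i-(j-1)) * F b c (n-1) i)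
      + c * ∑ i ∈ Icc j (n-1), b^(i-j) * F b c (n-1) i := by
  have hzero : ∀ j, 1 ≤ j → n < j →
      F b c n j = (∑ i ∈ Icc (j-1) (n-1), b^(i-(j-1)) * F b c (n-1) i)
        + c * ∑ i ∈ Icc j (n-1), b^(i-j) * F b c (n-1) i := by
    intro j hj hlt
    rw [F_zero_of_lt b c n j hlt, Finset.Icc_eq_empty (by omega : ¬ (j-1 ≤ n-1)),
      Finset.Icc_eq_empty (by omega : ¬ (j ≤ n-1))]
    simp
  suffices h : ∀ d j, 1 ≤ j → n + 1 ≤ j + d →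
      F b c n j = (∑ i ∈ Icc (j-1) (n-1), b^(i-(j-1)) * F b c (n-1) i)
        + c * ∑ i ∈ Icc j (n-1), b^(i-j) * F b c (n-1) i by
    intro j hj
    exact h (n+1) j hj (by omega)
  intro d
  induction d with
  | zero => intro j hj hle; exact hzero j hj (by omega)
  | succ d ih =>
    intro j hj hle
    rcases lt_trichotomy j n with hlt | heq | hgt
    · -- main case
      have hIH := ih (j+1) (by omega) (by omega)
      simp only [Nat.add_sub_cancel] at hIH
      have h1 : (∑ i ∈ Icc (j-1) (n-1), b^(i-(j-1)) * F b c (n-1) i)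
          = F b c (n-1) (j-1) + b * ∑ i ∈ Icc j (n-1), b^(i-j) * F b c (n-1) i := by
        have hins : Icc (j-1) (n-1) = insert (j-1) (Icc j (n-1)) := by
          ext x; simp only [Finset.mem_Icc, Finset.mem_insert]; omega
        rw [hins, Finset.sum_insert (by simp only [Finset.mem_Icc]; omega)]
        rw [Nat.sub_self, pow_zero, one_mul, Finset.mul_sum]
        congr 1
        refine Finset.sum_congr rfl fun i hi => ?_
        simp only [Finset.mem_Icc] at hi
        rw [show i - (j-1) = (i-j) + 1 from by omega, pow_succ]
        ring
      have h2 : (∑ i ∈ Icc j (n-1), b^(i-j) * F b c (n-1) i)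
          = F b c (n-1) j + b * ∑ i ∈ Icc (j+1) (n-1), b^(i-(j+1)) * F b c (n-1) i := by
        have hins : Icc j (n-1) = insert j (Icc (j+1) (n-1)) := by
          ext x; simp only [Finset.mem_Icc, Finset.mem_insert]; omega
        rw [hins, Finset.sum_insert (by simp only [Finset.mem_Icc]; omega)]
        rw [Nat.sub_self, pow_zero, one_mul, Finset.mul_sum]
        congr 1
        refine Finset.sum_congr rfl fun i hi => ?_
        simp only [Finset.mem_Icc] at hi
        rw [show i - j = (i-(j+1)) + 1 from by omega, pow_succ]
        ring
      rw [Frec b c n hn j hj, hIH, h1, h2]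
      ring
    · -- j = n
      subst heq
      rw [F_diag, Finset.Icc_eq_empty (by omega : ¬ (j ≤ j-1))]
      have hsing : Icc (j-1) (j-1) = {j-1} := Finset.Icc_self (j-1)
      rw [hsing, Finset.sum_singleton, Nat.sub_self, pow_zero, one_mul, F_diag]
      simp
    · exact hzero j hj hgt

/-- the swap helper -/
lemma swaphelper (a : ℕ → ℝ) (s w : ℕ)
    (ha : ∀ t, (∑ i ∈ range (s+1), a i * F b c i t) = if s = t then 1 else 0) :
    ∑ i ∈ range (s+1), a i * ∑ t ∈ Icc w i, b^(t-w) * F b c i t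
      = if w ≤ s then b^(s-w) else 0 := by
  have hstep : ∀ i ∈ range (s+1), a i * ∑ t ∈ Icc w i, b^(t-w) * F b c i t
      = ∑ t ∈ Icc w s, b^(t-w) * (a i * F b c i t) := by
    intro i hi
    simp only [Finset.mem_range] at hi
    rw [Finset.sum_subset (Finset.Icc_subset_Icc_right (by omega : i ≤ s))
      (fun t ht hnt => ?_), Finset.mul_sum]
    · refine Finset.sum_congr rfl fun t ht => by ring
    · simp only [Finset.mem_Icc] at ht hnt
      rw [F_zero_of_lt b c i t (by omega)]
      ring
  rw [Finset.sum_congr rfl hstep, Finset.sum_comm]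
  have : ∀ t ∈ Icc w s, (∑ i ∈ range (s+1), b^(t-w) * (a i * F b c i t))
      = if s = t then b^(t-w) else 0 := by
    intro t ht
    rw [← Finset.mul_sum, ha t]
    split_ifs <;> ring
  rw [Finset.sum_congr rfl this, Finset.sum_ite_eq (Icc w s) s (fun t => b^(t-w))]
  by_cases hws : w ≤ s
  · rw [if_pos (by simp only [Finset.mem_Icc]; omega)]
    rw [if_pos hws]
  · rw [if_neg (by simp only [Finset.mem_Icc]; omega), if_neg hws]

lemma Tval (a : ℕ → ℝ) (s k : ℕ)
    (ha : ∀ t, (∑ i ∈ range (s+1), a i * F b c i t) = if s = t then 1 else 0) :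
    ∑ i ∈ range (s+1), a i * F b c (i+1) k
      = (if 1 ≤ k ∧ k ≤ s+1 then b^(s+1-k) else 0) + c * (if k ≤ s then b^(s-k) else 0) := by
  cases k with
  | zero =>
    rw [if_neg (by omega), if_pos (by omega)]
    have hstep : ∀ i ∈ range (s+1), a i * F b c (i+1) 0
        = c * (a i * ∑ t ∈ Icc 0 i, b^(t-0) * F b c i t) := by
      intro i hi
      rw [Fzerocol b c i]
      have : ∑ t ∈ Icc 0 i, b^(t-0) * F b c i t = ∑ t ∈ range (i+1), b^t * F b c i t := by
        rw [Finset.range_eq_Ico, ← Finset.Ico_add_one_right_eq_Icc]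
        exact Finset.sum_congr rfl fun t _ => by rw [Nat.sub_zero]
      rw [this]
      ring
    rw [Finset.sum_congr rfl hstep, ← Finset.mul_sum, swaphelper b c a s 0 ha]
    rw [if_pos (by omega), zero_add]
  | succ k' =>
    have hstep : ∀ i ∈ range (s+1), a i * F b c (i+1) (k'+1)
        = a i * ∑ t ∈ Icc k' i, b^(t-k') * F b c i t
          + c * (a i * ∑ t ∈ Icc (k'+1) i, b^(t-(k'+1)) * F b c i t) := by
      intro i hi
      rw [Fstar b c (i+1) (by omega) (k'+1) (by omega)]
      simp only [Nat.add_sub_cancel]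
      ring
    rw [Finset.sum_congr rfl hstep, Finset.sum_add_distrib, ← Finset.mul_sum,
      swaphelper b c a s k' ha, swaphelper b c a s (k'+1) ha]
    congr 1
    by_cases h : k' ≤ s
    · rw [if_pos h, if_pos (by constructor <;> omega), show s+1-(k'+1) = s - k' from by omega]
    · rw [if_neg h, if_neg (by omega)]

lemma coeff_G (s m : ℕ) : coeff (R := ℝ) m (G b c (s+1))
    = ∑ j ∈ range (m+1),
        ((s+1).choose j : ℝ) * ((s + (m-j)).choose s : ℝ) * c^j * b^(m-j) := by
  rw [G, coeff_mul, Finset.Nat.sum_antidiagonal_eq_sum_range_succ_mk]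
  refine Finset.sum_congr rfl fun j hj => ?_
  rw [coeff_A_pow, coeff_U_pow]
  ring

lemma choose_symm_aux (s i : ℕ) : ((s + i).choose s : ℝ) = ((s + i).choose i : ℝ) := by
  congr 1
  rw [← Nat.choose_symm (Nat.le_add_right s i), Nat.add_sub_cancel_left]

lemma F_formula (n k : ℕ) (hn : 1 ≤ n) (hk : k ≤ n) :
    F b c n k =
        ((k : ℝ) / (n : ℝ)) *
          (∑ j ∈ Finset.range (n - k + 1),
            (n.choose j : ℝ) * ((2 * n - k - j - 1).choose (n - k - j) : ℝ) *
              c ^ j * b ^ (n - k - j)) +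
        (c * ((k : ℝ) + 1) / (n : ℝ)) *
          (∑ j ∈ Finset.range (n - k),
            (n.choose j : ℝ) * ((2 * n - k - j - 2).choose (n - k - j - 1) : ℝ) *
              c ^ j * b ^ (n - k - j - 1)) := by
  obtain ⟨s, rfl⟩ : ∃ s, n = s + 1 := ⟨n - 1, by omega⟩
  have h1 : coeff (R := ℝ) (s+1-k) (G b c (s+1))
      = ∑ j ∈ Finset.range (s+1-k+1),
          ((s+1).choose j : ℝ) * ((2 * (s+1) - k - j - 1).choose (s+1-k-j) : ℝ)
            * c^j * b^(s+1-k-j) := by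
    rw [coeff_G]
    refine Finset.sum_congr rfl fun j hj => ?_
    simp only [Finset.mem_range] at hj
    rw [show 2 * (s+1) - k - j - 1 = s + (s+1-k-j) from by omega,
      choose_symm_aux]
  have h2 : coeff (R := ℝ) (s+1-k) (X * G b c (s+1))
      = ∑ j ∈ Finset.range (s+1-k),
          ((s+1).choose j : ℝ) * ((2 * (s+1) - k - j - 2).choose (s+1-k-j-1) : ℝ)
            * c^j * b^(s+1-k-j-1) := by
    rcases Nat.eq_zero_or_eq_succ_pred (s+1-k) with h0 | hsucc
    · rw [h0, Finset.range_zero, Finset.sum_empty, coeff_zero_X_mul]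
    · set m := s+1-k with hm
      obtain ⟨m', hm'⟩ : ∃ m', m = m' + 1 := by
        rcases Nat.eq_zero_or_eq_succ_pred m with h | h
        · rw [h] at hsucc; omega
        · exact ⟨m - 1, h⟩
      rw [hm', coeff_succ_X_mul, coeff_G]
      refine Finset.sum_congr rfl fun j hj => ?_
      simp only [Finset.mem_range] at hj
      rw [show m'+1-j-1 = m' - j from by omega,
        show 2 * (s+1) - k - j - 2 = s + (m' - j) from by omega, choose_symm_aux]
  rw [F, if_neg (by omega), if_pos hk, h1, h2]

end
end LBPaux

/-- Closed form (via Lagrange inversion) for the entries of the inverse of the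
coefficient matrix of the constant-coefficient Laurent biorthogonal polynomials. -/
theorem lbp_inverse_coeff_matrix
    (b c : ℝ) (hb : b ≠ 0) (hc : c ≠ 0)
    (P : ℕ → Polynomial ℝ)
    (hP0 : P 0 = 1)
    (hP1 : P 1 = Polynomial.X - Polynomial.C c)
    (hP : ∀ n, 2 ≤ n →
      P n = (Polynomial.X - Polynomial.C c) * P (n - 1)
            - Polynomial.C b * Polynomial.X * P (n - 2))
    (ν : ℕ → ℕ → ℝ)
    (hν : ∀ n k, k ≤ n →
      (∑ m ∈ Finset.Icc k n, (P n).coeff m * ν m k) = if n = k then 1 else 0) :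
    ∀ n, 1 ≤ n → ∀ k, k ≤ n →
      ν n k =
        ((k : ℝ) / (n : ℝ)) *
          (∑ j ∈ Finset.range (n - k + 1),
            (n.choose j : ℝ) * ((2 * n - k - j - 1).choose (n - k - j) : ℝ) *
              c ^ j * b ^ (n - k - j)) +
        (c * ((k : ℝ) + 1) / (n : ℝ)) *
          (∑ j ∈ Finset.range (n - k),
            (n.choose j : ℝ) * ((2 * n - k - j - 2).choose (n - k - j - 1) : ℝ) *
              c ^ j * b ^ (n - k - j - 1)) := by
  classical
  open LBPaux Finset in
  have hP' : ∀ N, P (N+2) = (Polynomial.X - Polynomial.C c) * P (N+1)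
      - Polynomial.C b * Polynomial.X * P N := fun N => hP (N+2) (by omega)
  have hcS : ∀ N i, (P (N+2)).coeff (i+1)
      = (P (N+1)).coeff i - c * (P (N+1)).coeff (i+1) - b * (P N).coeff i := by
    intro N i
    rw [hP' N, show (Polynomial.X - Polynomial.C c) * P (N+1)
        = Polynomial.X * P (N+1) - Polynomial.C c * P (N+1) from by ring, mul_assoc]
    rw [Polynomial.coeff_sub, Polynomial.coeff_sub, Polynomial.coeff_X_mul,
      Polynomial.coeff_C_mul, Polynomial.coeff_C_mul, Polynomial.coeff_X_mul]
  have hc0 : ∀ N, (P (N+2)).coeff 0 = -c * (P (N+1)).coeff 0 := by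
    intro N
    rw [hP' N, show (Polynomial.X - Polynomial.C c) * P (N+1)
        = Polynomial.X * P (N+1) - Polynomial.C c * P (N+1) from by ring, mul_assoc]
    simp only [Polynomial.coeff_sub, Polynomial.mul_coeff_zero, Polynomial.coeff_X_zero,
      Polynomial.coeff_C_zero, zero_mul, mul_zero, zero_sub, sub_zero]
    ring
  have hPn : ∀ n : ℕ, (P n).coeff n = 1 ∧ ∀ m, n < m → (P n).coeff m = 0 := by
    intro n
    induction n using Nat.strong_induction_on with
    | _ n ih =>
      match n with
      | 0 =>
        constructor
        · simp [hP0]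
        · intro m hm
          rw [hP0, Polynomial.coeff_one, if_neg (by omega)]
      | 1 =>
        constructor
        · simp [hP1]
        · intro m hm
          rw [hP1, Polynomial.coeff_sub, Polynomial.coeff_X, Polynomial.coeff_C,
            if_neg (by omega), if_neg (by omega)]
          ring
      | (N+2) =>
        obtain ⟨d1, v1⟩ := ih (N+1) (by omega)
        obtain ⟨d0, v0⟩ := ih N (by omega)
        constructor
        · rw [show N+2 = (N+1)+1 from rfl, hcS N (N+1), d1,
            v1 (N+2) (by omega), v0 (N+1) (by omega)]
          ring
        · intro m hm
          obtain ⟨i, rfl⟩ : ∃ i, m = i + 1 := ⟨m - 1, by omega⟩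
          rw [hcS N i, v1 i (by omega), v1 (i+1) (by omega), v0 i (by omega)]
          ring
  have K : ∀ n : ℕ, ∀ k : ℕ,
      (∑ m ∈ range (n+1), (P n).coeff m * F b c m k) = if n = k then 1 else 0 := by
    intro n
    induction n using Nat.strong_induction_on with
    | _ n ih =>
      intro k
      rcases lt_trichotomy n k with hnk | hnk | hnk
      · rw [if_neg (by omega)]
        refine Finset.sum_eq_zero fun m hm => ?_
        simp only [Finset.mem_range] at hm
        rw [F_zero_of_lt b c m k (by omega)]
        ring
      · subst hnk
        rw [if_pos rfl]
        rw [Finset.sum_eq_single_of_mem n (Finset.self_mem_range_succ n)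
          (fun m hm hne => ?_)]
        · rw [(hPn n).1, F_diag]
          ring
        · simp only [Finset.mem_range] at hm
          rw [F_zero_of_lt b c m n (by omega)]
          ring
      · match n, hnk with
        | 1, hnk =>
          have hk0 : k = 0 := by omega
          subst hk0
          rw [Finset.sum_range_succ, Finset.sum_range_succ, Finset.sum_range_zero,
            hP1, F10]
          have hc0' : (Polynomial.X - Polynomial.C c : Polynomial ℝ).coeff 0 = -c := by
            simp
          have hc1' : (Polynomial.X - Polynomial.C c : Polynomial ℝ).coeff 1 = 1 := by
            simp
          rw [hc0', hc1', if_neg (by omega)]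
          have h00 : F b c 0 0 = 1 := F_diag b c 0
          rw [h00]
          ring
        | (N+2), hnk =>
          rw [if_neg (by omega)]
          rw [Finset.sum_range_succ']
          have estep : ∀ i ∈ range (N+2), (P (N+2)).coeff (i+1) * F b c (i+1) k
              = (P (N+1)).coeff i * F b c (i+1) k
                - c * ((P (N+1)).coeff (i+1) * F b c (i+1) k)
                - b * ((P N).coeff i * F b c (i+1) k) := by
            intro i _
            rw [hcS N i]
            ring
          rw [Finset.sum_congr rfl estep, Finset.sum_sub_distrib, Finset.sum_sub_distrib,
            ← Finset.mul_sum, ← Finset.mul_sum]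
          have hT1 : ∑ i ∈ range (N+2), (P (N+1)).coeff i * F b c (i+1) k
              = (if 1 ≤ k ∧ k ≤ N+2 then b^(N+2-k) else 0)
                + c * (if k ≤ N+1 then b^(N+1-k) else 0) :=
            Tval b c (fun m => (P (N+1)).coeff m) (N+1) k (ih (N+1) (by omega))
          have hT3 : ∑ i ∈ range (N+2), (P N).coeff i * F b c (i+1) k
              = (if 1 ≤ k ∧ k ≤ N+1 then b^(N+1-k) else 0)
                + c * (if k ≤ N then b^(N-k) else 0) := by
            rw [Finset.sum_range_succ, (hPn N).2 (N+1) (by omega)]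
            have t : ∑ i ∈ range (N+1), (P N).coeff i * F b c (i+1) k
                = (if 1 ≤ k ∧ k ≤ N+1 then b^(N+1-k) else 0)
                  + c * (if k ≤ N then b^(N-k) else 0) :=
              Tval b c (fun m => (P N).coeff m) N k (ih N (by omega))
            rw [t]
            ring
          have hT2 : (∑ i ∈ range (N+2), (P (N+1)).coeff (i+1) * F b c (i+1) k)
              + (P (N+1)).coeff 0 * F b c 0 k
              = if N+1 = k then 1 else 0 := by
            have e2 : (∑ i ∈ range (N+2), (P (N+1)).coeff (i+1) * F b c (i+1) k)
                + (P (N+1)).coeff 0 * F b c 0 k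
                = ∑ m ∈ range (N+3), (P (N+1)).coeff m * F b c m k :=
              (Finset.sum_range_succ' (fun m => (P (N+1)).coeff m * F b c m k) (N+2)).symm
            rw [e2, Finset.sum_range_succ, (hPn (N+1)).2 (N+2) (by omega), zero_mul,
              add_zero, ih (N+1) (by omega) k]
          rw [hc0 N, hT1, hT3]
          by_cases h1 : 1 ≤ k
          · by_cases h2 : k ≤ N
            · rw [if_neg (by omega : ¬ N+1 = k)] at hT2
              rw [if_pos (by exact ⟨h1, by omega⟩ : 1 ≤ k ∧ k ≤ N+2),
                if_pos (by omega : k ≤ N+1),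
                if_pos (by exact ⟨h1, by omega⟩ : 1 ≤ k ∧ k ≤ N+1), if_pos h2,
                show N+2-k = (N+1-k)+1 from by omega,
                show N+1-k = (N-k)+1 from by omega, pow_succ, pow_succ]
              linear_combination (-c) * hT2
            · have hk' : k = N+1 := by omega
              subst hk'
              rw [if_pos rfl] at hT2
              rw [if_pos (by exact ⟨h1, by omega⟩ : 1 ≤ N+1 ∧ N+1 ≤ N+2),
                if_pos (le_refl (N+1)),
                if_pos (by exact ⟨h1, le_refl (N+1)⟩ : 1 ≤ N+1 ∧ N+1 ≤ N+1),
                if_neg (by omega : ¬ N+1 ≤ N),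
                show N+2-(N+1) = 1 from by omega, show N+1-(N+1) = 0 from by omega,
                pow_one, pow_zero]
              linear_combination (-c) * hT2
          · have hk0 : k = 0 := by omega
            subst hk0
            rw [if_neg (by omega : ¬ N+1 = 0)] at hT2
            rw [if_neg (by omega : ¬ (1 ≤ 0 ∧ 0 ≤ N+2)), if_pos (by omega : 0 ≤ N+1),
              if_neg (by omega : ¬ (1 ≤ 0 ∧ 0 ≤ N+1)), if_pos (by omega : 0 ≤ N),
              show N+1-0 = N+1 from rfl, show N-0 = N from rfl, pow_succ]
            linear_combination (-c) * hT2
  have KIcc : ∀ n k : ℕ, k ≤ n →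
      (∑ m ∈ Finset.Icc k n, (P n).coeff m * F b c m k) = if n = k then 1 else 0 := by
    intro n k hk
    rw [← K n k]
    refine Finset.sum_subset (fun m hm => ?_) (fun m hm hnm => ?_)
    · simp only [Finset.mem_Icc] at hm
      simp only [Finset.mem_range]
      omega
    · simp only [Finset.mem_range] at hm
      simp only [Finset.mem_Icc, not_and, not_le] at hnm
      by_cases hmk : k ≤ m
      · omega
      · rw [F_zero_of_lt b c m k (by omega)]
        ring
  have huniq : ∀ n : ℕ, ∀ k, k ≤ n → ν n k = F b c n k := by
    intro n
    induction n using Nat.strong_induction_on with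
    | _ n ih =>
      intro k hk
      have h1 := hν n k hk
      have h2 := KIcc n k hk
      rcases Nat.eq_or_lt_of_le hk with heq | hlt
      · subst heq
        rw [Finset.Icc_self, Finset.sum_singleton, (hPn k).1, one_mul] at h1 h2
        rw [h1, h2]
      · obtain ⟨s, rfl⟩ : ∃ s, n = s + 1 := ⟨n - 1, by omega⟩
        rw [Finset.sum_Icc_succ_top (by omega : k ≤ s+1)] at h1 h2
        have hsame : ∀ m ∈ Finset.Icc k s, (P (s+1)).coeff m * ν m k
            = (P (s+1)).coeff m * F b c m k := by
          intro m hm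
          simp only [Finset.mem_Icc] at hm
          rw [ih m (by omega) k hm.1]
        rw [Finset.sum_congr rfl hsame] at h1
        rw [(hPn (s+1)).1, one_mul] at h1 h2
        linarith [h1, h2]
  intro n hn k hk
  rw [huniq n k hk, F_formula b c n k hn hk]
end

section
/- For every natural number n ≥ 1, the n-th moment satisfies μ_n = (c/n) · ∑_{j=0}^{n−1} binom(n,j)·binom(2n−j−2, n−j−1)·c^j·b^{n−j−1}. -/
/-!
Let `φ(s) = (1 + c s) / (1 - b s)` and let `T` be the power series with `T = t φ(T)`, i.e.
`T (1 - b T) = t (1 + c T)`. The generating function of the `Pₙ` is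
`1 / (1 - (x - c) s + b x s²)`; substituting `s = T` factors the denominator as
`(1 + c T)(1 - x t)`, so `∑ₙ Pₙ(x) Tⁿ = (1 + c T)⁻¹ ∑ₖ xᵏ tᵏ`. Applying the moment functional
coefficientwise, orthogonality turns the left side into `1`, hence `∑ₖ μₖ tᵏ = 1 + c T`.
Lagrange inversion, `n [tⁿ] T = [sⁿ⁻¹] φⁿ`, then gives the formula.
-/

open PowerSeries

namespace PowerSeries

section Lagrange

variable {R : Type*} [CommRing R]

theorem natCast_mul_coeff_pow (φ : R⟦X⟧) (m n : ℕ) :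
    (m : R) * coeff m (φ ^ n) = n * coeff m (X * φ ^ (n - 1) * d⁄dX R φ) := by
  cases m with
  | zero => simp [mul_assoc]
  | succ m =>
    have h := coeff_derivative (φ ^ n) m
    rw [derivative_pow, mul_assoc, ← map_natCast (C (R := R)), coeff_C_mul] at h
    rw [mul_assoc, coeff_succ_X_mul, h]
    push_cast
    ring

theorem HasSubst.of_eq_X_mul {T f : R⟦X⟧} (hT : T = X * f) : HasSubst T :=
  HasSubst.of_constantCoeff_zero' (by rw [hT]; simp)

theorem subst_eq_X_mul_subst_add_C {φ T : R⟦X⟧} (hT : T = X * φ.subst T) (ψ : R⟦X⟧) :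
    ψ.subst T = X * (φ * mk fun p ↦ coeff (p + 1) ψ).subst T + C (constantCoeff ψ) := by
  have hT' : HasSubst T := HasSubst.of_eq_X_mul hT
  conv_lhs => rw [eq_X_mul_shift_add_const ψ]
  rw [subst_add hT', subst_mul hT', subst_mul hT', subst_X hT', subst_C, ← C_apply, ← mul_assoc,
    ← hT]

variable {K : Type*} [Field K]

theorem pow_succ_mul_one_sub_X_mul_derivative_mul_inv {φ : K⟦X⟧} (hφ : constantCoeff φ ≠ 0)
    (n : ℕ) : φ ^ (n + 1) * (1 - X * d⁄dX K φ * φ⁻¹) = φ ^ (n + 1) - X * φ ^ n * d⁄dX K φ := by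
  linear_combination (-(X * φ ^ n * d⁄dX K φ)) * PowerSeries.mul_inv_cancel φ hφ

theorem coeff_succ_pow_mul_one_sub_X_mul_derivative_mul_inv [CharZero K] {φ : K⟦X⟧}
    (hφ : constantCoeff φ ≠ 0) (n : ℕ) :
    coeff (n + 1) (φ ^ (n + 1) * (1 - X * d⁄dX K φ * φ⁻¹)) = 0 := by
  have h := natCast_mul_coeff_pow φ (n + 1) (n + 1)
  rw [pow_succ_mul_one_sub_X_mul_derivative_mul_inv hφ, map_sub, sub_eq_zero]
  exact mul_left_cancel₀ (Nat.cast_ne_zero.mpr n.succ_ne_zero) h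

/-- Lagrange–Bürmann inversion for `T = X φ(T)`. Writing `ψ = ψ(0) + X χ`, the relation
`T = X φ(T)` trades `[Xⁿ⁺¹] ψ(T)` for `[Xⁿ] (φ χ)(T)`. -/
theorem coeff_subst_eq_coeff_mul_pow [CharZero K] {φ T : K⟦X⟧} (hφ : constantCoeff φ ≠ 0)
    (hT : T = X * φ.subst T) (n : ℕ) (ψ : K⟦X⟧) :
    coeff n (ψ.subst T) = coeff n (ψ * φ ^ n * (1 - X * d⁄dX K φ * φ⁻¹)) := by
  induction n generalizing ψ with
  | zero =>
    rw [subst_eq_X_mul_subst_add_C hT]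
    conv_rhs => rw [eq_X_mul_shift_add_const ψ]
    simp
  | succ n ih =>
    set κ := 1 - X * d⁄dX K φ * φ⁻¹
    have hψ : ψ * φ ^ (n + 1) * κ = X * ((φ * mk fun p ↦ coeff (p + 1) ψ) * φ ^ n * κ)
        + C (constantCoeff ψ) * (φ ^ (n + 1) * κ) := by
      conv_lhs => rw [eq_X_mul_shift_add_const ψ]
      ring
    rw [subst_eq_X_mul_subst_add_C hT, hψ, map_add, map_add, coeff_succ_X_mul, coeff_succ_X_mul,
      ih, coeff_C_mul, coeff_succ_pow_mul_one_sub_X_mul_derivative_mul_inv hφ, coeff_C,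
      if_neg n.succ_ne_zero, mul_zero]

theorem succ_mul_coeff_succ_of_eq_X_mul_subst [CharZero K] {φ T : K⟦X⟧}
    (hφ : constantCoeff φ ≠ 0) (hT : T = X * φ.subst T) (n : ℕ) :
    ((n : K) + 1) * coeff (n + 1) T = coeff n (φ ^ (n + 1)) := by
  have h := coeff_subst_eq_coeff_mul_pow hφ hT (n + 1) X
  rw [subst_X (HasSubst.of_eq_X_mul hT), mul_assoc, coeff_succ_X_mul,
    pow_succ_mul_one_sub_X_mul_derivative_mul_inv hφ, map_sub] at h
  have h' := natCast_mul_coeff_pow φ n (n + 1)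
  rw [h]
  push_cast at h'
  linear_combination h'

theorem exists_eq_X_mul_subst {φ : K⟦X⟧} (hφ : constantCoeff φ ≠ 0) :
    ∃ T : K⟦X⟧, T = X * φ.subst T := by
  have hu₀ : constantCoeff (X * φ⁻¹) = 0 := by simp
  have hu₁ : IsUnit (coeff 1 (X * φ⁻¹)) := by
    simpa [coeff_succ_X_mul, constantCoeff_inv] using hφ
  set T := (X * φ⁻¹).substInvOfIsUnit hu₁
  have hT : HasSubst T := HasSubst.substInvOfIsUnit _ hu₁
  refine ⟨T, ?_⟩
  calc T = (X * φ⁻¹ * φ).subst T := by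
        rw [mul_assoc, PowerSeries.inv_mul_cancel φ hφ, mul_one, subst_X hT]
    _ = X * φ.subst T := by
        rw [subst_mul hT, subst_substInvOfIsUnit_right _ hu₀]

theorem mul_subst_eq_X_mul_subst {N D T : K⟦X⟧} (hD : constantCoeff D ≠ 0)
    (hT : T = X * (N * D⁻¹).subst T) : T * D.subst T = X * N.subst T := by
  have hT' : HasSubst T := HasSubst.of_eq_X_mul hT
  calc T * D.subst T = X * ((N * D⁻¹).subst T * D.subst T) := by
        nth_rewrite 1 [hT]; ring
    _ = X * N.subst T := by
        rw [← subst_mul hT', mul_assoc, PowerSeries.inv_mul_cancel D hD, mul_one]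

end Lagrange

theorem coeff_one_add_C_mul_X_pow {R : Type*} [CommRing R] (c : R) (n j : ℕ) :
    coeff j ((1 + C c * X) ^ n) = n.choose j * c ^ j := by
  have h : (1 + C c * X : R⟦X⟧) = rescale c ((1 + Polynomial.X : Polynomial R) : R⟦X⟧) := by
    simp [rescale_X]
  rw [h, ← map_pow, coeff_rescale, ← Polynomial.coe_pow, Polynomial.coeff_coe,
    Polynomial.coeff_one_add_X_pow, mul_comm]

theorem coeff_inv_one_sub_C_mul_X_pow {K : Type*} [Field K] (b : K) (d m : ℕ) :
    coeff m ((1 - C b * X)⁻¹ ^ (d + 1)) = (d + m).choose d * b ^ m := by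
  set Y : K⟦X⟧ := 1 - C b * X
  set Z : K⟦X⟧ := rescale b (mk fun n ↦ ((d + n).choose d : K))
  have hZ : Z * Y ^ (d + 1) = 1 := by
    simpa [Y, Z, rescale_X] using congrArg (rescale b) (mk_add_choose_mul_one_sub_pow_eq_one K d)
  have hY : Y⁻¹ ^ (d + 1) * Y ^ (d + 1) = 1 := by
    rw [← mul_pow, PowerSeries.inv_mul_cancel _ (by simp [Y]), one_pow]
  have h : Y⁻¹ ^ (d + 1) = Z := by linear_combination (-Y⁻¹ ^ (d + 1)) * hZ + Z * hY
  rw [h, coeff_rescale, coeff_mk, mul_comm]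

theorem coeff_pred_pow_eq_sum {K : Type*} [Field K] (b c : K) {n : ℕ} (hn : 1 ≤ n) :
    coeff (n - 1) (((1 + C c * X) * (1 - C b * X)⁻¹) ^ n) =
      ∑ j ∈ Finset.range n,
        (n.choose j : K) * ((2 * n - j - 2).choose (n - j - 1) : K) * c ^ j * b ^ (n - j - 1) := by
  obtain ⟨m, rfl⟩ := Nat.exists_eq_add_of_le' hn
  rw [mul_pow, coeff_mul, Finset.Nat.sum_antidiagonal_eq_sum_range_succ_mk]
  refine Finset.sum_congr rfl fun j hj ↦ ?_
  have hj : j ≤ m := Nat.lt_succ_iff.mp (Finset.mem_range.mp hj)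
  rw [coeff_one_add_C_mul_X_pow, coeff_inv_one_sub_C_mul_X_pow,
    show 2 * (m + 1) - j - 2 = m + (m - j) by omega, show m + 1 - j - 1 = m - j by omega,
    Nat.choose_symm_add]
  simp only [Nat.add_sub_cancel]
  ring

section MapCoeffs

variable {R A : Type*} [CommRing R] [CommRing A] [Algebra R A]

noncomputable def mapCoeffs (L : A →ₗ[R] R) (f : A⟦X⟧) : R⟦X⟧ := mk fun n ↦ L (coeff n f)

theorem coeff_mapCoeffs (L : A →ₗ[R] R) (f : A⟦X⟧) (n : ℕ) :
    coeff n (mapCoeffs L f) = L (coeff n f) :=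
  coeff_mk _ _

theorem mapCoeffs_map_mul (L : A →ₗ[R] R) (g : R⟦X⟧) (f : A⟦X⟧) :
    mapCoeffs L (map (algebraMap R A) g * f) = g * mapCoeffs L f := by
  ext n
  simp only [coeff_mapCoeffs, coeff_mul, map_sum, coeff_map, ← Algebra.smul_def, L.map_smul,
    smul_eq_mul]

theorem mapCoeffs_subst_map (L : A →ₗ[R] R) {T : R⟦X⟧} (hT : HasSubst T) (G : A⟦X⟧) :
    mapCoeffs L (G.subst (map (algebraMap R A) T)) = (mapCoeffs L G).subst T := by
  have hT' : HasSubst (map (algebraMap R A) T) := hT.map (algebraMap R A)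
  ext n
  rw [coeff_mapCoeffs, coeff_subst' hT', coeff_subst' hT]
  refine (L.toAddMonoidHom.map_finsum (coeff_subst_finite' hT' G n)).trans
    (finsum_congr fun d ↦ ?_)
  simp [coeff_mapCoeffs, ← map_pow, coeff_map, ← Algebra.smul_def, mul_comm]

theorem one_sub_C_mul_X_mul_mk_pow (x : A) : (1 - C x * X) * mk (x ^ ·) = 1 := by
  simpa [rescale_X, rescale_mk, mul_comm] using
    congrArg (rescale x) (mk_one_mul_one_sub_eq_one A)

theorem mk_apply_pow_eq_of_subst_mul_eq_one (L : A →ₗ[R] R) {G : A⟦X⟧}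
    (hG : mapCoeffs L G = 1) {T : R⟦X⟧} (hT : HasSubst T) (F : R⟦X⟧) (x : A)
    (h : G.subst (map (algebraMap R A) T) * map (algebraMap R A) F * (1 - C x * X) = 1) :
    mk (fun n ↦ L (x ^ n)) = F := by
  have hGx : map (algebraMap R A) F * G.subst (map (algebraMap R A) T) = mk (x ^ ·) := by
    linear_combination mk (x ^ ·) * h
      - (G.subst (map (algebraMap R A) T) * map (algebraMap R A) F) * one_sub_C_mul_X_mul_mk_pow x
  have hF := congrArg (mapCoeffs L) hGx
  rw [mapCoeffs_map_mul, mapCoeffs_subst_map L hT, hG, ← coe_substAlgHom hT, map_one,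
    mul_one] at hF
  rw [hF]
  ext n
  simp [coeff_mapCoeffs]

end MapCoeffs

section ThreeTermRecurrence

variable {R : Type*} [CommRing R]

theorem mk_mul_eq_one_of_recurrence {p : ℕ → R} {α β : R} (h0 : p 0 = 1) (h1 : p 1 = α)
    (h : ∀ n, p (n + 2) = α * p (n + 1) - β * p n) :
    mk p * (1 - C α * X + C β * X ^ 2) = 1 := by
  have e : mk p * (1 - C α * X + C β * X ^ 2) = mk p - C α * mk p * X + C β * mk p * X ^ 2 := by
    ring
  rw [e]
  ext (_ | _ | n) <;> simp [coeff_mul_X_pow', h0, h1, h]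

theorem natDegree_le_of_recurrence {p : ℕ → Polynomial R} {α β : Polynomial R}
    (hα : α.natDegree ≤ 1) (hβ : β.natDegree ≤ 1) (h0 : p 0 = 1) (h1 : p 1 = α)
    (h : ∀ n, p (n + 2) = α * p (n + 1) - β * p n) (n : ℕ) : (p n).natDegree ≤ n := by
  suffices ∀ n, (p n).natDegree ≤ n ∧ (p (n + 1)).natDegree ≤ n + 1 from (this n).1
  intro n
  induction n with
  | zero => simp [h0, h1, hα]
  | succ n ih =>
    refine ⟨ih.2, ?_⟩
    rw [h]
    refine (Polynomial.natDegree_sub_le _ _).trans (max_le ?_ ?_) <;>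
      refine Polynomial.natDegree_mul_le.trans ?_ <;> omega

end ThreeTermRecurrence

section LaurentBiorthogonal

variable {K : Type*} [Field K] {b c : K}

theorem mul_one_sub_C_mul_eq_of_eq_X_mul_subst {T : K⟦X⟧}
    (hT : T = X * ((1 + C c * X) * (1 - C b * X)⁻¹).subst T) :
    T * (1 - C b * T) = X * (1 + C c * T) := by
  have hT' : HasSubst T := HasSubst.of_eq_X_mul hT
  have h := mul_subst_eq_X_mul_subst (by simp) hT
  rw [← coe_substAlgHom hT'] at h
  simpa only [map_sub, map_add, map_one, map_mul, coe_substAlgHom, subst_X hT', subst_C,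
    ← C_apply] using h

theorem subst_map_eq_of_mul_one_sub_eq {T : K⟦X⟧} (hT : HasSubst T)
    (hq : T * (1 - C b * T) = X * (1 + C c * T)) :
    (1 - C (Polynomial.X - Polynomial.C c) * X + C (Polynomial.C b * Polynomial.X) * X ^ 2 :
        (Polynomial K)⟦X⟧).subst (map (algebraMap K (Polynomial K)) T) =
      map (algebraMap K (Polynomial K)) (1 + C c * T) * (1 - C Polynomial.X * X) := by
  have hτ : HasSubst (map (algebraMap K (Polynomial K)) T) := hT.map (algebraMap K (Polynomial K))
  have hq' := congrArg (map (algebraMap K (Polynomial K))) hq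
  rw [← coe_substAlgHom hτ]
  simp only [map_add, map_sub, map_mul, map_pow, map_one, coe_substAlgHom, subst_C, ← C_apply]
  rw [subst_X hτ]
  simp only [map_add, map_sub, map_mul, map_one, map_C, map_X, Polynomial.algebraMap_eq] at hq' ⊢
  linear_combination (-C Polynomial.X) * hq'

theorem mk_eq_one_add_C_mul_of_orthogonal {P : ℕ → Polynomial K} (hP0 : P 0 = 1)
    (hP1 : P 1 = Polynomial.X - Polynomial.C c)
    (hP : ∀ n, P (n + 2) =
      (Polynomial.X - Polynomial.C c) * P (n + 1) - Polynomial.C b * Polynomial.X * P n)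
    {μ : ℕ → K}
    (hμ : ∀ n, ∑ k ∈ Finset.range (n + 1), (P n).coeff k * μ k = if n = 0 then 1 else 0)
    {T : K⟦X⟧} (hT : HasSubst T) (hq : T * (1 - C b * T) = X * (1 + C c * T)) :
    mk μ = 1 + C c * T := by
  set L : Polynomial K →ₗ[K] K := Polynomial.lsum fun k ↦ μ k • LinearMap.id
  have hdeg := natDegree_le_of_recurrence (by simp) (by compute_degree) hP0 hP1 hP
  have hL : mapCoeffs L (mk P) = 1 := by
    ext n
    rw [coeff_mapCoeffs, coeff_mk, coeff_one, ← hμ n, Polynomial.lsum_apply,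
      Polynomial.sum_over_range' _ (by simp) _ (Nat.lt_succ_of_le (hdeg n))]
    simp [mul_comm]
  have hτ : HasSubst (map (algebraMap K (Polynomial K)) T) := hT.map (algebraMap K (Polynomial K))
  have h : (mk P).subst (map (algebraMap K (Polynomial K)) T)
      * map (algebraMap K (Polynomial K)) (1 + C c * T) * (1 - C Polynomial.X * X) = 1 := by
    rw [mul_assoc, ← subst_map_eq_of_mul_one_sub_eq hT hq, ← subst_mul hτ,
      mk_mul_eq_one_of_recurrence hP0 hP1 hP, ← coe_substAlgHom hτ, map_one]
  calc mk μ = mk fun n ↦ L (Polynomial.X ^ n) := by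
        ext n; simp [L, ← Polynomial.monomial_one_right_eq_X_pow]
    _ = 1 + C c * T := mk_apply_pow_eq_of_subst_mul_eq_one L hL hT _ _ h

end LaurentBiorthogonal

end PowerSeries

theorem lbp_moment_lagrange_form_general
    (b c : ℝ)
    (P : ℕ → Polynomial ℝ)
    (hP0 : P 0 = 1)
    (hP1 : P 1 = Polynomial.X - Polynomial.C c)
    (hP : ∀ n, 2 ≤ n →
      P n = (Polynomial.X - Polynomial.C c) * P (n - 1)
            - Polynomial.C b * Polynomial.X * P (n - 2))
    (μ : ℕ → ℝ)
    (hμ : ∀ n, (∑ k ∈ Finset.range (n + 1), (P n).coeff k * μ k) =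
      if n = 0 then 1 else 0) :
    ∀ n, 1 ≤ n →
      μ n = (c / (n : ℝ)) *
        ∑ j ∈ Finset.range n,
          (n.choose j : ℝ) * ((2 * n - j - 2).choose (n - j - 1) : ℝ) *
            c ^ j * b ^ (n - j - 1) := by
  intro n hn
  obtain ⟨T, hT⟩ := exists_eq_X_mul_subst (φ := (1 + C c * X) * (1 - C b * X)⁻¹) (by simp)
  have hμT := mk_eq_one_add_C_mul_of_orthogonal hP0 hP1 (fun n ↦ hP (n + 2) (by omega)) hμ
    (HasSubst.of_eq_X_mul hT) (mul_one_sub_C_mul_eq_of_eq_X_mul_subst hT)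
  obtain ⟨m, rfl⟩ := Nat.exists_eq_add_of_le' hn
  have hμm : μ (m + 1) = c * coeff (m + 1) T := by simpa using congrArg (coeff (m + 1)) hμT
  rw [← coeff_pred_pow_eq_sum b c hn, Nat.add_sub_cancel,
    ← succ_mul_coeff_succ_of_eq_X_mul_subst (by simp) hT m, hμm]
  push_cast
  field_simp

/-- For `n ≥ 1`, the `n`-th moment of the constant-coefficient Laurent
biorthogonal polynomials satisfies
`μ_n = (c/n) ∑_{j=0}^{n-1} C(n,j) C(2n-j-2, n-j-1) c^j b^{n-j-1}`. -/
theorem lbp_moment_lagrange_form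
    (b c : ℝ) (hb : b ≠ 0) (hc : c ≠ 0)
    (P : ℕ → Polynomial ℝ)
    (hP0 : P 0 = 1)
    (hP1 : P 1 = Polynomial.X - Polynomial.C c)
    (hP : ∀ n, 2 ≤ n →
      P n = (Polynomial.X - Polynomial.C c) * P (n - 1)
            - Polynomial.C b * Polynomial.X * P (n - 2))
    (μ : ℕ → ℝ)
    (hμ : ∀ n, (∑ k ∈ Finset.range (n + 1), (P n).coeff k * μ k) =
      if n = 0 then 1 else 0) :
    ∀ n, 1 ≤ n →
      μ n = (c / (n : ℝ)) *
        ∑ j ∈ Finset.range n,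
          (n.choose j : ℝ) * ((2 * n - j - 2).choose (n - j - 1) : ℝ) *
            c ^ j * b ^ (n - j - 1) :=
  lbp_moment_lagrange_form_general b c P hP0 hP1 hP μ hμ
end

section
/- Let μ̃(t) = ∑_{n≥0} μ̃_n t^n ∈ ℝ⟦t⟧ be the generating function of the sequence (μ̃_n). Then μ̃(t) satisfies the quadratic equation b·t·μ̃(t)² − (1 − c·t)·μ̃(t) + 1 = 0 in ℝ⟦t⟧. (This is the algebraic form of the closed expression μ̃(t) = (1 − ct − √(1 − 2(2b+c)t + c²t²))/(2bt) for the T-fraction with constant coefficients.) -/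
def nu (b c : ℝ) : ℕ → ℝ
  | 0 => 1
  | n + 1 => c * nu b c n +
      b * ∑ i ∈ (Finset.range (n+1)).attach,
        nu b c i * nu b c (n - (i : ℕ))
decreasing_by
  all_goals first
    | exact Nat.lt_succ_self n
    | (have := Finset.mem_range.mp i.2; omega)

lemma nu_succ (b c : ℝ) (n : ℕ) :
    nu b c (n+1) = c * nu b c n +
      b * ∑ i ∈ Finset.range (n+1), nu b c i * nu b c (n - i) := by
  rw [nu, ← Finset.sum_attach (Finset.range (n+1)) (fun i => nu b c i * nu b c (n - i))]

lemma nu_quadratic (b c : ℝ) :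
    PowerSeries.C b * PowerSeries.X * (PowerSeries.mk (nu b c)) ^ 2
      - (1 - PowerSeries.C c * PowerSeries.X) * PowerSeries.mk (nu b c) + 1 = 0 := by
  ext n
  rcases n with _ | n
  · simp [nu]
  · have h2 : (PowerSeries.coeff n) (PowerSeries.mk (nu b c) * PowerSeries.mk (nu b c)) =
        ∑ i ∈ Finset.range (n+1), nu b c i * nu b c (n - i) := by
      rw [PowerSeries.coeff_mul, Finset.Nat.sum_antidiagonal_eq_sum_range_succ_mk]
      simp
    have h3 : (PowerSeries.coeff (n+1))
        (PowerSeries.C b * PowerSeries.X * (PowerSeries.mk (nu b c)) ^ 2) =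
        b * ∑ i ∈ Finset.range (n+1), nu b c i * nu b c (n - i) := by
      rw [sq, mul_assoc, PowerSeries.coeff_C_mul, PowerSeries.coeff_succ_X_mul, h2]
    rw [map_add, map_sub, h3, sub_mul, one_mul, map_sub, mul_assoc,
      PowerSeries.coeff_C_mul, PowerSeries.coeff_succ_X_mul]
    simp only [PowerSeries.coeff_mk, PowerSeries.coeff_one, map_zero, Nat.succ_ne_zero,
      if_false, nu_succ]
    ring

/-- The generating function `μ̃(t)` of the moments of the orthogonal polynomials
`Q̃_n` satisfies the quadratic equation `bt·μ̃(t)² − (1−ct)·μ̃(t) + 1 = 0`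
in `ℝ⟦t⟧` (algebraic form of the `T`-fraction expansion). -/
theorem tfraction_gf_quadratic
    (b c : ℝ) (hb : b ≠ 0) (hc : c ≠ 0)
    (Qt : ℕ → Polynomial ℝ)
    (hQt0 : Qt 0 = 1)
    (hQt1 : Qt 1 = Polynomial.X - Polynomial.C (b + c))
    (hQt : ∀ n, 2 ≤ n →
      Qt n = (Polynomial.X - Polynomial.C (2 * b + c)) * Qt (n - 1)
             - Polynomial.C (b * (b + c)) * Qt (n - 2))
    (μt : ℕ → ℝ)
    (hμt : ∀ n, (∑ k ∈ Finset.range (n + 1), (Qt n).coeff k * μt k) =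
      if n = 0 then 1 else 0) :
    PowerSeries.C b * PowerSeries.X * (PowerSeries.mk μt) ^ 2
      - (1 - PowerSeries.C c * PowerSeries.X) * PowerSeries.mk μt + 1 = 0 := by
  have hM := nu_quadratic b c
  set ν : ℕ → ℝ := nu b c with hνdef
  set M : PowerSeries ℝ := PowerSeries.mk ν with hMdef
  -- degree bound for Qt
  have hdeg : ∀ n, ∀ k, n < k → (Qt n).coeff k = 0 := by
    intro n
    induction n using Nat.strong_induction_on with
    | _ n ih =>
      match n with
      | 0 =>
        intro k hk
        rw [hQt0, Polynomial.coeff_one, if_neg (by omega)]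
      | 1 =>
        intro k hk
        rw [hQt1, Polynomial.coeff_sub, Polynomial.coeff_X, Polynomial.coeff_C,
          if_neg (by omega), if_neg (by omega)]
        ring
      | (n+2) =>
        intro k hk
        rw [hQt (n+2) (by omega)]
        have e1 : n + 2 - 1 = n + 1 := rfl
        have e2 : n + 2 - 2 = n := rfl
        rw [e1, e2]
        obtain ⟨j, rfl⟩ : ∃ j, k = j + 1 := ⟨k - 1, by omega⟩
        rw [Polynomial.coeff_sub, sub_mul, Polynomial.coeff_sub, Polynomial.coeff_X_mul,
          Polynomial.coeff_C_mul, Polynomial.coeff_C_mul,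
          ih (n+1) (by omega) j (by omega), ih (n+1) (by omega) (j+1) (by omega),
          ih n (by omega) (j+1) (by omega)]
        ring
  -- Qt is monic
  have hmon : ∀ n, (Qt n).coeff n = 1 := by
    intro n
    induction n using Nat.strong_induction_on with
    | _ n ih =>
      match n with
      | 0 => rw [hQt0, Polynomial.coeff_one, if_pos rfl]
      | 1 =>
        rw [hQt1, Polynomial.coeff_sub, Polynomial.coeff_X, Polynomial.coeff_C]
        norm_num
      | (n+2) =>
        rw [hQt (n+2) (by omega)]
        have e1 : n + 2 - 1 = n + 1 := rfl
        have e2 : n + 2 - 2 = n := rfl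
        rw [e1, e2, Polynomial.coeff_sub, sub_mul, Polynomial.coeff_sub,
          Polynomial.coeff_X_mul, Polynomial.coeff_C_mul, Polynomial.coeff_C_mul,
          ih (n+1) (by omega), hdeg (n+1) (n+2) (by omega), hdeg n (n+2) (by omega)]
        ring
  -- auxiliary C-lemmas
  have hC1 : (PowerSeries.C) (2*b+c) = 2 * PowerSeries.C b + PowerSeries.C c := by
    rw [map_add, map_mul, map_ofNat]
  have hC2 : (PowerSeries.C) (b*(b+c)) = PowerSeries.C b * (PowerSeries.C b + PowerSeries.C c) := by
    rw [map_mul, map_add]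
  -- power series identities for Ψ n = M * (C b * (M-1))^n
  have P2 : PowerSeries.X * (M * (PowerSeries.C b * (M - 1)) ^ 1)
      = M - PowerSeries.C (b+c) * (PowerSeries.X * M) - 1 := by
    rw [map_add]
    linear_combination hM
  have P3 : ∀ n : ℕ, PowerSeries.X * (M * (PowerSeries.C b * (M - 1)) ^ (n+2))
      = M * (PowerSeries.C b * (M - 1)) ^ (n+1)
        - PowerSeries.C (2*b+c) * (PowerSeries.X * (M * (PowerSeries.C b * (M - 1)) ^ (n+1)))
        - PowerSeries.C (b*(b+c)) * (PowerSeries.X * (M * (PowerSeries.C b * (M - 1)) ^ n)) := by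
    intro n
    have hκ : PowerSeries.X * (PowerSeries.C b * (M - 1)) ^ 2 =
        (1 - (2 * PowerSeries.C b + PowerSeries.C c) * PowerSeries.X) * (PowerSeries.C b * (M - 1))
        - (PowerSeries.C b * (PowerSeries.C b + PowerSeries.C c)) * PowerSeries.X := by
      linear_combination (PowerSeries.C b) * hM
    rw [hC1, hC2]
    linear_combination (M * (PowerSeries.C b * (M - 1)) ^ n) * hκ
  -- the key lemma: moments of x^m Qt n against ν
  have key : ∀ n, ∀ m, (∑ k ∈ Finset.range (n+1), (Qt n).coeff k * ν (k + m))
      = PowerSeries.coeff m (M * (PowerSeries.C b * (M - 1)) ^ n) := by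
    intro n
    induction n using Nat.strong_induction_on with
    | _ n ih =>
      match n with
      | 0 =>
        intro m
        rw [pow_zero, mul_one, Finset.sum_range_one, hQt0, Polynomial.coeff_one, if_pos rfl]
        simp [hMdef]
      | 1 =>
        intro m
        have h := congrArg (PowerSeries.coeff (m+1)) P2
        rw [PowerSeries.coeff_succ_X_mul, map_sub, map_sub, PowerSeries.coeff_C_mul,
          PowerSeries.coeff_succ_X_mul] at h
        rw [h]
        rw [Finset.sum_range_succ, Finset.sum_range_one, hQt1, Polynomial.coeff_sub,
          Polynomial.coeff_sub, Polynomial.coeff_X, Polynomial.coeff_C,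
          Polynomial.coeff_X, Polynomial.coeff_C]
        simp [hMdef, PowerSeries.coeff_one, Nat.succ_ne_zero]
        ring
      | (n+2) =>
        intro m
        have ih1 := ih (n+1) (by omega) (m+1)
        have ih2 := ih (n+1) (by omega) m
        have ih3 := ih n (by omega) m
        rw [show n+1+1 = n+2 by omega] at ih1 ih2
        have h := congrArg (PowerSeries.coeff (m+1)) (P3 n)
        rw [PowerSeries.coeff_succ_X_mul, map_sub, map_sub, PowerSeries.coeff_C_mul,
          PowerSeries.coeff_C_mul, PowerSeries.coeff_succ_X_mul,
          PowerSeries.coeff_succ_X_mul, ← ih1, ← ih2, ← ih3] at h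
        rw [hQt (n+2) (by omega)]
        have e1 : n + 2 - 1 = n + 1 := rfl
        have e2 : n + 2 - 2 = n := rfl
        rw [e1, e2, h]
        simp only [Polynomial.coeff_sub, sub_mul, Polynomial.coeff_C_mul,
          Finset.sum_sub_distrib]
        have hT1 : (∑ k ∈ Finset.range (n+2+1), (Polynomial.X * Qt (n+1)).coeff k * ν (k + m))
            = ∑ k ∈ Finset.range (n+2), (Qt (n+1)).coeff k * ν (k + (m+1)) := by
          rw [Finset.sum_range_succ']
          rw [Polynomial.mul_coeff_zero, Polynomial.coeff_X_zero, zero_mul, zero_mul, add_zero]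
          refine Finset.sum_congr rfl (fun k _ => ?_)
          rw [Polynomial.coeff_X_mul, show k+1+m = k+(m+1) by omega]
        have hT2 : (∑ k ∈ Finset.range (n+2+1), (2*b+c) * (Qt (n+1)).coeff k * ν (k + m))
            = (2*b+c) * ∑ k ∈ Finset.range (n+2), (Qt (n+1)).coeff k * ν (k + m) := by
          rw [Finset.sum_range_succ, hdeg (n+1) (n+2) (by omega), Finset.mul_sum]
          simp [mul_assoc]
        have hT3 : (∑ k ∈ Finset.range (n+2+1), (b*(b+c)) * (Qt n).coeff k * ν (k + m))
            = (b*(b+c)) * ∑ k ∈ Finset.range (n+1), (Qt n).coeff k * ν (k + m) := by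
          rw [Finset.sum_range_succ, Finset.sum_range_succ, hdeg n (n+2) (by omega),
            hdeg n (n+1) (by omega), Finset.mul_sum]
          simp [mul_assoc]
        linear_combination hT1 - hT2 - hT3
  -- orthogonality for ν
  have horth : ∀ n, (∑ k ∈ Finset.range (n + 1), (Qt n).coeff k * ν k) =
      if n = 0 then 1 else 0 := by
    intro n
    have h := key n 0
    simp only [Nat.add_zero] at h
    rw [h]
    have h0 : PowerSeries.coeff 0 (M * (PowerSeries.C b * (M - 1)) ^ n)
        = ν 0 * (b * (ν 0 - 1)) ^ n := by
      rw [PowerSeries.coeff_zero_eq_constantCoeff_apply, map_mul, map_pow, map_mul, map_sub,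
        map_one]
      simp [hMdef]
    have hnu0 : ν 0 = 1 := by rw [hνdef]; simp [nu]
    rw [h0, hnu0]
    simp only [sub_self, mul_zero, one_mul, zero_pow_eq]
  -- μt = ν by uniqueness
  have hμν : ∀ n, μt n = ν n := by
    intro n
    induction n using Nat.strong_induction_on with
    | _ n ih =>
      have h1 := hμt n
      have h2 := horth n
      rw [Finset.sum_range_succ] at h1 h2
      have hlow : (∑ k ∈ Finset.range n, (Qt n).coeff k * μt k)
          = ∑ k ∈ Finset.range n, (Qt n).coeff k * ν k := by
        refine Finset.sum_congr rfl (fun k hk => ?_)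
        rw [ih k (Finset.mem_range.mp hk)]
      rw [hmon n] at h1 h2
      rw [hlow] at h1
      have := h1.trans h2.symm
      linarith
  have hmk : PowerSeries.mk μt = M := by
    ext n
    rw [PowerSeries.coeff_mk, hMdef, PowerSeries.coeff_mk, hμν n]
  rw [hmk]
  exact hM
end

section
/- For all natural numbers n and k, the coefficient of x^k in Q̃_n(x) equals the coefficient of t^n in the formal power series ((1+bt)/(1+(2b+c)t+b(b+c)t^2)) · (t/(1+(2b+c)t+b(b+c)t^2))^k over ℝ. (That is, the coefficient array of the orthogonal polynomials Q̃_n is the Riordan array ((1+bt)/(1+(2b+c)t+b(b+c)t^2), t/(1+(2b+c)t+b(b+c)t^2)).) -/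
open PowerSeries

/-!
Column `k` of the coefficient array of `Q̃_n` has generating function
`F_k = ∑ₙ [xᵏ] Q̃_n tⁿ`. Reading the three-term recurrence coefficientwise in `x` gives
`D F₀ = 1 + bt` and `D F_{k+1} = t F_k` for `D = 1 + (2b+c)t + b(b+c)t²`; since `D` is a unit,
`F_k = ((1+bt)/D)(t/D)ᵏ`, which is the Riordan array.
-/

section coeffSeries

variable {R : Type*} [CommRing R]

noncomputable def coeffSeries (Q : ℕ → Polynomial R) (k : ℕ) : R⟦X⟧ :=
  PowerSeries.mk fun n => (Q n).coeff k

@[simp]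
theorem coeff_coeffSeries (Q : ℕ → Polynomial R) (n k : ℕ) :
    coeff n (coeffSeries Q k) = (Q n).coeff k :=
  coeff_mk _ _

@[simp]
theorem constantCoeff_coeffSeries (Q : ℕ → Polynomial R) (k : ℕ) :
    constantCoeff (coeffSeries Q k) = (Q 0).coeff k := by
  rw [← coeff_zero_eq_constantCoeff_apply, coeff_coeffSeries]

theorem coeff_one_quadratic_mul (α γ : R) (f : R⟦X⟧) :
    coeff 1 ((1 + C α * X + C γ * X ^ 2) * f) = coeff 1 f + α * coeff 0 f := by
  simp [add_mul, mul_assoc, pow_two, coeff_succ_X_mul]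

theorem coeff_add_two_quadratic_mul (α γ : R) (f : R⟦X⟧) (n : ℕ) :
    coeff (n + 2) ((1 + C α * X + C γ * X ^ 2) * f) =
      coeff (n + 2) f + α * coeff (n + 1) f + γ * coeff n f := by
  simp [add_mul, mul_assoc, pow_two, coeff_succ_X_mul]

variable {Q : ℕ → Polynomial R} {α β γ : R}

theorem coeff_add_two_add_of_recurrence
    (hQ : ∀ n, Q (n + 2) = (Polynomial.X - Polynomial.C α) * Q (n + 1) - Polynomial.C γ * Q n)
    (n k : ℕ) :
    (Q (n + 2)).coeff k + α * (Q (n + 1)).coeff k + γ * (Q n).coeff k =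
      (Polynomial.X * Q (n + 1)).coeff k := by
  rw [hQ, sub_mul, Polynomial.coeff_sub, Polynomial.coeff_sub, Polynomial.coeff_C_mul,
    Polynomial.coeff_C_mul]
  ring

theorem quadratic_mul_coeffSeries_zero (hQ0 : Q 0 = 1)
    (hQ1 : Q 1 = Polynomial.X - Polynomial.C β)
    (hQ : ∀ n, Q (n + 2) = (Polynomial.X - Polynomial.C α) * Q (n + 1) - Polynomial.C γ * Q n) :
    (1 + C α * X + C γ * X ^ 2) * coeffSeries Q 0 = 1 + C (α - β) * X := by
  ext (_ | _ | n)
  · simp [hQ0]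
  · simp [coeff_one_quadratic_mul, hQ0, hQ1]
    ring
  · rw [coeff_add_two_quadratic_mul]
    simp [coeff_add_two_add_of_recurrence hQ]

theorem quadratic_mul_coeffSeries_succ (hQ0 : Q 0 = 1)
    (hQ1 : Q 1 = Polynomial.X - Polynomial.C β)
    (hQ : ∀ n, Q (n + 2) = (Polynomial.X - Polynomial.C α) * Q (n + 1) - Polynomial.C γ * Q n)
    (k : ℕ) :
    (1 + C α * X + C γ * X ^ 2) * coeffSeries Q (k + 1) = X * coeffSeries Q k := by
  ext (_ | _ | n)
  · simp [hQ0, Polynomial.coeff_one]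
  · simp [coeff_one_quadratic_mul, hQ0, hQ1, coeff_succ_X_mul, Polynomial.coeff_one,
      Polynomial.coeff_X]
  · rw [coeff_add_two_quadratic_mul]
    simp [coeff_add_two_add_of_recurrence hQ, coeff_succ_X_mul]

end coeffSeries

theorem coeffSeries_eq_riordan {K : Type*} [Field K] {Q : ℕ → Polynomial K} {α β γ : K}
    (hQ0 : Q 0 = 1) (hQ1 : Q 1 = Polynomial.X - Polynomial.C β)
    (hQ : ∀ n, Q (n + 2) = (Polynomial.X - Polynomial.C α) * Q (n + 1) - Polynomial.C γ * Q n)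
    (k : ℕ) :
    coeffSeries Q k = (1 + C (α - β) * X) * (1 + C α * X + C γ * X ^ 2)⁻¹ *
      (X * (1 + C α * X + C γ * X ^ 2)⁻¹) ^ k := by
  have hD : constantCoeff (1 + C α * X + C γ * X ^ 2 : K⟦X⟧) ≠ 0 := by simp
  induction k with
  | zero =>
    rw [pow_zero, mul_one, eq_mul_inv_iff_mul_eq hD, mul_comm,
      quadratic_mul_coeffSeries_zero hQ0 hQ1 hQ]
  | succ k ih =>
    rw [pow_succ _ k, ← mul_assoc, ← ih, ← mul_assoc, eq_mul_inv_iff_mul_eq hD, mul_comm,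
      quadratic_mul_coeffSeries_succ hQ0 hQ1 hQ, mul_comm]

theorem orth_tilde_coeff_array_riordan_general
    (b c : ℝ)
    (Qt : ℕ → Polynomial ℝ)
    (hQt0 : Qt 0 = 1)
    (hQt1 : Qt 1 = Polynomial.X - Polynomial.C (b + c))
    (hQt : ∀ n, 2 ≤ n →
      Qt n = (Polynomial.X - Polynomial.C (2 * b + c)) * Qt (n - 1)
             - Polynomial.C (b * (b + c)) * Qt (n - 2))
    (n k : ℕ) :
    (Qt n).coeff k =
      PowerSeries.coeff (R := ℝ) n
        ((1 + PowerSeries.C (R := ℝ) b * PowerSeries.X) *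
          (1 + PowerSeries.C (R := ℝ) (2 * b + c) * PowerSeries.X
             + PowerSeries.C (R := ℝ) (b * (b + c)) * PowerSeries.X ^ 2)⁻¹ *
          (PowerSeries.X *
            (1 + PowerSeries.C (R := ℝ) (2 * b + c) * PowerSeries.X
               + PowerSeries.C (R := ℝ) (b * (b + c)) * PowerSeries.X ^ 2)⁻¹) ^ k) := by
  have hrec (m : ℕ) := hQt (m + 2) (by omega)
  have hcol := coeffSeries_eq_riordan hQt0 hQt1 hrec k
  rw [show 2 * b + c - (b + c) = b by ring] at hcol
  rw [← hcol, coeff_coeffSeries]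

/-- The coefficient array of the orthogonal polynomials `Q̃_n` is the Riordan
array `((1+bt)/(1+(2b+c)t+b(b+c)t²), t/(1+(2b+c)t+b(b+c)t²))`. -/
theorem orth_tilde_coeff_array_riordan
    (b c : ℝ) (hb : b ≠ 0) (hc : c ≠ 0)
    (Qt : ℕ → Polynomial ℝ)
    (hQt0 : Qt 0 = 1)
    (hQt1 : Qt 1 = Polynomial.X - Polynomial.C (b + c))
    (hQt : ∀ n, 2 ≤ n →
      Qt n = (Polynomial.X - Polynomial.C (2 * b + c)) * Qt (n - 1)
             - Polynomial.C (b * (b + c)) * Qt (n - 2))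
    (n k : ℕ) :
    (Qt n).coeff k =
      PowerSeries.coeff (R := ℝ) n
        ((1 + PowerSeries.C (R := ℝ) b * PowerSeries.X) *
          (1 + PowerSeries.C (R := ℝ) (2 * b + c) * PowerSeries.X
             + PowerSeries.C (R := ℝ) (b * (b + c)) * PowerSeries.X ^ 2)⁻¹ *
          (PowerSeries.X *
            (1 + PowerSeries.C (R := ℝ) (2 * b + c) * PowerSeries.X
               + PowerSeries.C (R := ℝ) (b * (b + c)) * PowerSeries.X ^ 2)⁻¹) ^ k) :=
  orth_tilde_coeff_array_riordan_general b c Qt hQt0 hQt1 hQt n k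
end

section
/- The moment sequences (μ_n) and (μ̃_n) are related by μ_0 = 1 and μ_n = c·μ̃_{n−1} for every n ≥ 1; equivalently, the generating functions satisfy μ(t) = 1 + c·t·μ̃(t) in ℝ⟦t⟧. -/
/-- Relation between the LBP moments `μ_n` and the moments `μ̃_n` of the
orthogonal polynomials `Q̃_n`: `μ_0 = 1` and `μ_n = c·μ̃_{n-1}` for `n ≥ 1`;
equivalently `μ(t) = 1 + c·t·μ̃(t)`. -/
theorem lbp_moment_shift
    (b c : ℝ) (hb : b ≠ 0) (hc : c ≠ 0)
    (P : ℕ → Polynomial ℝ)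
    (hP0 : P 0 = 1)
    (hP1 : P 1 = Polynomial.X - Polynomial.C c)
    (hP : ∀ n, 2 ≤ n →
      P n = (Polynomial.X - Polynomial.C c) * P (n - 1)
            - Polynomial.C b * Polynomial.X * P (n - 2))
    (μ : ℕ → ℝ)
    (hμ : ∀ n, (∑ k ∈ Finset.range (n + 1), (P n).coeff k * μ k) =
      if n = 0 then 1 else 0)
    (Qt : ℕ → Polynomial ℝ)
    (hQt0 : Qt 0 = 1)
    (hQt1 : Qt 1 = Polynomial.X - Polynomial.C (b + c))
    (hQt : ∀ n, 2 ≤ n →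
      Qt n = (Polynomial.X - Polynomial.C (2 * b + c)) * Qt (n - 1)
             - Polynomial.C (b * (b + c)) * Qt (n - 2))
    (μt : ℕ → ℝ)
    (hμt : ∀ n, (∑ k ∈ Finset.range (n + 1), (Qt n).coeff k * μt k) =
      if n = 0 then 1 else 0) :
    (μ 0 = 1 ∧ ∀ n, 1 ≤ n → μ n = c * μt (n - 1)) ∧
    PowerSeries.mk μ =
      1 + PowerSeries.C c * PowerSeries.X * PowerSeries.mk μt := by
  classical
  -- the moment functional of μt
  set L : Polynomial ℝ → ℝ := fun f => f.sum fun j a => a * μt j with hLdef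
  have L_add : ∀ f g, L (f + g) = L f + L g := by
    intro f g
    exact Polynomial.sum_add_index f g _ (by simp) (by intros; ring)
  have L_Cmul : ∀ (a : ℝ) (f : Polynomial ℝ), L (Polynomial.C a * f) = a * L f := by
    intro a f
    simp only [hLdef]
    rw [Polynomial.sum_over_range' _ (by simp) (f.natDegree + 1)
        (Nat.lt_succ_of_le (Polynomial.natDegree_C_mul_le a f)),
      Polynomial.sum_over_range' _ (by simp) (f.natDegree + 1) (Nat.lt_succ_self _),
      Finset.mul_sum]
    exact Finset.sum_congr rfl fun i _ => by rw [Polynomial.coeff_C_mul]; ring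
  have L_sub : ∀ f g, L (f - g) = L f - L g := by
    intro f g
    rw [sub_eq_add_neg, show -g = Polynomial.C (-1:ℝ) * g by simp, L_add, L_Cmul]
    ring
  have L_C : ∀ a : ℝ, L (Polynomial.C a) = a * μt 0 := by
    intro a
    simp only [hLdef]
    exact Polynomial.sum_C_index (by simp)
  have hμt0 : μt 0 = 1 := by
    have := hμt 0
    simpa [hQt0] using this
  have L_one : L (1 : Polynomial ℝ) = 1 := by
    rw [show (1 : Polynomial ℝ) = Polynomial.C 1 by simp, L_C, hμt0]; ring
  -- degree bounds for Qt
  have Qtdeg : ∀ n, (Qt n).natDegree ≤ n := by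
    intro n
    induction n using Nat.strong_induction_on with
    | _ n ih =>
      match n with
      | 0 => simp [hQt0]
      | 1 =>
        rw [hQt1]
        exact le_of_eq (Polynomial.natDegree_X_sub_C _)
      | (n+2) =>
        have hrec := hQt (n+2) (by omega)
        simp only [show n+2-1 = n+1 from rfl, show n+2-2 = n from rfl] at hrec
        rw [hrec]
        refine le_trans (Polynomial.natDegree_sub_le _ _) ?_
        have h1 : ((Polynomial.X - Polynomial.C (2*b+c)) * Qt (n+1)).natDegree ≤ n+2 := by
          refine le_trans (Polynomial.natDegree_mul_le) ?_
          have hq := ih (n+1) (by omega)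
          have hx : (Polynomial.X - Polynomial.C (2*b+c)).natDegree ≤ 1 :=
            le_of_eq (Polynomial.natDegree_X_sub_C _)
          omega
        have h2 : (Polynomial.C (b*(b+c)) * Qt n).natDegree ≤ n+2 := by
          refine le_trans (Polynomial.natDegree_C_mul_le _ _) ?_
          exact le_trans (ih n (by omega)) (by omega)
        exact max_le h1 h2
  -- L applied to Qt
  have Ldelta : ∀ m, L (Qt m) = if m = 0 then 1 else 0 := by
    intro m
    simp only [hLdef]
    rw [Polynomial.sum_over_range' (Qt m) (by simp) (m+1) (Nat.lt_succ_of_le (Qtdeg m))]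
    exact hμt m
  -- polynomial identities for X * Qt m
  have XQt0 : Polynomial.X * Qt 0 = Qt 1 + Polynomial.C (b + c) * Qt 0 := by
    rw [hQt0, hQt1]; ring
  have XQt : ∀ j, Polynomial.X * Qt (j+1) =
      Qt (j+2) + Polynomial.C (2*b+c) * Qt (j+1) + Polynomial.C (b*(b+c)) * Qt j := by
    intro j
    have h := hQt (j+2) (by omega)
    simp only [show j+2-1 = j+1 from rfl, show j+2-2 = j from rfl] at h
    rw [h]; ring
  -- the key pairing computation
  have tau : ∀ n m, L (Qt m * P n) = ((n.choose m : ℝ)) * b^n * (b+c)^m := by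
    intro n
    induction n using Nat.strong_induction_on with
    | _ n ih =>
      match n with
      | 0 =>
        intro m
        rw [hP0, mul_one, Ldelta]
        match m with
        | 0 => simp
        | (m+1) => simp
      | 1 =>
        intro m
        rw [hP1]
        have hsplit : Qt m * (Polynomial.X - Polynomial.C c)
            = Polynomial.X * Qt m + Polynomial.C (-c) * Qt m := by
          rw [map_neg]; ring
        rw [hsplit, L_add, L_Cmul]
        match m with
        | 0 =>
          rw [XQt0, L_add, L_Cmul, Ldelta, Ldelta]
          norm_num
        | 1 =>
          have h := XQt 0
          simp only [show (0:ℕ)+1 = 1 from rfl, show (0:ℕ)+2 = 2 from rfl] at h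
          rw [h, L_add, L_add, L_Cmul, L_Cmul, Ldelta, Ldelta, Ldelta]
          norm_num
        | (m+2) =>
          have h := XQt (m+1)
          simp only [show m+1+1 = m+2 from rfl, show m+1+2 = m+3 from rfl] at h
          rw [h, L_add, L_add, L_Cmul, L_Cmul]
          simp [Ldelta, Nat.choose_eq_zero_of_lt]
      | (n+2) =>
        intro m
        have hrec := hP (n+2) (by omega)
        simp only [show n+2-1 = n+1 from rfl, show n+2-2 = n from rfl] at hrec
        have hsplit : Qt m * P (n+2) =
            (Polynomial.X * Qt m) * P (n+1) + Polynomial.C (-c) * (Qt m * P (n+1))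
              + Polynomial.C (-b) * ((Polynomial.X * Qt m) * P n) := by
          rw [hrec, map_neg, map_neg]; ring
        rw [hsplit, L_add, L_add, L_Cmul, L_Cmul]
        match m with
        | 0 =>
          have hx : ∀ k, (Polynomial.X * Qt 0) * P k
              = Qt 1 * P k + Polynomial.C (b+c) * (Qt 0 * P k) := by
            intro k; rw [XQt0]; ring
          rw [hx (n+1), hx n, L_add, L_add, L_Cmul, L_Cmul,
            ih (n+1) (by omega), ih (n+1) (by omega), ih n (by omega), ih n (by omega)]
          simp only [Nat.choose_one_right, Nat.choose_zero_right, Nat.choose_self]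
          push_cast
          ring
        | (j+1) =>
          have hx : ∀ k, (Polynomial.X * Qt (j+1)) * P k
              = Qt (j+2) * P k + Polynomial.C (2*b+c) * (Qt (j+1) * P k)
                + Polynomial.C (b*(b+c)) * (Qt j * P k) := by
            intro k; rw [XQt j]; ring
          rw [hx (n+1), hx n, L_add, L_add, L_add, L_add, L_Cmul, L_Cmul, L_Cmul, L_Cmul,
            ih (n+1) (by omega), ih (n+1) (by omega), ih (n+1) (by omega),
            ih n (by omega), ih n (by omega), ih n (by omega)]
          rw [show (n+2).choose (j+1) = (n+1).choose j + (n+1).choose (j+1) from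
              Nat.choose_succ_succ (n+1) j,
            show (n+1).choose (j+1) = n.choose j + n.choose (j+1) from
              Nat.choose_succ_succ n j,
            show (n+1).choose (j+2) = n.choose (j+1) + n.choose (j+2) from
              Nat.choose_succ_succ n (j+1)]
          push_cast
          ring
  -- L (P n) = b ^ n
  have sval : ∀ n, L (P n) = b ^ n := by
    intro n
    have := tau n 0
    simpa [hQt0] using this
  -- constant coefficients of P
  have coeff0 : ∀ n, (P n).coeff 0 = (-c)^n := by
    intro n
    induction n using Nat.strong_induction_on with
    | _ n ih =>
      match n with
      | 0 => simp [hP0]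
      | 1 => simp [hP1]
      | (n+2) =>
        have hrec := hP (n+2) (by omega)
        simp only [show n+2-1 = n+1 from rfl, show n+2-2 = n from rfl] at hrec
        rw [hrec]
        simp only [Polynomial.coeff_sub, Polynomial.mul_coeff_zero,
          Polynomial.coeff_X_zero, Polynomial.coeff_C_zero, Polynomial.coeff_C,
          ih (n+1) (by omega)]
        rw [pow_succ]
        norm_num
        ring
  -- divX recurrence
  have divX_rec : ∀ n, (P (n+2)).divX
      = P (n+1) - Polynomial.C c * (P (n+1)).divX - Polynomial.C b * P n := by
    intro n
    have hrec := hP (n+2) (by omega)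
    simp only [show n+2-1 = n+1 from rfl, show n+2-2 = n from rfl] at hrec
    apply Polynomial.ext
    intro j
    rw [Polynomial.coeff_divX, hrec]
    simp only [Polynomial.coeff_sub, sub_mul, Polynomial.coeff_X_mul,
      Polynomial.coeff_C_mul, mul_assoc, Polynomial.coeff_divX]
    try ring
  have divX_P1 : (P 1).divX = 1 := by
    rw [hP1]
    apply Polynomial.ext
    intro j
    rw [Polynomial.coeff_divX]
    match j with
    | 0 => simp
    | (j+1) => simp [Polynomial.coeff_X, Polynomial.coeff_one]
  -- L of divX (P (n+1))
  have gval : ∀ n, L ((P (n+1)).divX) = (-c)^n := by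
    intro n
    induction n with
    | zero => rw [divX_P1, L_one]; norm_num
    | succ n ihn =>
      rw [divX_rec n, L_sub, L_sub, L_Cmul, L_Cmul, sval, sval, ihn]
      ring
  -- coefficient facts for P : natDegree ≤ n and leading coeff = 1
  have Pcoeff : ∀ n, (P n).natDegree ≤ n ∧ (P n).coeff n = 1 := by
    intro n
    induction n using Nat.strong_induction_on with
    | _ n ih =>
      match n with
      | 0 => simp [hP0]
      | 1 => constructor <;> simp [hP1, Polynomial.natDegree_X_sub_C, Polynomial.coeff_one]
      | (n+2) =>
        have hrec := hP (n+2) (by omega)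
        simp only [show n+2-1 = n+1 from rfl, show n+2-2 = n from rfl] at hrec
        have ih1 := ih (n+1) (by omega)
        have ih0 := ih n (by omega)
        constructor
        · rw [hrec]
          refine le_trans (Polynomial.natDegree_sub_le _ _) ?_
          have h1 : ((Polynomial.X - Polynomial.C c) * P (n+1)).natDegree ≤ n+2 := by
            refine le_trans (Polynomial.natDegree_mul_le) ?_
            have hx : (Polynomial.X - Polynomial.C c).natDegree ≤ 1 :=
              le_of_eq (Polynomial.natDegree_X_sub_C _)
            have hp := ih1.1
            omega
          have h2 : (Polynomial.C b * Polynomial.X * P n).natDegree ≤ n+2 := by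
            rw [mul_assoc]
            refine le_trans (Polynomial.natDegree_C_mul_le _ _) ?_
            refine le_trans (Polynomial.natDegree_mul_le) ?_
            have hx : (Polynomial.X : Polynomial ℝ).natDegree ≤ 1 := Polynomial.natDegree_X_le
            have hp := ih0.1
            omega
          exact max_le h1 h2
        · rw [hrec]
          have e1 : (P (n+1)).coeff (n+2) = 0 :=
            Polynomial.coeff_eq_zero_of_natDegree_lt (by omega)
          have e0 : (P n).coeff (n+1) = 0 :=
            Polynomial.coeff_eq_zero_of_natDegree_lt (by omega)
          simp only [Polynomial.coeff_sub, sub_mul, mul_assoc,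
            Polynomial.coeff_C_mul]
          rw [show ((Polynomial.X : Polynomial ℝ) * P (n+1)).coeff (n+2)
              = (P (n+1)).coeff (n+1) from Polynomial.coeff_X_mul _ (n+1),
            show ((Polynomial.X : Polynomial ℝ) * P n).coeff (n+2)
              = (P n).coeff (n+1) from Polynomial.coeff_X_mul _ (n+1)]
          rw [ih1.2, e1, e0]
          ring
  -- the candidate moment sequence
  set ν : ℕ → ℝ := fun k => if k = 0 then 1 else c * μt (k-1) with hνdef
  have hν : ∀ n, (∑ k ∈ Finset.range (n + 1), (P n).coeff k * ν k) =
      if n = 0 then 1 else 0 := by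
    intro n
    match n with
    | 0 => simp [hP0, hνdef]
    | (m+1) =>
      rw [Finset.sum_range_succ']
      have hterm : ∀ i, (P (m+1)).coeff (i+1) * ν (i+1)
          = c * ((P (m+1)).divX.coeff i * μt i) := by
        intro i
        rw [Polynomial.coeff_divX]
        simp only [hνdef]
        simp only [if_neg (Nat.succ_ne_zero i)]
        simp only [Nat.add_sub_cancel]
        ring
      rw [Finset.sum_congr rfl (fun i _ => hterm i), ← Finset.mul_sum]
      have hdeg : ((P (m+1)).divX).natDegree < m+1 := by
        have : ((P (m+1)).divX).natDegree ≤ m := by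
          rw [Polynomial.natDegree_le_iff_coeff_eq_zero]
          intro N hN
          rw [Polynomial.coeff_divX]
          exact Polynomial.coeff_eq_zero_of_natDegree_lt
            (lt_of_le_of_lt (Pcoeff (m+1)).1 (by omega))
        omega
      have hsum : (∑ i ∈ Finset.range (m+1), (P (m+1)).divX.coeff i * μt i)
          = L ((P (m+1)).divX) := by
        simp only [hLdef]
        rw [Polynomial.sum_over_range' _ (by simp) (m+1) hdeg]
      rw [hsum, gval m, coeff0 (m+1)]
      simp only [hνdef]
      norm_num
      rw [pow_succ]
      ring
  -- uniqueness: μ = ν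
  have hμν : ∀ n, μ n = ν n := by
    intro n
    induction n using Nat.strong_induction_on with
    | _ n ih =>
      have h1 := hμ n
      have h2 := hν n
      have h3 : (∑ k ∈ Finset.range (n + 1), (P n).coeff k * μ k)
          = ∑ k ∈ Finset.range (n + 1), (P n).coeff k * ν k := by rw [h1, h2]
      rw [Finset.sum_range_succ, Finset.sum_range_succ] at h3
      have h4 : (∑ k ∈ Finset.range n, (P n).coeff k * μ k)
          = ∑ k ∈ Finset.range n, (P n).coeff k * ν k := by
        refine Finset.sum_congr rfl ?_
        intro k hk
        rw [ih k (Finset.mem_range.mp hk)]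
      rw [h4] at h3
      have h5 : (P n).coeff n * μ n = (P n).coeff n * ν n := by linarith
      rw [(Pcoeff n).2] at h5
      simpa using h5
  have part1 : μ 0 = 1 ∧ ∀ n, 1 ≤ n → μ n = c * μt (n - 1) := by
    constructor
    · rw [hμν 0]; simp [hνdef]
    · intro n hn
      rw [hμν n]
      simp only [hνdef]
      rw [if_neg (by omega)]
  refine ⟨part1, ?_⟩
  ext n
  rcases n with _ | k
  · simp [part1.1]
  · rw [PowerSeries.coeff_mk, part1.2 (k+1) (by omega)]
    rw [map_add, mul_assoc, PowerSeries.coeff_C_mul, PowerSeries.coeff_succ_X_mul]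
    simp
end

section
/- For every natural number n ≥ 1, the n-th moment satisfies μ_n = c · ∑_{k=0}^{n−1} binom(n+k−1, 2k) · c^{n−1−k} · b^k · C_k, and μ_0 = 1. -/
/-!
The moments are determined by the unitriangular system `L(Pₙ) = δₙ₀`, where `L` is the linear
functional with `L(xᵏ) = μₖ`, so it suffices to check that the claimed sequence solves it. For that
one proves the stronger identity `L(x^(r+1) Pₙ) = bⁿ c ∑_{k+i=r} C(n+2k+i, i) aₙₖ bᵏ cⁱ`, where
`aₙₖ = [xᵏ] C(x)ⁿ⁺¹` are ballot numbers (`a₀ₖ` is the Catalan number): along the three-term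
recurrence it reduces to Pascal's rule in `i` and to `Cⁿ⁺² = Cⁿ⁺¹ + x Cⁿ⁺³`, which is the Catalan
equation `C = 1 + x C²`. At `n = 0` the identity is the claimed formula for `μᵣ₊₁`, and
`L(Pₙ) = 0` for `n ≥ 1` follows from it through the recurrence.
-/

open Finset Polynomial

section Ballot

/-- In closed form, `ballot n k = (n+1)/(n+k+1) * (n+2k choose k)`. -/
noncomputable def ballot (n k : ℕ) : ℕ :=
  PowerSeries.coeff k (PowerSeries.catalanSeries ^ (n + 1))

theorem ballot_zero_right (n : ℕ) : ballot n 0 = 1 := by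
  simp [ballot]

theorem ballot_zero_left (k : ℕ) : ballot 0 k = catalan k := by
  simp [ballot]

theorem catalanSeries_pow_succ_succ (n : ℕ) :
    PowerSeries.catalanSeries ^ (n + 2) =
      PowerSeries.catalanSeries ^ (n + 1) +
        PowerSeries.X * PowerSeries.catalanSeries ^ (n + 3) := by
  rw [pow_succ]
  nth_rw 2 [← PowerSeries.catalanSeries_sq_mul_X_add_one]
  ring

theorem ballot_succ_succ (n k : ℕ) :
    ballot (n + 1) (k + 1) = ballot n (k + 1) + ballot (n + 2) k := by
  rw [ballot, ballot, ballot, show n + 2 + 1 = n + 3 from rfl, catalanSeries_pow_succ_succ, map_add,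
    PowerSeries.coeff_succ_X_mul]

theorem ballot_one (k : ℕ) : ballot 1 k = ballot 0 (k + 1) := by
  conv_rhs => rw [ballot, zero_add, pow_one, ← PowerSeries.catalanSeries_sq_mul_X_add_one]
  rw [ballot, map_add, mul_comm, PowerSeries.coeff_succ_X_mul]
  simp

end Ballot

section SchroderSum

variable {R : Type*} [CommRing R] (b c : R)

/-- For `w = catalan`, `N = 0` and `b = c = 1` these are the large Schröder numbers. -/
def schroderSum (w : ℕ → R) (N r : ℕ) : R :=
  ∑ p ∈ antidiagonal r, ((N + 2 * p.1 + p.2).choose p.2 : R) * w p.1 * b ^ p.1 * c ^ p.2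

theorem schroderSum_zero (w : ℕ → R) (N : ℕ) : schroderSum b c w N 0 = w 0 := by
  simp [schroderSum]

theorem schroderSum_add (w v : ℕ → R) (N r : ℕ) :
    schroderSum b c (fun k => w k + v k) N r = schroderSum b c w N r + schroderSum b c v N r := by
  simp only [schroderSum, ← sum_add_distrib]
  exact sum_congr rfl fun _ _ => by ring

theorem schroderSum_succ (w : ℕ → R) (N s : ℕ) :
    schroderSum b c w N (s + 1) =
      ((N + (s + 1)).choose (s + 1) : R) * w 0 * c ^ (s + 1) +
        b * schroderSum b c (fun k => w (k + 1)) (N + 2) s := by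
  rw [schroderSum, Nat.sum_antidiagonal_succ, schroderSum, mul_sum]
  congr 1
  · simp
  · refine sum_congr rfl fun p _ => ?_
    rw [show N + 2 * (p.1 + 1) + p.2 = N + 2 + 2 * p.1 + p.2 by ring]
    ring

theorem schroderSum_succ_succ (w : ℕ → R) (N s : ℕ) :
    schroderSum b c w (N + 1) (s + 1) =
      c * schroderSum b c w (N + 1) s + schroderSum b c w N (s + 1) := by
  rw [schroderSum, schroderSum, schroderSum, Nat.sum_antidiagonal_succ', Nat.sum_antidiagonal_succ',
    mul_sum, add_left_comm, ← sum_add_distrib]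
  refine congrArg₂ (· + ·) (by simp) (sum_congr rfl fun p _ => ?_)
  rw [show N + 1 + 2 * p.1 + (p.2 + 1) = N + 1 + 2 * p.1 + p.2 + 1 by ring, Nat.choose_succ_succ',
    show N + 1 + 2 * p.1 + p.2 = N + 2 * p.1 + (p.2 + 1) by ring]
  push_cast
  ring

/-- The case `N = -1` of `schroderSum_succ_succ`. -/
theorem schroderSum_zero_succ (w : ℕ → R) (s : ℕ) :
    schroderSum b c w 0 (s + 1) =
      c * schroderSum b c w 0 s + b * schroderSum b c (fun k => w (k + 1)) 1 s := by
  rcases s with _ | s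
  · rw [schroderSum_succ, schroderSum_zero, schroderSum_zero, schroderSum_zero]
    simp only [zero_add, Nat.choose_self, Nat.cast_one]
    ring
  · rw [schroderSum_succ b c w 0 (s + 1), schroderSum_succ b c w 0 s,
      schroderSum_succ_succ b c _ 1 s]
    simp only [zero_add, Nat.choose_self, Nat.cast_one]
    ring

theorem schroderSum_eq_sum_range (w : ℕ → R) (N r : ℕ) :
    schroderSum b c w N r =
      ∑ k ∈ range (r + 1), ((N + r + k).choose (N + 2 * k) : R) * w k * b ^ k * c ^ (r - k) := by
  rw [schroderSum, Nat.sum_antidiagonal_eq_sum_range_succ_mk]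
  refine sum_congr rfl fun k hk => ?_
  have hk : k ≤ r := Nat.lt_succ_iff.mp (mem_range.mp hk)
  rw [Nat.choose_symm_of_eq_add (show N + 2 * k + (r - k) = (r - k) + (N + 2 * k) by omega),
    show N + 2 * k + (r - k) = N + r + k by omega]

theorem schroderSum_ballot_succ_succ (n s : ℕ) :
    schroderSum b c (ballot (n + 1) ·) (n + 1) (s + 1) =
      c * schroderSum b c (ballot (n + 1) ·) (n + 1) s + schroderSum b c (ballot n ·) n (s + 1) +
        b * schroderSum b c (ballot (n + 2) ·) (n + 2) s := by
  rw [schroderSum_succ_succ, schroderSum_succ b c (fun k => (ballot (n + 1) k : R)),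
    schroderSum_succ b c (fun k => (ballot n k : R))]
  simp only [ballot_zero_right, ballot_succ_succ, Nat.cast_add, schroderSum_add]
  ring

end SchroderSum

section Functional

variable {R : Type*} [CommRing R]

def momentFunctional (ν : ℕ → R) : R[X] →ₗ[R] R :=
  lsum fun k => ν k • LinearMap.id

theorem momentFunctional_X_pow (ν : ℕ → R) (r : ℕ) : momentFunctional ν (X ^ r) = ν r := by
  rw [momentFunctional, lsum_apply, ← monomial_one_right_eq_X_pow, sum_monomial_index] <;> simp

theorem momentFunctional_eq_sum_range (ν : ℕ → R) {p : R[X]} {n : ℕ} (hp : p.natDegree ≤ n) :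
    momentFunctional ν p = ∑ k ∈ range (n + 1), p.coeff k * ν k := by
  rw [momentFunctional, lsum_apply, sum_over_range' _ (by simp) _ (Nat.lt_succ_of_le hp)]
  simp [mul_comm]

theorem eq_of_unitriangular {a : ℕ → ℕ → R} (ha : ∀ n, a n n = 1) {μ ν : ℕ → R}
    (h : ∀ n, ∑ k ∈ range (n + 1), a n k * μ k = ∑ k ∈ range (n + 1), a n k * ν k) : μ = ν := by
  funext n
  induction n using Nat.strong_induction_on with
  | _ n ih =>
    have hn := h n
    rw [sum_range_succ, sum_range_succ, ha, one_mul, one_mul,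
      sum_congr rfl fun k hk => by rw [ih k (mem_range.mp hk)]] at hn
    exact add_left_cancel hn

end Functional

section Recurrence

variable {R : Type*} [CommRing R] {b c : R} {P : ℕ → R[X]}

theorem natDegree_le_and_coeff_self (hP0 : P 0 = 1) (hP1 : P 1 = X - C c)
    (hP : ∀ n, P (n + 2) = (X - C c) * P (n + 1) - C b * X * P n) (n : ℕ) :
    (P n).natDegree ≤ n ∧ (P n).coeff n = 1 := by
  induction n using Nat.twoStepInduction with
  | zero => simp [hP0]
  | one => exact ⟨hP1 ▸ natDegree_X_sub_C_le c, by simp [hP1]⟩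
  | more n ih₀ ih₁ =>
    have hXC : (C b * X : R[X]).natDegree ≤ 1 := by compute_degree
    have hlow : (C b * X * P n).natDegree < n + 2 := by
      have := natDegree_mul_le_of_le hXC ih₀.1; omega
    rw [hP]
    constructor
    · have := natDegree_mul_le_of_le (natDegree_X_sub_C_le c) ih₁.1
      exact natDegree_sub_le_of_le (by omega) hlow.le |>.trans (by omega)
    · rw [coeff_sub, coeff_eq_zero_of_natDegree_lt hlow, sub_zero, sub_mul, coeff_sub,
          coeff_X_mul, coeff_C_mul,
        coeff_eq_zero_of_natDegree_lt (by omega : (P (n + 1)).natDegree < n + 2), ih₁.2]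
      ring

theorem map_X_pow_mul_succ_succ (L : R[X] →ₗ[R] R)
    (hP : ∀ n, P (n + 2) = (X - C c) * P (n + 1) - C b * X * P n) (n r : ℕ) :
    L (X ^ r * P (n + 2)) =
      L (X ^ (r + 1) * P (n + 1)) - c * L (X ^ r * P (n + 1)) - b * L (X ^ (r + 1) * P n) := by
  have : X ^ r * P (n + 2) =
      X ^ (r + 1) * P (n + 1) - C c * (X ^ r * P (n + 1)) - C b * (X ^ (r + 1) * P n) := by
    rw [hP]; ring
  rw [this, map_sub, map_sub, C_mul', C_mul', map_smul, map_smul, smul_eq_mul, smul_eq_mul]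

end Recurrence

section Moments

variable {R : Type*} [CommRing R] {b c : R} {P : ℕ → R[X]}

variable (b c) in
def lbpMoment : ℕ → R
  | 0 => 1
  | r + 1 => c * schroderSum b c (fun k => (catalan k : R)) 0 r

theorem momentFunctional_lbpMoment_X_pow_succ_mul (hP0 : P 0 = 1) (hP1 : P 1 = X - C c)
    (hP : ∀ n, P (n + 2) = (X - C c) * P (n + 1) - C b * X * P n) (n r : ℕ) :
    momentFunctional (lbpMoment b c) (X ^ (r + 1) * P n) =
      b ^ n * c * schroderSum b c (fun k => (ballot n k : R)) n r := by
  induction n using Nat.twoStepInduction generalizing r with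
  | zero => simp [hP0, momentFunctional_X_pow, lbpMoment, ballot_zero_left]
  | one =>
    have : X ^ (r + 1) * P 1 = X ^ (r + 2) - C c * X ^ (r + 1) := by rw [hP1]; ring
    rw [this, map_sub, C_mul', map_smul, momentFunctional_X_pow, momentFunctional_X_pow,
      smul_eq_mul, lbpMoment, lbpMoment, schroderSum_zero_succ]
    simp only [ballot_one, ballot_zero_left]
    ring
  | more n ih₀ ih₁ =>
    rw [map_X_pow_mul_succ_succ _ hP, ih₁, ih₁, ih₀, schroderSum_ballot_succ_succ]
    ring

theorem momentFunctional_lbpMoment_apply (hP0 : P 0 = 1) (hP1 : P 1 = X - C c)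
    (hP : ∀ n, P (n + 2) = (X - C c) * P (n + 1) - C b * X * P n) (n : ℕ) :
    momentFunctional (lbpMoment b c) (P n) = if n = 0 then 1 else 0 := by
  rcases n with _ | n
  · simpa [hP0, lbpMoment] using momentFunctional_X_pow (lbpMoment b c) 0
  rw [if_neg n.succ_ne_zero]
  induction n with
  | zero =>
    have : P 1 = X ^ 1 - C c * X ^ 0 := by rw [hP1]; ring
    rw [this, map_sub, C_mul', map_smul, momentFunctional_X_pow, momentFunctional_X_pow]
    simp [lbpMoment, schroderSum_zero]
  | succ n ih =>
    have := map_X_pow_mul_succ_succ (momentFunctional (lbpMoment b c)) hP n 0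
    rw [pow_zero, one_mul, one_mul, ih, momentFunctional_lbpMoment_X_pow_succ_mul hP0 hP1 hP,
      momentFunctional_lbpMoment_X_pow_succ_mul hP0 hP1 hP] at this
    rw [this, schroderSum_zero, schroderSum_zero, ballot_zero_right, ballot_zero_right]
    ring

end Moments

theorem lbp_moment_closed_form'_general
    (b c : ℝ)
    (P : ℕ → Polynomial ℝ)
    (hP0 : P 0 = 1)
    (hP1 : P 1 = Polynomial.X - Polynomial.C c)
    (hP : ∀ n, 2 ≤ n →
      P n = (Polynomial.X - Polynomial.C c) * P (n - 1)
            - Polynomial.C b * Polynomial.X * P (n - 2))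
    (μ : ℕ → ℝ)
    (hμ : ∀ n, (∑ k ∈ Finset.range (n + 1), (P n).coeff k * μ k) =
      if n = 0 then 1 else 0) :
    μ 0 = 1 ∧
    ∀ n, 1 ≤ n →
      μ n = c * ∑ k ∈ Finset.range n,
        ((n + k - 1).choose (2 * k) : ℝ) * c ^ (n - 1 - k) * b ^ k *
          (catalan k : ℝ) := by
  have hP' : ∀ n, P (n + 2) = (X - C c) * P (n + 1) - C b * X * P n :=
    fun n => hP (n + 2) le_add_self
  have hdeg := natDegree_le_and_coeff_self hP0 hP1 hP'
  obtain rfl : μ = lbpMoment b c := eq_of_unitriangular (fun n => (hdeg n).2) fun n => by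
    rw [hμ, ← momentFunctional_eq_sum_range _ (hdeg n).1,
      momentFunctional_lbpMoment_apply hP0 hP1 hP']
  refine ⟨rfl, fun n hn => ?_⟩
  obtain ⟨m, rfl⟩ := Nat.exists_eq_add_of_le' hn
  rw [lbpMoment, schroderSum_eq_sum_range]
  refine congrArg (c * ·) (sum_congr rfl fun k _ => ?_)
  simp only [zero_add, Nat.add_sub_cancel, show m + 1 + k - 1 = m + k by omega]
  ring

/-- Closed form for the LBP moments: `μ_0 = 1` and, for `n ≥ 1`,
`μ_n = c ∑_{k=0}^{n-1} C(n+k-1, 2k) c^{n-1-k} b^k Catalan(k)`. -/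
theorem lbp_moment_closed_form'
    (b c : ℝ) (hb : b ≠ 0) (hc : c ≠ 0)
    (P : ℕ → Polynomial ℝ)
    (hP0 : P 0 = 1)
    (hP1 : P 1 = Polynomial.X - Polynomial.C c)
    (hP : ∀ n, 2 ≤ n →
      P n = (Polynomial.X - Polynomial.C c) * P (n - 1)
            - Polynomial.C b * Polynomial.X * P (n - 2))
    (μ : ℕ → ℝ)
    (hμ : ∀ n, (∑ k ∈ Finset.range (n + 1), (P n).coeff k * μ k) =
      if n = 0 then 1 else 0) :
    μ 0 = 1 ∧
    ∀ n, 1 ≤ n →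
      μ n = c * ∑ k ∈ Finset.range n,
        ((n + k - 1).choose (2 * k) : ℝ) * c ^ (n - 1 - k) * b ^ k *
          (catalan k : ℝ) :=
  lbp_moment_closed_form'_general b c P hP0 hP1 hP μ hμ
end
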